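/- arXiv:2111.10796 — 5 statements merged into one kernel-verified Lean document; each statement's English description precedes it below -/
import Mathlib

section
/- Let k ≥ 1, let l_1,...,l_k be nonnegative integers, let M = max(l_1,...,l_k), let b, c be positive integers, and let P > 1 be an integer. Define A(x) = (b+c-2k)·x^M + Σ_{i=1}^{k} (x^{M+l_i} + x^{M-l_i}) ∈ ℤ[x], and define S̃_P(x) = Π Φ_n(x), where the product is over all n dividing P such that n is a prime power and the cyclotomic polynomial Φ_n(x) divides A(x). If the circulant graph C_P(l_1,...,l_k) on ℤ/Pℤ has a perfect 2-colouring with parameters (b,c), then (b+c)/gcd(b,c) divides S̃_P(1). -/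
open Polynomial

open scoped Classical

/-- The product of the cyclotomic polynomials `Φ_n` over all `n ∣ P` such that `n` is a
prime power and `Φ_n` divides `A` (the polynomial `S̃_P` / `d̃_u` of the paper). -/
noncomputable def cycloProdPP (P : ℕ) (A : Polynomial ℤ) : Polynomial ℤ :=
  ∏ n ∈ (Nat.divisors P).filter
      (fun n => IsPrimePow n ∧ Polynomial.cyclotomic n ℤ ∣ A),
    Polynomial.cyclotomic n ℤ

/-- The polynomial `A(x) = (b+c-2k)·x^M + Σ_i (x^{M+l_i} + x^{M-l_i})`, where
`M = max(l_1,...,l_k)`. -/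
noncomputable def polyA (k : ℕ) (l : Fin k → ℕ) (b c : ℕ) : Polynomial ℤ :=
  Polynomial.C ((b : ℤ) + (c : ℤ) - 2 * (k : ℤ)) * Polynomial.X ^ (Finset.univ.sup l)
    + ∑ i : Fin k,
      (Polynomial.X ^ (Finset.univ.sup l + l i) + Polynomial.X ^ (Finset.univ.sup l - l i))

/-- A perfect 2-colouring (black = `true`, white = `false`) with parameters `(b, c)` of the
circulant graph `C_P(l_1,...,l_k)` on `ℤ/Pℤ`: every black vertex has exactly `b` white
neighbours and every white vertex has exactly `c` black neighbours, counted with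
multiplicity. -/
def IsPerfectColouring (P k : ℕ) (l : Fin k → ℕ) (b c : ℕ) (f : ZMod P → Bool) : Prop :=
  (∀ v : ZMod P, f v = true →
    (∑ i : Fin k, ((if f (v + (l i : ZMod P)) = false then 1 else 0)
      + (if f (v - (l i : ZMod P)) = false then 1 else 0)) = b)) ∧
  (∀ v : ZMod P, f v = false →
    (∑ i : Fin k, ((if f (v + (l i : ZMod P)) = true then 1 else 0)
      + (if f (v - (l i : ZMod P)) = true then 1 else 0)) = c))

/-- A perfect 2-colouring (black = `true`, white = `false`) with parameters `(b, c)` of the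
infinite circulant graph `C_∞(l_1,...,l_k)` on `ℤ`. -/
def IsPerfectColouringInt (k : ℕ) (l : Fin k → ℕ) (b c : ℕ) (f : ℤ → Bool) : Prop :=
  (∀ n : ℤ, f n = true →
    (∑ i : Fin k, ((if f (n + (l i : ℤ)) = false then 1 else 0)
      + (if f (n - (l i : ℤ)) = false then 1 else 0)) = b)) ∧
  (∀ n : ℤ, f n = false →
    (∑ i : Fin k, ((if f (n + (l i : ℤ)) = true then 1 else 0)
      + (if f (n - (l i : ℤ)) = true then 1 else 0)) = c))

/-- `v` is an `m`-multitiling of `ℤ/Pℤ` with tile `u`: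
`Σ_{h ∈ ℤ/Pℤ} u(g-h)·v(h) = m` for every `g` (the residues `0,…,P-1` enumerate `ℤ/Pℤ`,
so we sum over `Finset.range P`). -/
def IsMultitiling (P : ℕ) (u v : ZMod P → ℤ) (m : ℤ) : Prop :=
  ∀ g : ZMod P, ∑ a ∈ Finset.range P, u (g - (a : ZMod P)) * v ((a : ZMod P)) = m

/-- The tile `u_{l_1,...,l_k;b,c;P}(h) = (b+c-2k)·δ_M(h) + Σ_i (δ_{M+l_i}(h) + δ_{M-l_i}(h))`
on `ℤ/Pℤ`, where `M = max(l_1,...,l_k)`. -/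
def tileU (P k : ℕ) (l : Fin k → ℕ) (b c : ℕ) : ZMod P → ℤ :=
  fun h =>
    ((b : ℤ) + (c : ℤ) - 2 * (k : ℤ)) * (if ((Finset.univ.sup l : ℕ) : ZMod P) = h then 1 else 0)
      + ∑ i : Fin k,
        ((if ((Finset.univ.sup l + l i : ℕ) : ZMod P) = h then 1 else 0)
          + (if ((Finset.univ.sup l - l i : ℕ) : ZMod P) = h then 1 else 0))

/-- The mask polynomial `Q_u(x) = Σ_{a=0}^{P-1} u(a)·x^a` of a tile `u : ℤ/Pℤ → ℤ`. -/
noncomputable def maskPoly (P : ℕ) (u : ZMod P → ℤ) : Polynomial ℤ :=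
  ∑ a ∈ Finset.range P, Polynomial.C (u (a : ZMod P)) * Polynomial.X ^ a


section Aux

lemma pow_mod_eq' {ζ : ℂ} {P : ℕ} (hζP : ζ ^ P = 1) (m : ℕ) : ζ ^ (m % P) = ζ ^ m := by
  conv_rhs => rw [← Nat.mod_add_div m P]
  rw [pow_add, pow_mul, hζP, one_pow, mul_one]

lemma pow_val_add {P : ℕ} [NeZero P] {ζ : ℂ} (hζP : ζ ^ P = 1) (z w : ZMod P) :
    ζ ^ ((z + w).val) = ζ ^ z.val * ζ ^ w.val := by
  rw [ZMod.val_add, pow_mod_eq' hζP, pow_add]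

lemma pow_val_natCast {P : ℕ} [NeZero P] {ζ : ℂ} (hζP : ζ ^ P = 1) (m : ℕ) :
    ζ ^ ((m : ZMod P)).val = ζ ^ m := by
  rw [ZMod.val_natCast, pow_mod_eq' hζP]

lemma sum_range_zmod' {β : Type*} [AddCommMonoid β] {P : ℕ} [NeZero P] (g : ZMod P → β) :
    ∑ a ∈ Finset.range P, g (a : ZMod P) = ∑ z : ZMod P, g z := by
  refine Finset.sum_nbij' (fun a => (a : ZMod P)) (fun z => z.val) ?_ ?_ ?_ ?_ ?_
  · intro a _; exact Finset.mem_univ _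
  · intro z _; exact Finset.mem_range.mpr (ZMod.val_lt z)
  · intro a ha; exact ZMod.val_cast_of_lt (Finset.mem_range.mp ha)
  · intro z _; exact ZMod.natCast_zmod_val z
  · intro a _; rfl

lemma shift_sum {P : ℕ} [NeZero P] {ζ : ℂ} (hζP : ζ ^ P = 1) (t : ZMod P) (g : ZMod P → ℂ) :
    ∑ z : ZMod P, g (z + t) * (ζ ^ z.val * ζ ^ t.val) = ∑ z : ZMod P, g z * ζ ^ z.val := by
  simp_rw [← pow_val_add hζP]
  exact Fintype.sum_equiv (Equiv.addRight t) _ _ (fun z => rfl)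

lemma sum_pow_val_eq_zero {P : ℕ} [NeZero P] {ζ : ℂ} (hζP : ζ ^ P = 1) (hζ1 : ζ ≠ 1) :
    ∑ z : ZMod P, ζ ^ z.val = 0 := by
  rw [← sum_range_zmod' (fun z : ZMod P => ζ ^ z.val)]
  have h : ∀ a ∈ Finset.range P, ζ ^ ((a : ZMod P)).val = ζ ^ a := fun a _ => pow_val_natCast hζP a
  rw [Finset.sum_congr rfl h, geom_sum_eq hζ1, hζP, sub_self, zero_div]

def vzf {P : ℕ} (f : ZMod P → Bool) : ZMod P → ℤ := fun z => if f z = true then 1 else 0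

end Aux


lemma conv_eq {P k : ℕ} {l : Fin k → ℕ} {b c : ℕ} {f : ZMod P → Bool}
    (hf : IsPerfectColouring P k l b c f) (g : ZMod P) :
    ((b : ℤ) + c - 2 * k) * (if f g = true then 1 else 0)
      + ∑ i : Fin k, ((if f (g + (l i : ZMod P)) = true then (1:ℤ) else 0)
        + (if f (g - (l i : ZMod P)) = true then (1:ℤ) else 0)) = c := by
  obtain ⟨h1, h2⟩ := hf
  cases hg : f g with
  | false =>
      have h := h2 g hg
      have h' : ((∑ i : Fin k, ((if f (g + (l i : ZMod P)) = true then 1 else 0)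
          + (if f (g - (l i : ZMod P)) = true then 1 else 0)) : ℕ) : ℤ) = (c : ℤ) := by
        exact_mod_cast congrArg Nat.cast h
      push_cast at h'
      simp [hg, h']
  | true =>
      have h := h1 g hg
      have h' : ((∑ i : Fin k, ((if f (g + (l i : ZMod P)) = false then 1 else 0)
          + (if f (g - (l i : ZMod P)) = false then 1 else 0)) : ℕ) : ℤ) = (b : ℤ) := by
        exact_mod_cast congrArg Nat.cast h
      push_cast at h'
      have htot : (∑ i : Fin k, ((if f (g + (l i : ZMod P)) = true then (1:ℤ) else 0)
            + (if f (g - (l i : ZMod P)) = true then (1:ℤ) else 0)))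
          + (∑ i : Fin k, ((if f (g + (l i : ZMod P)) = false then (1:ℤ) else 0)
            + (if f (g - (l i : ZMod P)) = false then (1:ℤ) else 0))) = 2 * k := by
        rw [← Finset.sum_add_distrib]
        have key : ∀ i : Fin k, (((if f (g + (l i : ZMod P)) = true then (1:ℤ) else 0)
            + (if f (g - (l i : ZMod P)) = true then (1:ℤ) else 0))
          + ((if f (g + (l i : ZMod P)) = false then (1:ℤ) else 0)
            + (if f (g - (l i : ZMod P)) = false then (1:ℤ) else 0))) = 2 := by
          intro i
          cases hx1 : f (g + (l i : ZMod P)) <;> cases hx2 : f (g - (l i : ZMod P)) <;> simp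
        rw [Finset.sum_congr rfl (fun i _ => key i), Finset.sum_const, Finset.card_univ,
          Fintype.card_fin, nsmul_eq_mul]; ring
      simp only [hg, if_pos trivial, mul_one] at *
      linarith [h', htot]

lemma aeval_mul_S_eq_zero {P k : ℕ} [NeZero P] {l : Fin k → ℕ} {b c : ℕ} {f : ZMod P → Bool}
    (hconv : ∀ g : ZMod P,
      ((b : ℤ) + c - 2 * k) * (if f g = true then 1 else 0)
      + ∑ i : Fin k, ((if f (g + (l i : ZMod P)) = true then (1:ℤ) else 0)
        + (if f (g - (l i : ZMod P)) = true then (1:ℤ) else 0)) = c)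
    {ζ : ℂ} (hζP : ζ ^ P = 1) (hζ0 : ζ ≠ 0) (hζ1 : ζ ≠ 1) :
    (Polynomial.aeval ζ (polyA k l b c))
      * (∑ z : ZMod P, ((vzf f z : ℤ) : ℂ) * ζ ^ z.val) = 0 := by
  set M := Finset.univ.sup l with hM
  set S : ℂ := ∑ z : ZMod P, ((vzf f z : ℤ) : ℂ) * ζ ^ z.val with hS
  have hAval : Polynomial.aeval ζ (polyA k l b c)
      = ((b : ℂ) + c - 2 * k) * ζ ^ M + ∑ i : Fin k, (ζ ^ (M + l i) + ζ ^ (M - l i)) := by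
    rw [polyA]
    simp only [map_add, map_mul, map_sum, map_sub, aeval_C, aeval_X_pow, map_intCast,
      map_natCast, map_ofNat, ← hM, algebraMap_int_eq, eq_intCast]
  have claimB : ∀ i : Fin k, ζ ^ (M - l i) * S
      = ∑ z : ZMod P, ((vzf f (z + (l i : ZMod P)) : ℤ) : ℂ) * (ζ ^ M * ζ ^ z.val) := by
    intro i
    have hle : l i ≤ M := Finset.le_sup (Finset.mem_univ i)
    apply mul_right_cancel₀ (pow_ne_zero (l i) hζ0)
    have h1 : ζ ^ (M - l i) * S * ζ ^ l i = ζ ^ M * S := by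
      rw [mul_comm (ζ ^ (M - l i)) S, mul_assoc, ← pow_add, Nat.sub_add_cancel hle, mul_comm]
    rw [h1, Finset.sum_mul]
    have h2 : ∀ z : ZMod P, ((vzf f (z + (l i : ZMod P)) : ℤ) : ℂ) * (ζ ^ M * ζ ^ z.val) * ζ ^ l i
        = ζ ^ M * (((vzf f (z + (l i : ZMod P)) : ℤ) : ℂ) * (ζ ^ z.val * ζ ^ ((l i : ZMod P)).val)) := by
      intro z; rw [pow_val_natCast hζP]; ring
    rw [Finset.sum_congr rfl fun z _ => h2 z, ← Finset.mul_sum,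
      shift_sum hζP (l i : ZMod P) (fun z => ((vzf f z : ℤ) : ℂ)), hS]
  have claimA : ∀ i : Fin k, ζ ^ (M + l i) * S
      = ∑ z : ZMod P, ((vzf f (z - (l i : ZMod P)) : ℤ) : ℂ) * (ζ ^ M * ζ ^ z.val) := by
    intro i
    set t : ZMod P := -(l i : ZMod P) with ht
    have hcancel : ζ ^ l i * ζ ^ t.val = 1 := by
      rw [← pow_val_natCast hζP (l i), ← pow_val_add hζP]
      have h0 : ((l i : ZMod P) + t) = 0 := by simp [ht]
      rw [h0]
      simpa using pow_val_natCast hζP 0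
    apply mul_right_cancel₀ (pow_ne_zero t.val hζ0)
    have h1 : ζ ^ (M + l i) * S * ζ ^ t.val = ζ ^ M * S := by
      calc ζ ^ (M + l i) * S * ζ ^ t.val = ζ ^ M * S * (ζ ^ l i * ζ ^ t.val) := by
            rw [pow_add]; ring
        _ = ζ ^ M * S := by rw [hcancel, mul_one]
    rw [h1, Finset.sum_mul]
    have h2 : ∀ z : ZMod P, ((vzf f (z - (l i : ZMod P)) : ℤ) : ℂ) * (ζ ^ M * ζ ^ z.val) * ζ ^ t.val
        = ζ ^ M * (((vzf f (z + t) : ℤ) : ℂ) * (ζ ^ z.val * ζ ^ t.val)) := by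
      intro z; rw [sub_eq_add_neg, ← ht]; ring
    rw [Finset.sum_congr rfl fun z _ => h2 z, ← Finset.mul_sum,
      shift_sum hζP t (fun z => ((vzf f z : ℤ) : ℂ)), hS]
  have hconv2 : ∀ z : ZMod P,
      ((b : ℂ) + c - 2 * k) * ((vzf f z : ℤ) : ℂ)
        + ∑ i : Fin k, (((vzf f (z + (l i : ZMod P)) : ℤ) : ℂ) + ((vzf f (z - (l i : ZMod P)) : ℤ) : ℂ))
      = (c : ℂ) := by
    intro z
    have h := hconv z
    have h' : (((b : ℤ) + c - 2 * k) * vzf f z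
        + ∑ i : Fin k, (vzf f (z + (l i : ZMod P)) + vzf f (z - (l i : ZMod P))) : ℤ) = (c : ℤ) := by
      simpa [vzf] using h
    exact_mod_cast congrArg (Int.cast : ℤ → ℂ) h'
  calc Polynomial.aeval ζ (polyA k l b c) * S
      = ∑ z : ZMod P, (((b : ℂ) + c - 2 * k) * ((vzf f z : ℤ) : ℂ) * (ζ ^ M * ζ ^ z.val))
        + ∑ i : Fin k, (∑ z : ZMod P, ((vzf f (z + (l i : ZMod P)) : ℤ) : ℂ) * (ζ ^ M * ζ ^ z.val)
          + ∑ z : ZMod P, ((vzf f (z - (l i : ZMod P)) : ℤ) : ℂ) * (ζ ^ M * ζ ^ z.val)) := by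
        rw [hAval, add_mul, Finset.sum_mul]
        congr 1
        · rw [hS, Finset.mul_sum]
          exact Finset.sum_congr rfl fun z _ => by ring
        · exact Finset.sum_congr rfl fun i _ => by rw [add_mul, claimA i, claimB i, add_comm]
    _ = ∑ z : ZMod P, ((((b : ℂ) + c - 2 * k) * ((vzf f z : ℤ) : ℂ)
          + ∑ i : Fin k, (((vzf f (z + (l i : ZMod P)) : ℤ) : ℂ) + ((vzf f (z - (l i : ZMod P)) : ℤ) : ℂ)))
          * (ζ ^ M * ζ ^ z.val)) := by
        have hz : ∀ z : ZMod P, (((b : ℂ) + c - 2 * k) * ((vzf f z : ℤ) : ℂ)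
            + ∑ i : Fin k, (((vzf f (z + (l i : ZMod P)) : ℤ) : ℂ) + ((vzf f (z - (l i : ZMod P)) : ℤ) : ℂ)))
            * (ζ ^ M * ζ ^ z.val)
            = ((b : ℂ) + c - 2 * k) * ((vzf f z : ℤ) : ℂ) * (ζ ^ M * ζ ^ z.val)
              + ∑ i : Fin k, (((vzf f (z + (l i : ZMod P)) : ℤ) : ℂ) * (ζ ^ M * ζ ^ z.val)
                + ((vzf f (z - (l i : ZMod P)) : ℤ) : ℂ) * (ζ ^ M * ζ ^ z.val)) := by
          intro z
          rw [add_mul, Finset.sum_mul]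
          congr 1
          exact Finset.sum_congr rfl fun i _ => add_mul _ _ _
        rw [Finset.sum_congr rfl fun z _ => hz z]
        have flip : ∀ X Y : ZMod P → Fin k → ℂ,
            ∑ z : ZMod P, ∑ i : Fin k, (X z i + Y z i)
            = ∑ i : Fin k, ((∑ z : ZMod P, X z i) + (∑ z : ZMod P, Y z i)) := by
          intro X Y
          rw [Finset.sum_comm]
          exact Finset.sum_congr rfl fun i _ => Finset.sum_add_distrib
        symm
        rw [Finset.sum_add_distrib]
        congr 1
        exact flip _ _
    _ = ∑ z : ZMod P, (c : ℂ) * (ζ ^ M * ζ ^ z.val) := by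
        exact Finset.sum_congr rfl fun z _ => by rw [hconv2 z]
    _ = 0 := by
        rw [← Finset.mul_sum, ← Finset.mul_sum, sum_pow_val_eq_zero hζP hζ1]
        ring

lemma count_eq {P k : ℕ} [NeZero P] {l : Fin k → ℕ} {b c : ℕ} {f : ZMod P → Bool}
    (hconv : ∀ g : ZMod P, ((b:ℤ) + c - 2*k) * vzf f g
      + ∑ i : Fin k, (vzf f (g + (l i : ZMod P)) + vzf f (g - (l i : ZMod P))) = c) :
    ((b:ℤ) + c) * (∑ z : ZMod P, vzf f z) = c * P := by
  have h1 : ∑ z : ZMod P, (((b:ℤ)+c-2*k) * vzf f z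
      + ∑ i : Fin k, (vzf f (z + (l i:ZMod P)) + vzf f (z - (l i:ZMod P)))) = c * P := by
    rw [Finset.sum_congr rfl fun z _ => hconv z, Finset.sum_const, Finset.card_univ, ZMod.card,
      nsmul_eq_mul]
    ring
  rw [Finset.sum_add_distrib] at h1
  have hshift : ∀ t : ZMod P, ∑ z : ZMod P, vzf f (z + t) = ∑ z : ZMod P, vzf f z := fun t =>
    Fintype.sum_equiv (Equiv.addRight t) _ _ (fun z => rfl)
  have h2 : ∑ z : ZMod P, ∑ i : Fin k, (vzf f (z + (l i:ZMod P)) + vzf f (z - (l i:ZMod P)))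
      = 2 * k * ∑ z : ZMod P, vzf f z := by
    rw [Finset.sum_comm]
    have hi : ∀ i : Fin k, ∑ z : ZMod P, (vzf f (z + (l i:ZMod P)) + vzf f (z - (l i:ZMod P)))
        = 2 * ∑ z : ZMod P, vzf f z := by
      intro i
      rw [Finset.sum_add_distrib, hshift (l i : ZMod P)]
      have h3 := hshift (-(l i : ZMod P))
      simp only [← sub_eq_add_neg] at h3
      rw [h3]; ring
    rw [Finset.sum_congr rfl fun i _ => hi i, Finset.sum_const, Finset.card_univ,
      Fintype.card_fin, nsmul_eq_mul]
    push_cast; ring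
  rw [← Finset.mul_sum, h2] at h1
  linear_combination h1

lemma cyclo_dvd {P k : ℕ} [NeZero P] {l : Fin k → ℕ} {b c : ℕ} {f : ZMod P → Bool}
    (hconv : ∀ g : ZMod P,
      ((b : ℤ) + c - 2 * k) * (if f g = true then 1 else 0)
      + ∑ i : Fin k, ((if f (g + (l i : ZMod P)) = true then (1:ℤ) else 0)
        + (if f (g - (l i : ZMod P)) = true then (1:ℤ) else 0)) = c)
    {n : ℕ} (hnP : n ∣ P) (hn1 : 1 < n)
    (hA : ¬ Polynomial.cyclotomic n ℤ ∣ polyA k l b c) :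
    Polynomial.cyclotomic n ℤ ∣ ∑ a ∈ Finset.range P, Polynomial.C (vzf f (a : ZMod P)) * Polynomial.X ^ a := by
  have hprim : IsPrimitiveRoot (Complex.exp (2 * Real.pi * Complex.I / n)) n :=
    Complex.isPrimitiveRoot_exp n (by omega)
  set ζ : ℂ := Complex.exp (2 * Real.pi * Complex.I / n) with hζ
  have hζn : ζ ^ n = 1 := hprim.pow_eq_one
  have hζP : ζ ^ P = 1 := by
    obtain ⟨m, rfl⟩ := hnP; rw [pow_mul, hζn, one_pow]
  have hζ0 : ζ ≠ 0 := by rw [hζ]; exact Complex.exp_ne_zero _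
  have hζ1 : ζ ≠ 1 := hprim.ne_one hn1
  have hmin : ∀ q : Polynomial ℤ, Polynomial.aeval ζ q = 0 → Polynomial.cyclotomic n ℤ ∣ q := by
    intro q hq
    rw [Polynomial.cyclotomic_eq_minpoly hprim (by omega)]
    exact minpoly.isIntegrallyClosed_dvd (hprim.isIntegral (by omega)) hq
  have hS : (∑ z : ZMod P, ((vzf f z : ℤ) : ℂ) * ζ ^ z.val) = 0 := by
    rcases mul_eq_zero.mp (aeval_mul_S_eq_zero hconv hζP hζ0 hζ1) with h | h
    · exact absurd (hmin _ h) hA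
    · exact h
  apply hmin
  rw [map_sum]
  simp only [map_mul, Polynomial.aeval_C, Polynomial.aeval_X_pow, algebraMap_int_eq, eq_intCast, map_intCast]
  have hterm : ∀ a ∈ Finset.range P, ((vzf f (a : ZMod P) : ℤ) : ℂ) * ζ ^ a
      = ((vzf f (a : ZMod P) : ℤ) : ℂ) * ζ ^ ((a : ZMod P)).val := by
    intro a _; rw [pow_val_natCast hζP]
  rw [Finset.sum_congr rfl hterm,
    sum_range_zmod' (fun z : ZMod P => ((vzf f z : ℤ) : ℂ) * ζ ^ z.val), hS]

/-- If the circulant graph `C_P(l_1,...,l_k)` has a perfect 2-colouring with parameters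
`(b,c)`, then `(b+c)/gcd(b,c)` divides `S̃_P(1)`. -/
theorem stmt0 (k : ℕ) (hk : 1 ≤ k) (l : Fin k → ℕ) (b c : ℕ) (hb : 0 < b) (hc : 0 < c)
    (P : ℕ) (hP : 1 < P) (f : ZMod P → Bool) (hf : IsPerfectColouring P k l b c f) :
    (((b + c) / Nat.gcd b c : ℕ) : ℤ) ∣ (cycloProdPP P (polyA k l b c)).eval 1 := by
  haveI : NeZero P := ⟨by omega⟩
  have hconv := conv_eq hf
  have hconv' : ∀ g : ZMod P, ((b:ℤ) + c - 2*k) * vzf f g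
      + ∑ i : Fin k, (vzf f (g + (l i : ZMod P)) + vzf f (g - (l i : ZMod P))) = c := by
    intro g; simpa [vzf] using hconv g
  set A := polyA k l b c with hA
  set Qv : Polynomial ℤ := ∑ a ∈ Finset.range P, Polynomial.C (vzf f (a : ZMod P)) * Polynomial.X ^ a with hQv
  set N : ℤ := ∑ z : ZMod P, vzf f z with hN
  have hQv1 : Qv.eval 1 = N := by
    rw [hQv, Polynomial.eval_finset_sum]
    simp only [Polynomial.eval_mul, Polynomial.eval_C, Polynomial.eval_pow, Polynomial.eval_X,
      one_pow, mul_one]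
    rw [sum_range_zmod' (fun z : ZMod P => vzf f z), hN]
  set D := (Nat.divisors P).filter (fun n => IsPrimePow n) with hD
  set Sbad := D.filter (fun n => ¬ Polynomial.cyclotomic n ℤ ∣ A) with hSb
  have hdvd : ∀ n ∈ Sbad, Polynomial.cyclotomic n ℤ ∣ Qv := by
    intro n hn
    rw [hSb, Finset.mem_filter, hD, Finset.mem_filter, Nat.mem_divisors] at hn
    obtain ⟨⟨⟨hnP, _⟩, hpp⟩, hnA⟩ := hn
    exact cyclo_dvd hconv hnP hpp.one_lt hnA
  have hmonic : (∏ n ∈ Sbad, Polynomial.cyclotomic n ℤ).Monic :=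
    Polynomial.monic_prod_of_monic _ _ (fun n _ => Polynomial.cyclotomic.monic n ℤ)
  have hTdvd : (∏ n ∈ Sbad, Polynomial.cyclotomic n ℤ) ∣ Qv := by
    rw [← Polynomial.map_dvd_map (Int.castRingHom ℚ) Int.cast_injective hmonic,
      Polynomial.map_prod]
    have hmc : ∀ n ∈ Sbad, (Polynomial.cyclotomic n ℤ).map (Int.castRingHom ℚ)
        = Polynomial.cyclotomic n ℚ := fun n _ => Polynomial.map_cyclotomic_int n ℚ
    rw [Finset.prod_congr rfl hmc]
    apply Finset.prod_dvd_of_coprime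
    · intro x hx y hy hxy
      exact Polynomial.cyclotomic.isCoprime_rat hxy
    · intro n hn
      rw [← Polynomial.map_cyclotomic_int n ℚ]
      exact Polynomial.map_dvd _ (hdvd n hn)
  have hTN : (∏ n ∈ Sbad, (Polynomial.cyclotomic n ℤ).eval 1) ∣ N := by
    rw [← hQv1, ← Polynomial.eval_prod]
    exact Polynomial.eval_dvd hTdvd
  -- product over D equals P
  have hprodP : ∏ n ∈ D, (Polynomial.cyclotomic n ℤ).eval 1 = (P : ℤ) := by
    have hgeom := Polynomial.prod_cyclotomic_eq_geom_sum (by omega : 0 < P) ℤ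
    have hev := congrArg (Polynomial.eval (1:ℤ)) hgeom
    rw [Polynomial.eval_prod, Polynomial.eval_finset_sum] at hev
    simp only [Polynomial.eval_pow, Polynomial.eval_X, one_pow, Finset.sum_const,
      Finset.card_range, nsmul_eq_mul, mul_one] at hev
    set E := (Nat.divisors P).erase 1 with hE
    have hsplit := (Finset.prod_filter_mul_prod_filter_not E (fun n => IsPrimePow n)
      (fun n => (Polynomial.cyclotomic n ℤ).eval 1)).symm
    have hnotpp : ∏ n ∈ E.filter (fun n => ¬ IsPrimePow n),
        (Polynomial.cyclotomic n ℤ).eval 1 = 1 := by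
      apply Finset.prod_eq_one
      intro n hn
      rw [Finset.mem_filter] at hn
      have hne1 : n ≠ 1 := (Finset.mem_erase.mp (hE ▸ hn.1)).1
      refine Polynomial.eval_one_cyclotomic_not_prime_pow (fun {p} hp j hpj => ?_)
      rcases Nat.eq_zero_or_pos j with rfl | hj
      · exact hne1 (by simpa using hpj.symm)
      · exact hn.2 ⟨p, j, hp.prime, hj, hpj⟩
    have hfilter : E.filter (fun n => IsPrimePow n) = D := by
      rw [hE, hD]
      ext n
      simp only [Finset.mem_filter, Finset.mem_erase]
      constructor
      · rintro ⟨⟨_, h2⟩, h3⟩; exact ⟨h2, h3⟩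
      · rintro ⟨h2, h3⟩; exact ⟨⟨h3.ne_one, h2⟩, h3⟩
    rw [← hev, hsplit, hnotpp, mul_one, hfilter]
  have hsplit2 : (∏ n ∈ D.filter (fun n => Polynomial.cyclotomic n ℤ ∣ A),
        (Polynomial.cyclotomic n ℤ).eval 1)
      * (∏ n ∈ Sbad, (Polynomial.cyclotomic n ℤ).eval 1) = (P : ℤ) := by
    rw [hSb, ← hprodP]
    exact Finset.prod_filter_mul_prod_filter_not D _ _
  set G := ∏ n ∈ D.filter (fun n => Polynomial.cyclotomic n ℤ ∣ A),
    (Polynomial.cyclotomic n ℤ).eval 1 with hG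
  set T := ∏ n ∈ Sbad, (Polynomial.cyclotomic n ℤ).eval 1 with hT
  have hSPP : (cycloProdPP P A).eval 1 = G := by
    rw [cycloProdPP, Polynomial.eval_prod, hG, hD, Finset.filter_filter]
  have hTne : T ≠ 0 := by
    intro h0
    rw [h0, mul_zero] at hsplit2
    exact_mod_cast absurd hsplit2.symm (by positivity)
  obtain ⟨N1, hN1⟩ := hTN
  have hcount : ((b:ℤ) + c) * N = c * P := count_eq hconv'
  have hkey : ((b:ℤ) + c) * N1 = c * G := by
    apply mul_right_cancel₀ hTne
    calc ((b:ℤ)+c) * N1 * T = ((b:ℤ)+c) * N := by rw [hN1]; ring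
      _ = (c:ℤ) * P := hcount
      _ = (c:ℤ) * G * T := by rw [← hsplit2]; ring
  -- arithmetic of gcd
  set d := Nat.gcd b c with hd
  have hdb : d ∣ b := Nat.gcd_dvd_left b c
  have hdc : d ∣ c := Nat.gcd_dvd_right b c
  have hd0 : 0 < d := Nat.gcd_pos_of_pos_left c hb
  set b' := b / d with hb'
  set c' := c / d with hc'
  have hbb : b = d * b' := (Nat.mul_div_cancel' hdb).symm
  have hcc : c = d * c' := (Nat.mul_div_cancel' hdc).symm
  have hcop : Nat.Coprime b' c' := Nat.coprime_div_gcd_div_gcd hd0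
  have hcast : ((b + c) / d : ℕ) = b' + c' := by
    rw [hbb, hcc, ← Nat.mul_add, Nat.mul_div_cancel_left _ hd0]
  have hkey2 : ((b':ℤ) + c') * N1 = c' * G := by
    apply mul_left_cancel₀ (show (d:ℤ) ≠ 0 by exact_mod_cast hd0.ne')
    calc (d:ℤ) * (((b':ℤ)+c') * N1) = ((b:ℤ)+c) * N1 := by
          rw [hbb, hcc]; push_cast; ring
      _ = (c:ℤ) * G := hkey
      _ = (d:ℤ) * ((c':ℤ) * G) := by rw [hcc]; push_cast; ring
  have hcopz : IsCoprime ((b':ℤ) + c') (c' : ℤ) := by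
    rw [Int.isCoprime_iff_gcd_eq_one, ← Nat.cast_add, Int.gcd_natCast_natCast]
    show Nat.gcd (b' + c') c' = 1
    rw [Nat.gcd_add_self_left]
    exact hcop
  have hfin : ((b':ℤ) + c') ∣ G := hcopz.dvd_of_dvd_mul_left ⟨N1, hkey2.symm⟩
  rw [hSPP, hcast]
  exact_mod_cast hfin
end

section
/- Let k ≥ 1, let b, c be positive integers. Suppose that for some nonnegative integers l_1,...,l_k the infinite circulant graph C_∞(l_1,...,l_k) has a perfect 2-colouring with parameters (b,c). Then for every prime q and every positive integer t such that q^t divides (b+c)/gcd(b,c), it holds that b + c ≤ 2k + (b+c)/q^t. -/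
open Polynomial

open scoped Classical

namespace PCAux

open Finset Polynomial

/-! ### The ring homomorphism from `ℤ[X]` to the group algebra of `ZMod n` -/

noncomputable def piH (n : ℕ) : Polynomial ℤ →+* AddMonoidAlgebra ℤ (ZMod n) :=
  (AddMonoidAlgebra.mapDomainRingHom ℤ (Nat.castAddMonoidHom (ZMod n))).comp
    (Polynomial.toFinsuppIso ℤ).toRingHom

lemma piH_eq_mapDomain (n : ℕ) (R : Polynomial ℤ) :
    piH n R = AddMonoidAlgebra.mapDomain (fun x : ℕ => (x : ZMod n)) R.toFinsupp := by
  simp only [piH, RingHom.comp_apply, RingEquiv.toRingHom_eq_coe, RingHom.coe_coe,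
    Polynomial.toFinsuppIso_apply, AddMonoidAlgebra.mapDomainRingHom_apply]
  rfl

lemma piH_X_pow (n e : ℕ) :
    piH n (Polynomial.X ^ e) = AddMonoidAlgebra.single ((e : ZMod n)) (1 : ℤ) := by
  rw [piH_eq_mapDomain, Polynomial.toFinsupp_X_pow, AddMonoidAlgebra.mapDomain_single]

lemma piH_C (n : ℕ) (a : ℤ) : piH n (Polynomial.C a) = AddMonoidAlgebra.single (0 : ZMod n) a := by
  rw [piH_eq_mapDomain, Polynomial.toFinsupp_C, AddMonoidAlgebra.mapDomain_single]
  norm_num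

lemma piH_apply_eq_sum (n : ℕ) (R : Polynomial ℤ) (g : ZMod n) :
    (piH n R).coeff g = ∑ x ∈ R.support.filter (fun x : ℕ => ((x : ZMod n) = g)), R.coeff x := by
  classical
  rw [piH_eq_mapDomain, AddMonoidAlgebra.coeff_mapDomain, Finsupp.mapDomain, Finsupp.sum_apply, Finsupp.sum, Finset.sum_filter]
  refine Finset.sum_congr rfl (fun x hx => ?_)
  rw [Finsupp.single_apply]
  rfl

lemma piH_zero_dvd {n : ℕ} (hn : 0 < n) {R : Polynomial ℤ} (h : piH n R = 0) :
    (Polynomial.X ^ n - 1 : Polynomial ℤ) ∣ R := by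
  classical
  have hmonic : (Polynomial.X ^ n - 1 : Polynomial ℤ).Monic := by
    have := Polynomial.monic_X_pow_sub_C (1 : ℤ) hn.ne'
    simpa using this
  have hker : piH n (Polynomial.X ^ n - 1 : Polynomial ℤ) = 0 := by
    rw [map_sub, map_one, piH_X_pow, ZMod.natCast_self, AddMonoidAlgebra.one_def]
    simp
  set r := R %ₘ (Polynomial.X ^ n - 1) with hr
  have hdiv : r + (Polynomial.X ^ n - 1) * (R /ₘ (Polynomial.X ^ n - 1)) = R :=
    Polynomial.modByMonic_add_div R (Polynomial.X ^ n - 1)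
  have hpir : piH n r = 0 := by
    have h2 := congrArg (piH n) hdiv
    rw [map_add, map_mul, hker, zero_mul, add_zero] at h2
    rw [h2, h]
  have hdeg : r.degree < (n : ℕ) := by
    have h3 := Polynomial.degree_modByMonic_lt R hmonic
    have h4 : (Polynomial.X ^ n - 1 : Polynomial ℤ).degree = (n : ℕ) := by
      rw [show (1 : Polynomial ℤ) = Polynomial.C 1 by simp]
      exact Polynomial.degree_X_pow_sub_C hn 1
    rwa [h4] at h3
  have hr0 : r = 0 := by
    by_contra hne
    have hsup : r.support.Nonempty := by rwa [Polynomial.nonempty_support_iff]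
    obtain ⟨x, hx⟩ := hsup
    have hxlt : x < n := by
      have h1 : x ≤ r.natDegree := Polynomial.le_natDegree_of_mem_supp x hx
      have h2 : r.natDegree < n := (Polynomial.natDegree_lt_iff_degree_lt hne).mpr hdeg
      omega
    have h5 := piH_apply_eq_sum n r ((x : ZMod n))
    rw [hpir] at h5
    have hfil : r.support.filter (fun y : ℕ => ((y : ZMod n) = (x : ZMod n))) = {x} := by
      apply Finset.eq_singleton_iff_unique_mem.mpr
      refine ⟨Finset.mem_filter.mpr ⟨hx, rfl⟩, ?_⟩
      intro y hy
      obtain ⟨hy1, hy2⟩ := Finset.mem_filter.mp hy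
      have hylt : y < n := by
        have h1 : y ≤ r.natDegree := Polynomial.le_natDegree_of_mem_supp y hy1
        have h2 : r.natDegree < n := (Polynomial.natDegree_lt_iff_degree_lt hne).mpr hdeg
        omega
      have h6 := (ZMod.natCast_eq_natCast_iff y x n).mp hy2
      rwa [Nat.ModEq, Nat.mod_eq_of_lt hylt, Nat.mod_eq_of_lt hxlt] at h6
    rw [hfil, Finset.sum_singleton] at h5
    have h7 : (0 : AddMonoidAlgebra ℤ (ZMod n)).coeff ((x : ZMod n)) = 0 := rfl
    rw [h7] at h5
    exact (Polynomial.mem_support_iff.mp hx) h5.symm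
  refine ⟨R /ₘ (Polynomial.X ^ n - 1), ?_⟩
  conv_lhs => rw [← hdiv, hr0, zero_add]

lemma piH_X_pow_self_sub_one {n : ℕ} (hn : 0 < n) :
    piH n (Polynomial.X ^ n - 1 : Polynomial ℤ) = 0 := by
  rw [map_sub, map_one, piH_X_pow, ZMod.natCast_self, AddMonoidAlgebra.one_def]
  simp

lemma sum_single_apply {P : ℕ} [NeZero P] (u : ZMod P → ℤ) (g : ZMod P) :
    (∑ h : ZMod P, AddMonoidAlgebra.single h (u h)).coeff g = u g := by
  rw [AddMonoidAlgebra.coeff_sum, Finsupp.finset_sum_apply]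
  simp [AddMonoidAlgebra.coeff_single, Finsupp.single_apply]

lemma conv_eq {P : ℕ} [NeZero P] (u v : ZMod P → ℤ) :
    (∑ h : ZMod P, (AddMonoidAlgebra.single h (u h) : AddMonoidAlgebra ℤ (ZMod P)))
        * (∑ h : ZMod P, AddMonoidAlgebra.single h (v h))
      = ∑ g : ZMod P, AddMonoidAlgebra.single g (∑ h : ZMod P, u h * v (g - h)) := by
  classical
  rw [Finset.sum_mul_sum]
  have h2 : ∀ h1 : ZMod P,
      (∑ h2 : ZMod P, ((AddMonoidAlgebra.single h1 (u h1) : AddMonoidAlgebra ℤ (ZMod P))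
          * AddMonoidAlgebra.single h2 (v h2)))
        = ∑ g : ZMod P, AddMonoidAlgebra.single g (u h1 * v (g - h1)) := by
    intro h1
    refine Fintype.sum_equiv (Equiv.addLeft h1) _ _ (fun h2 => ?_)
    simp only [Equiv.coe_addLeft, AddMonoidAlgebra.single_mul_single]
    rw [add_sub_cancel_left]
  rw [Finset.sum_congr rfl (fun h1 _ => h2 h1), Finset.sum_comm]
  refine Finset.sum_congr rfl (fun g _ => ?_)
  simp only [← AddMonoidAlgebra.ofCoeff_single, Finsupp.single_finset_sum, AddMonoidAlgebra.ofCoeff_sum]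

lemma shift_invariant {n : ℕ} (μ : AddMonoidAlgebra ℤ (ZMod n)) (κ : ZMod n)
    (h : AddMonoidAlgebra.single κ (1 : ℤ) * μ = μ) : ∀ g : ZMod n, μ.coeff (g + κ) = μ.coeff g := by
  intro g
  conv_lhs => rw [← h]
  rw [AddMonoidAlgebra.coeff_single_mul_apply, one_mul]
  congr 1
  abel

lemma exists_unique_shift {q m : ℕ} (hq : 0 < q) (hm : 0 < m) (x e : ℕ)
    (hxe : ((m : ℤ)) ∣ (e : ℤ) - (x : ℤ)) :
    ∃ u : ℕ, u < q ∧ ((m : ℤ) * q) ∣ ((e : ℤ) + u * m - x) ∧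
      ∀ u' : ℕ, u' < q → ((m : ℤ) * q) ∣ ((e : ℤ) + u' * m - x) → u' = u := by
  obtain ⟨D, hD⟩ := hxe
  have hq' : (0 : ℤ) < q := by exact_mod_cast hq
  have hm' : (m : ℤ) ≠ 0 := by positivity
  have h2 : 0 ≤ (-D) % q := Int.emod_nonneg _ hq'.ne'
  have h1 : (-D) % q < q := Int.emod_lt_of_pos _ hq'
  have h3 : ((((-D) % q).toNat : ℤ)) = (-D) % q := Int.toNat_of_nonneg h2
  have hqd : ∀ u : ℤ, (q : ℤ) ∣ D + u → ((m : ℤ) * q) ∣ ((e : ℤ) + u * m - x) := by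
    rintro u ⟨z, hz⟩
    exact ⟨z, by linear_combination hD + (m : ℤ) * hz⟩
  have hdq : ∀ u : ℤ, ((m : ℤ) * q) ∣ ((e : ℤ) + u * m - x) → (q : ℤ) ∣ D + u := by
    rintro u ⟨z, hz⟩
    refine ⟨z, mul_left_cancel₀ hm' ?_⟩
    linear_combination hz - hD
  have hu0 : (q : ℤ) ∣ D + (((-D) % q).toNat : ℤ) := by
    rw [h3]
    refine ⟨-((-D) / q), ?_⟩
    have h6 := Int.emod_def (-D) (q : ℤ)
    linear_combination h6
  refine ⟨((-D) % q).toNat, by omega, hqd _ hu0, ?_⟩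
  intro u' hu' hdvd'
  have hu'd := hdq _ hdvd'
  have hdiff : (q : ℤ) ∣ ((u' : ℤ) - (((-D) % q).toNat : ℤ)) := by
    have := dvd_sub hu'd hu0
    simpa using this
  have hu'q : (u' : ℤ) < q := by exact_mod_cast hu'
  have hu'0 : (0 : ℤ) ≤ (u' : ℤ) := by positivity
  have habs : |(u' : ℤ) - (((-D) % q).toNat : ℤ)| < q := by
    rw [abs_lt]
    omega
  have := Int.eq_zero_of_abs_lt_dvd hdiff habs
  omega

lemma count_ite {q m : ℕ} (hq : 0 < q) (hm : 0 < m) (x e : ℕ) (C : ℤ) :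
    (∑ u ∈ Finset.range q,
        if (x : ZMod (m * q)) = ((e + u * m : ℕ) : ZMod (m * q)) then C else 0)
      = if (x : ZMod m) = (e : ZMod m) then C else 0 := by
  classical
  by_cases hxe : (x : ZMod m) = (e : ZMod m)
  · rw [if_pos hxe]
    have hdvd : (m : ℤ) ∣ (e : ℤ) - x :=
      (Nat.modEq_iff_dvd).mp ((ZMod.natCast_eq_natCast_iff x e m).mp hxe)
    obtain ⟨u₀, hu₀q, hu₀d, huniq⟩ := exists_unique_shift hq hm x e hdvd
    rw [Finset.sum_eq_single_of_mem u₀ (Finset.mem_range.mpr hu₀q)]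
    · rw [if_pos]
      rw [ZMod.natCast_eq_natCast_iff, Nat.modEq_iff_dvd]
      push_cast
      convert hu₀d using 2
    · intro u hu hne
      rw [if_neg]
      intro hcond
      refine hne (huniq u (Finset.mem_range.mp hu) ?_)
      have h1 := Nat.modEq_iff_dvd.mp ((ZMod.natCast_eq_natCast_iff _ _ _).mp hcond)
      push_cast at h1
      convert h1 using 2
  · rw [if_neg hxe]
    apply Finset.sum_eq_zero
    intro u hu
    rw [if_neg]
    intro hcond
    apply hxe
    have h1 := (ZMod.natCast_eq_natCast_iff _ _ _).mp hcond
    have h2 : x ≡ e + u * m [MOD m] := h1.of_dvd ⟨q, rfl⟩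
    have h3 : (e + u * m) ≡ e [MOD m] := by
      show (e + u * m) % m = e % m
      rw [Nat.mul_comm u m, Nat.add_mul_mod_self_left]
    exact (ZMod.natCast_eq_natCast_iff _ _ _).mpr (h2.trans h3)

/-! ### Coefficient-class sums -/

noncomputable def filS (R : Polynomial ℤ) (n e : ℕ) : Finset ℕ :=
  R.support.filter (fun x : ℕ => ((x : ZMod n) = (e : ZMod n)))

noncomputable def aaS (R : Polynomial ℤ) (n e : ℕ) : ℤ := ∑ x ∈ filS R n e, R.coeff x

lemma aaS_eq_piH (R : Polynomial ℤ) (n e : ℕ) : aaS R n e = (piH n R).coeff ((e : ZMod n)) :=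
  (piH_apply_eq_sum n R _).symm

lemma aaS_nonneg {R : Polynomial ℤ} (hR : ∀ j, 0 ≤ R.coeff j) (n e : ℕ) : 0 ≤ aaS R n e :=
  Finset.sum_nonneg (fun x _ => hR x)

lemma coeff_le_aaS {R : Polynomial ℤ} (hR : ∀ j, 0 ≤ R.coeff j) (n e : ℕ) :
    R.coeff e ≤ aaS R n e := by
  classical
  by_cases he : e ∈ R.support
  · exact Finset.single_le_sum (fun x _ => hR x)
      (Finset.mem_filter.mpr ⟨he, rfl⟩)
  · rw [Polynomial.notMem_support_iff.mp he]
    exact aaS_nonneg hR n e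

lemma aaS_one (R : Polynomial ℤ) (e : ℕ) : aaS R 1 e = R.eval 1 := by
  classical
  rw [aaS, filS]
  have h1 : R.support.filter (fun x : ℕ => ((x : ZMod 1) = (e : ZMod 1))) = R.support :=
    Finset.filter_true_of_mem (fun x _ => Subsingleton.elim _ _)
  rw [h1, Polynomial.eval_eq_sum, Polynomial.sum_def]
  simp

lemma aaS_antitone {R : Polynomial ℤ} (hR : ∀ j, 0 ≤ R.coeff j) {m n : ℕ} (hmn : m ∣ n)
    (e : ℕ) : aaS R n e ≤ aaS R m e := by
  classical
  refine Finset.sum_le_sum_of_subset_of_nonneg ?_ (fun x _ _ => hR x)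
  intro x hx
  obtain ⟨hx1, hx2⟩ := Finset.mem_filter.mp hx
  refine Finset.mem_filter.mpr ⟨hx1, ?_⟩
  rw [ZMod.natCast_eq_natCast_iff] at hx2 ⊢
  exact hx2.of_dvd hmn

lemma aaS_step' {q m : ℕ} (hq : 0 < q) (hm : 0 < m) {R : Polynomial ℤ}
    (hinv : ∀ g : ZMod (m * q), (piH (m * q) R).coeff (g + ((m : ZMod (m * q)))) = (piH (m * q) R).coeff g)
    (e : ℕ) : (q : ℤ) * aaS R (m * q) e = aaS R m e := by
  classical
  -- first: each shifted class sum equals the base one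
  have hit : ∀ (u : ℕ) (g : ZMod (m * q)),
      (piH (m * q) R).coeff (g + (u : ZMod (m * q)) * (m : ZMod (m * q))) = (piH (m * q) R).coeff g := by
    intro u
    induction u with
    | zero => intro g; simp
    | succ v ih =>
      intro g
      have harg : g + ((v + 1 : ℕ) : ZMod (m * q)) * (m : ZMod (m * q))
          = (g + (m : ZMod (m * q))) + (v : ZMod (m * q)) * (m : ZMod (m * q)) := by
        push_cast
        ring
      rw [harg, ih, hinv]
  have hsum : ∀ u : ℕ, (∑ x ∈ filS R (m * q) (e + u * m), R.coeff x) = aaS R (m * q) e := by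
    intro u
    have h1 : (∑ x ∈ filS R (m * q) (e + u * m), R.coeff x)
        = (piH (m * q) R).coeff (((e + u * m : ℕ) : ZMod (m * q))) :=
      (piH_apply_eq_sum _ R _).symm
    rw [h1, aaS_eq_piH]
    have h2 : ((e + u * m : ℕ) : ZMod (m * q))
        = ((e : ZMod (m * q))) + (u : ZMod (m * q)) * (m : ZMod (m * q)) := by push_cast; ring
    rw [h2, hit]
  -- second: the union over u of shifted classes is the coarse class
  have hmain : (∑ u ∈ Finset.range q, ∑ x ∈ filS R (m * q) (e + u * m), R.coeff x)
      = aaS R m e := by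
    have h1 : ∀ u : ℕ, (∑ x ∈ filS R (m * q) (e + u * m), R.coeff x)
        = ∑ x ∈ R.support,
            if (x : ZMod (m * q)) = ((e + u * m : ℕ) : ZMod (m * q)) then R.coeff x else 0 := by
      intro u
      rw [filS, Finset.sum_filter]
    rw [Finset.sum_congr rfl (fun u _ => h1 u), Finset.sum_comm]
    rw [aaS, filS, Finset.sum_filter]
    refine Finset.sum_congr rfl (fun x _ => ?_)
    exact count_ite hq hm x e (R.coeff x)
  rw [← hmain, Finset.sum_congr rfl (fun u _ => hsum u), Finset.sum_const,
    Finset.card_range, nsmul_eq_mul]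

lemma aaS_step {q j : ℕ} (hq : q.Prime) (hj : 1 ≤ j) {R : Polynomial ℤ}
    (hdvd : Polynomial.cyclotomic (q ^ j) ℤ ∣ R) (e : ℕ) :
    (q : ℤ) * aaS R (q ^ j) e = aaS R (q ^ (j - 1)) e := by
  classical
  haveI : Fact q.Prime := ⟨hq⟩
  obtain ⟨j', rfl⟩ : ∃ j', j = j' + 1 := ⟨j - 1, by omega⟩
  have hsucc : q ^ (j' + 1) = q ^ j' * q := pow_succ q j'
  have hj'eq : j' + 1 - 1 = j' := by omega
  rw [hj'eq]
  obtain ⟨R₂, hR₂⟩ := hdvd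
  have hzero : piH (q ^ (j' + 1)) ((Polynomial.X ^ (q ^ j') - 1) * R) = 0 := by
    have hfac : (Polynomial.X ^ (q ^ j') - 1) * R
        = (Polynomial.X ^ (q ^ (j' + 1)) - 1) * R₂ := by
      rw [hR₂, ← Polynomial.cyclotomic_prime_pow_mul_X_pow_sub_one ℤ q j']
      ring
    rw [hfac, map_mul, piH_X_pow_self_sub_one (pow_pos hq.pos _), zero_mul]
  have hsingle : AddMonoidAlgebra.single ((q ^ j' : ℕ) : ZMod (q ^ (j' + 1))) (1 : ℤ)
      * piH (q ^ (j' + 1)) R = piH (q ^ (j' + 1)) R := by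
    have h2 : piH (q ^ (j' + 1)) ((Polynomial.X ^ (q ^ j') - 1) * R)
        = (AddMonoidAlgebra.single ((q ^ j' : ℕ) : ZMod (q ^ (j' + 1))) (1 : ℤ) - 1)
            * piH (q ^ (j' + 1)) R := by
      rw [map_mul, map_sub, map_one, piH_X_pow]
    rw [h2] at hzero
    have h3 : AddMonoidAlgebra.single ((q ^ j' : ℕ) : ZMod (q ^ (j' + 1))) (1 : ℤ)
        * piH (q ^ (j' + 1)) R - 1 * piH (q ^ (j' + 1)) R = 0 := by
      rw [← sub_mul]; exact hzero
    rw [one_mul] at h3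
    exact sub_eq_zero.mp h3
  have hinv : ∀ g : ZMod (q ^ j' * q),
      (piH (q ^ j' * q) R).coeff (g + ((q ^ j' : ℕ) : ZMod (q ^ j' * q)))
        = (piH (q ^ j' * q) R).coeff g := by
    rw [← hsucc]
    exact shift_invariant _ _ hsingle
  have := aaS_step' hq.pos (pow_pos hq.pos j') (R := R) hinv e
  rw [← hsucc] at this
  exact this

lemma key_chain {q : ℕ} (hq : q.Prime) {R : Polynomial ℤ} (hR : ∀ j, 0 ≤ R.coeff j) (e : ℕ) :
    ∀ (t : ℕ) (T : Finset ℕ) (nmax : ℕ), T.card = t →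
      (∀ j ∈ T, 1 ≤ j ∧ j ≤ nmax ∧ Polynomial.cyclotomic (q ^ j) ℤ ∣ R) →
      (q : ℤ) ^ t * aaS R (q ^ nmax) e ≤ aaS R 1 e := by
  intro t
  induction t with
  | zero =>
    intro T nmax hcard hT
    simpa using aaS_antitone hR (one_dvd _) e
  | succ t ih =>
    intro T nmax hcard hT
    have hne : T.Nonempty := Finset.card_pos.mp (by omega)
    set j := T.max' hne with hj
    have hjT : j ∈ T := T.max'_mem hne
    obtain ⟨hj1, hjn, hjd⟩ := hT j hjT
    have h1 : aaS R (q ^ nmax) e ≤ aaS R (q ^ j) e :=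
      aaS_antitone hR (pow_dvd_pow q hjn) e
    have h2 : (q : ℤ) * aaS R (q ^ j) e = aaS R (q ^ (j - 1)) e := aaS_step hq hj1 hjd e
    have h3 : (q : ℤ) ^ t * aaS R (q ^ (j - 1)) e ≤ aaS R 1 e := by
      refine ih (T.erase j) (j - 1) (by rw [Finset.card_erase_of_mem hjT, hcard]; omega) ?_
      intro j' hj'
      obtain ⟨hj'1, _, hj'd⟩ := hT j' (Finset.mem_of_mem_erase hj')
      have hle : j' ≤ j := Finset.le_max' T j' (Finset.mem_of_mem_erase hj')
      have hne' : j' ≠ j := Finset.ne_of_mem_erase hj'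
      exact ⟨hj'1, by omega, hj'd⟩
    have hq0 : (0 : ℤ) ≤ q := by positivity
    have hqt0 : (0 : ℤ) ≤ (q : ℤ) ^ t := by positivity
    calc (q : ℤ) ^ (t + 1) * aaS R (q ^ nmax) e
        = (q : ℤ) ^ t * ((q : ℤ) * aaS R (q ^ nmax) e) := by ring
      _ ≤ (q : ℤ) ^ t * ((q : ℤ) * aaS R (q ^ j) e) := by
          exact mul_le_mul_of_nonneg_left (mul_le_mul_of_nonneg_left h1 hq0) hqt0
      _ = (q : ℤ) ^ t * aaS R (q ^ (j - 1)) e := by rw [h2]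
      _ ≤ aaS R 1 e := h3

lemma key_ineq {q : ℕ} (hq : q.Prime) {R : Polynomial ℤ} (hR : ∀ j, 0 ≤ R.coeff j)
    (T : Finset ℕ) (hT : ∀ j ∈ T, 1 ≤ j ∧ Polynomial.cyclotomic (q ^ j) ℤ ∣ R) (e : ℕ) :
    (q : ℤ) ^ T.card * R.coeff e ≤ R.eval 1 := by
  have h1 := key_chain hq hR e T.card T (T.sup id) rfl
    (fun j hj => ⟨(hT j hj).1, Finset.le_sup (f := id) hj, (hT j hj).2⟩)
  have h2 : R.coeff e ≤ aaS R (q ^ (T.sup id)) e := coeff_le_aaS hR _ e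
  have h3 : aaS R 1 e = R.eval 1 := aaS_one R e
  have hq0 : (0 : ℤ) ≤ (q : ℤ) ^ T.card := by positivity
  calc (q : ℤ) ^ T.card * R.coeff e
      ≤ (q : ℤ) ^ T.card * aaS R (q ^ (T.sup id)) e := mul_le_mul_of_nonneg_left h2 hq0
    _ ≤ aaS R 1 e := h1
    _ = R.eval 1 := h3

lemma prod_cyclotomic_dvd {q : ℕ} (hq : q.Prime) (Z : Polynomial ℤ) (S : Finset ℕ)
    (hS : ∀ j ∈ S, Polynomial.cyclotomic (q ^ j) ℤ ∣ Z) :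
    (∏ j ∈ S, Polynomial.cyclotomic (q ^ j) ℤ) ∣ Z := by
  classical
  induction S using Finset.induction_on with
  | empty => simpa using one_dvd Z
  | @insert a s ha ih =>
    rw [Finset.prod_insert ha]
    have had := hS a (Finset.mem_insert_self a s)
    have hrec := ih (fun j hj => hS j (Finset.mem_insert_of_mem hj))
    have hprime : Prime (Polynomial.cyclotomic (q ^ a) ℤ) :=
      UniqueFactorizationMonoid.irreducible_iff_prime.mp
        (Polynomial.cyclotomic.irreducible (pow_pos hq.pos a))
    have hnd : ¬ (Polynomial.cyclotomic (q ^ a) ℤ ∣ ∏ j ∈ s, Polynomial.cyclotomic (q ^ j) ℤ) := by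
      intro hdvd
      obtain ⟨j, hjs, hjd⟩ := hprime.exists_mem_finset_dvd hdvd
      have hirr_j : Irreducible (Polynomial.cyclotomic (q ^ j) ℤ) :=
        Polynomial.cyclotomic.irreducible (pow_pos hq.pos j)
      have hassoc : Associated (Polynomial.cyclotomic (q ^ a) ℤ)
          (Polynomial.cyclotomic (q ^ j) ℤ) :=
        hprime.irreducible.associated_of_dvd hirr_j hjd
      have heq := Polynomial.eq_of_monic_of_associated
        (Polynomial.cyclotomic.monic _ ℤ) (Polynomial.cyclotomic.monic _ ℤ) hassoc
      have hpow : q ^ a = q ^ j := Polynomial.cyclotomic_injective heq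
      have : a = j := Nat.pow_right_injective hq.two_le hpow
      exact ha (this ▸ hjs)
    obtain ⟨w, hw⟩ := hrec
    rw [hw] at had
    rcases (Prime.dvd_mul hprime).mp had with h | h
    · exact absurd h hnd
    · obtain ⟨w2, hw2⟩ := h
      exact ⟨w2, by rw [hw, hw2]; ring⟩

lemma prod_cyclotomic_eval_one {q : ℕ} (hq : q.Prime) (S : Finset ℕ) (hS : ∀ j ∈ S, 1 ≤ j) :
    Polynomial.eval 1 (∏ j ∈ S, Polynomial.cyclotomic (q ^ j) ℤ) = (q : ℤ) ^ S.card := by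
  rw [Polynomial.eval_prod]
  have h1 : ∀ j ∈ S, Polynomial.eval 1 (Polynomial.cyclotomic (q ^ j) ℤ) = (q : ℤ) := by
    intro j hj
    haveI : Fact q.Prime := ⟨hq⟩
    obtain ⟨j', rfl⟩ : ∃ j', j = j' + 1 := ⟨j - 1, by have := hS j hj; omega⟩
    exact Polynomial.eval_one_cyclotomic_prime_pow _
  rw [Finset.prod_congr rfl h1, Finset.prod_const]

/-! ### Periodicity of perfect colourings -/

noncomputable def chi (f : ℤ → Bool) (n : ℤ) : ℤ := if f n then 1 else 0

def SatE (k : ℕ) (l : Fin k → ℕ) (b c : ℕ) (f : ℤ → Bool) : Prop :=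
  ∀ n : ℤ, (∑ i : Fin k, (chi f (n + l i) + chi f (n - l i)))
      + ((b : ℤ) + c - 2 * k) * chi f n = c

lemma satE_of_colouring {k b c : ℕ} {l : Fin k → ℕ} {f : ℤ → Bool}
    (hf : IsPerfectColouringInt k l b c f) : SatE k l b c f := by
  intro n
  cases hfn : f n with
  | false =>
    have h := hf.2 n hfn
    have h' : ((∑ i : Fin k, ((if f (n + (l i : ℤ)) = true then 1 else 0)
        + (if f (n - (l i : ℤ)) = true then 1 else 0)) : ℕ) : ℤ) = c := by exact_mod_cast h
    push_cast at h'
    have hchi : chi f n = 0 := by simp [chi, hfn]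
    rw [hchi, mul_zero, add_zero, ← h']
    exact Finset.sum_congr rfl (fun i _ => by simp [chi])
  | true =>
    have h := hf.1 n hfn
    have h' : ((∑ i : Fin k, ((if f (n + (l i : ℤ)) = false then 1 else 0)
        + (if f (n - (l i : ℤ)) = false then 1 else 0)) : ℕ) : ℤ) = b := by exact_mod_cast h
    push_cast at h'
    have hsum : (∑ i : Fin k, (chi f (n + l i) + chi f (n - l i)))
        = 2 * (k : ℤ) - (∑ i : Fin k, ((if f (n + (l i : ℤ)) = false then (1 : ℤ) else 0)
            + (if f (n - (l i : ℤ)) = false then (1 : ℤ) else 0))) := by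
      rw [eq_sub_iff_add_eq, ← Finset.sum_add_distrib]
      have hterm : ∀ i : Fin k, (chi f (n + l i) + chi f (n - l i))
          + ((if f (n + (l i : ℤ)) = false then (1 : ℤ) else 0)
            + (if f (n - (l i : ℤ)) = false then (1 : ℤ) else 0)) = 2 := by
        intro i
        have e1 : ∀ m : ℤ, chi f m + (if f m = false then (1 : ℤ) else 0) = 1 := by
          intro m; cases hm : f m <;> simp [chi, hm]
        linarith [e1 (n + (l i : ℤ)), e1 (n - (l i : ℤ))]
      rw [Finset.sum_congr rfl (fun i _ => hterm i), Finset.sum_const, Finset.card_univ,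
        Fintype.card_fin]
      push_cast
      ring
    rw [hsum, h']
    have hchi : chi f n = 1 := by simp [chi, hfn]
    rw [hchi]
    ring

lemma satE_shift {k b c : ℕ} {l : Fin k → ℕ} {f : ℤ → Bool} (hf : SatE k l b c f) (z : ℤ) :
    SatE k l b c (fun x => f (x + z)) := by
  intro n
  have h := hf (n + z)
  simp only [chi] at h ⊢
  have e1 : ∀ i : Fin k, n + z + (l i : ℤ) = n + (l i : ℤ) + z := fun i => by ring
  have e2 : ∀ i : Fin k, n + z - (l i : ℤ) = n - (l i : ℤ) + z := fun i => by ring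
  simp_rw [e1, e2] at h
  exact h

lemma chi_inj {f g : ℤ → Bool} {x y : ℤ} (h : chi f x = chi g y) : f x = g y := by
  cases hfa : f x <;> cases hga : g y <;> simp_all [chi]

lemma ext_forward {k b c : ℕ} {l : Fin k → ℕ} {f g : ℤ → Bool}
    (hf : SatE k l b c f) (hg : SatE k l b c g)
    {M : ℕ} (hM : 1 ≤ M) (hMsup : Finset.univ.sup l = M) (a : ℤ)
    (hw : ∀ x : ℤ, a ≤ x → x < a + 2 * M → f x = g x) :
    f (a + 2 * M) = g (a + 2 * M) := by
  classical
  have hex : ∃ i, l i = M := by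
    have hne : (Finset.univ : Finset (Fin k)).Nonempty := by
      by_contra h
      rw [Finset.not_nonempty_iff_eq_empty] at h
      rw [h, Finset.sup_empty] at hMsup
      simp at hMsup
      omega
    obtain ⟨i, _, hi⟩ := Finset.exists_mem_eq_sup Finset.univ hne l
    exact ⟨i, by rw [← hMsup, hi]⟩
  have h1 := hf (a + M)
  have h2 := hg (a + M)
  have hli : ∀ i : Fin k, l i ≤ M := fun i => hMsup ▸ Finset.le_sup (Finset.mem_univ i)
  set D : ℤ := chi f (a + 2 * M) - chi g (a + 2 * M) with hD
  have hc0 : chi f (a + M) = chi g (a + M) := by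
    rw [chi, chi, hw (a + M) (by omega) (by omega)]
  have hterm : ∀ i : Fin k,
      (chi f (a + M + l i) + chi f (a + M - l i))
        - (chi g (a + M + l i) + chi g (a + M - l i))
      = if l i = M then D else 0 := by
    intro i
    have hminus : chi f (a + M - l i) = chi g (a + M - l i) := by
      rw [chi, chi, hw _ (by have := hli i; omega) (by have := hli i; omega)]
    by_cases hi : l i = M
    · have harg : a + (M : ℤ) + M = a + 2 * M := by ring
      rw [if_pos hi, hminus, hi, harg, hD]
      ring
    · have hlt : l i < M := lt_of_le_of_ne (hli i) hi
      have hplus : chi f (a + M + l i) = chi g (a + M + l i) := by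
        rw [chi, chi, hw _ (by omega) (by omega)]
      rw [if_neg hi, hminus, hplus]
      ring
  have hsumeq : (∑ i : Fin k, ((chi f (a + M + l i) + chi f (a + M - l i))
      - (chi g (a + M + l i) + chi g (a + M - l i)))) = 0 := by
    rw [Finset.sum_sub_distrib]
    have h3 : ((b : ℤ) + c - 2 * k) * chi f (a + M)
        = ((b : ℤ) + c - 2 * k) * chi g (a + M) := by rw [hc0]
    linarith
  rw [Finset.sum_congr rfl (fun i _ => hterm i), Finset.sum_ite, Finset.sum_const,
    Finset.sum_const_zero, add_zero, nsmul_eq_mul] at hsumeq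
  obtain ⟨i0, hi0⟩ := hex
  have hcardpos : 0 < (Finset.univ.filter (fun i => l i = M)).card :=
    Finset.card_pos.mpr ⟨i0, Finset.mem_filter.mpr ⟨Finset.mem_univ _, hi0⟩⟩
  have hD0 : D = 0 := by
    rcases mul_eq_zero.mp hsumeq with h | h
    · exfalso
      have hne0 : ((Finset.univ.filter (fun i => l i = M)).card : ℤ) ≠ 0 := by
        exact_mod_cast hcardpos.ne'
      exact hne0 h
    · exact h
  refine chi_inj ?_
  rw [hD] at hD0
  linarith

lemma ext_backward {k b c : ℕ} {l : Fin k → ℕ} {f g : ℤ → Bool}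
    (hf : SatE k l b c f) (hg : SatE k l b c g)
    {M : ℕ} (hM : 1 ≤ M) (hMsup : Finset.univ.sup l = M) (a : ℤ)
    (hw : ∀ x : ℤ, a ≤ x → x < a + 2 * M → f x = g x) :
    f (a - 1) = g (a - 1) := by
  classical
  have hex : ∃ i, l i = M := by
    have hne : (Finset.univ : Finset (Fin k)).Nonempty := by
      by_contra h
      rw [Finset.not_nonempty_iff_eq_empty] at h
      rw [h, Finset.sup_empty] at hMsup
      simp at hMsup
      omega
    obtain ⟨i, _, hi⟩ := Finset.exists_mem_eq_sup Finset.univ hne l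
    exact ⟨i, by rw [← hMsup, hi]⟩
  have h1 := hf (a + M - 1)
  have h2 := hg (a + M - 1)
  have hli : ∀ i : Fin k, l i ≤ M := fun i => hMsup ▸ Finset.le_sup (Finset.mem_univ i)
  set D : ℤ := chi f (a - 1) - chi g (a - 1) with hD
  have hc0 : chi f (a + M - 1) = chi g (a + M - 1) := by
    rw [chi, chi, hw (a + M - 1) (by omega) (by omega)]
  have hterm : ∀ i : Fin k,
      (chi f (a + M - 1 + l i) + chi f (a + M - 1 - l i))
        - (chi g (a + M - 1 + l i) + chi g (a + M - 1 - l i))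
      = if l i = M then D else 0 := by
    intro i
    have hplus : chi f (a + M - 1 + l i) = chi g (a + M - 1 + l i) := by
      rw [chi, chi, hw _ (by have := hli i; omega) (by have := hli i; omega)]
    by_cases hi : l i = M
    · have harg : a + (M : ℤ) - 1 - M = a - 1 := by ring
      rw [if_pos hi, hplus, hi, harg, hD]
      ring
    · have hlt : l i < M := lt_of_le_of_ne (hli i) hi
      have hminus : chi f (a + M - 1 - l i) = chi g (a + M - 1 - l i) := by
        rw [chi, chi, hw _ (by omega) (by omega)]
      rw [if_neg hi, hminus, hplus]
      ring
  have hsumeq : (∑ i : Fin k, ((chi f (a + M - 1 + l i) + chi f (a + M - 1 - l i))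
      - (chi g (a + M - 1 + l i) + chi g (a + M - 1 - l i)))) = 0 := by
    rw [Finset.sum_sub_distrib]
    have h3 : ((b : ℤ) + c - 2 * k) * chi f (a + M - 1)
        = ((b : ℤ) + c - 2 * k) * chi g (a + M - 1) := by rw [hc0]
    linarith
  rw [Finset.sum_congr rfl (fun i _ => hterm i), Finset.sum_ite, Finset.sum_const,
    Finset.sum_const_zero, add_zero, nsmul_eq_mul] at hsumeq
  obtain ⟨i0, hi0⟩ := hex
  have hcardpos : 0 < (Finset.univ.filter (fun i => l i = M)).card :=
    Finset.card_pos.mpr ⟨i0, Finset.mem_filter.mpr ⟨Finset.mem_univ _, hi0⟩⟩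
  have hD0 : D = 0 := by
    rcases mul_eq_zero.mp hsumeq with h | h
    · exfalso
      have hne0 : ((Finset.univ.filter (fun i => l i = M)).card : ℤ) ≠ 0 := by
        exact_mod_cast hcardpos.ne'
      exact hne0 h
    · exact h
  refine chi_inj ?_
  rw [hD] at hD0
  linarith

lemma uniq_of_window {k b c : ℕ} {l : Fin k → ℕ} {f g : ℤ → Bool}
    (hf : SatE k l b c f) (hg : SatE k l b c g)
    {M : ℕ} (hM : 1 ≤ M) (hMsup : Finset.univ.sup l = M) (a₀ : ℤ)
    (hw : ∀ x : ℤ, a₀ ≤ x → x < a₀ + 2 * M → f x = g x) : ∀ x : ℤ, f x = g x := by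
  have main : ∀ d : ℕ, ∀ x : ℤ, a₀ - d ≤ x → x < a₀ + 2 * M + d → f x = g x := by
    intro d
    induction d with
    | zero => intro x hx1 hx2; exact hw x (by omega) (by omega)
    | succ d ih =>
      intro x hx1 hx2
      by_cases hcase : a₀ - d ≤ x ∧ x < a₀ + 2 * M + d
      · exact ih x hcase.1 hcase.2
      · have hx : x = a₀ - (d + 1) ∨ x = a₀ + 2 * M + d := by omega
        rcases hx with rfl | rfl
        · have hb := ext_backward hf hg hM hMsup (a₀ - d)
            (fun y hy1 hy2 => ih y (by omega) (by omega))
          have harg : a₀ - ((d : ℤ) + 1) = a₀ - d - 1 := by ring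
          rw [show a₀ - ((d : ℤ) + 1) = a₀ - (d : ℤ) - 1 by ring]
          exact hb
        · have hfwd := ext_forward hf hg hM hMsup (a₀ + d)
            (fun y hy1 hy2 => ih y (by omega) (by omega))
          rw [show a₀ + 2 * (M : ℤ) + (d : ℤ) = a₀ + (d : ℤ) + 2 * M by ring]
          exact hfwd
  intro x
  rcases le_or_gt a₀ x with h | h
  · exact main (x - a₀).toNat x (by omega) (by omega)
  · exact main (a₀ - x).toNat x (by omega) (by omega)

lemma exists_period {k b c : ℕ} {l : Fin k → ℕ} {f : ℤ → Bool} (hf : SatE k l b c f)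
    {M : ℕ} (hM : 1 ≤ M) (hMsup : Finset.univ.sup l = M) :
    ∃ P : ℕ, 0 < P ∧ ∀ x : ℤ, f (x + P) = f x := by
  obtain ⟨n1, n2, hne, heq⟩ := Finite.exists_ne_map_eq_of_infinite
    (fun (n : ℕ) (i : Fin (2 * M)) => f ((n : ℤ) + (i : ℕ)))
  wlog hlt : n1 < n2 generalizing n1 n2
  · exact this n2 n1 hne.symm heq.symm (by omega)
  set P := n2 - n1 with hP
  have hPpos : 0 < P := by omega
  have hg : SatE k l b c (fun x => f (x + P)) := satE_shift hf P
  have hwin : ∀ x : ℤ, (n1 : ℤ) ≤ x → x < (n1 : ℤ) + 2 * M → f x = f (x + P) := by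
    intro x hx1 hx2
    obtain ⟨j, hjlt, rfl⟩ : ∃ j : ℕ, j < 2 * M ∧ x = (n1 : ℤ) + j :=
      ⟨(x - n1).toNat, by omega, by omega⟩
    have h1 := congrFun heq ⟨j, hjlt⟩
    simp only at h1
    have harg : ((n1 : ℤ) + j) + P = (n2 : ℤ) + j := by
      have : (P : ℤ) = (n2 : ℤ) - n1 := by rw [hP]; push_cast [Nat.cast_sub hlt.le]; ring
      rw [this]; ring
    rw [harg]
    exact h1
  have huniq := uniq_of_window hf hg hM hMsup (n1 : ℤ) hwin
  exact ⟨P, hPpos, fun x => (huniq x).symm⟩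

lemma periodic_all {f : ℤ → Bool} {P : ℕ} (hper : ∀ x : ℤ, f (x + P) = f x) :
    ∀ (x : ℤ) (z : ℤ), f (x + z * P) = f x := by
  intro x z
  induction z using Int.induction_on with
  | zero => simp
  | succ n ih =>
    have harg : x + ((n : ℤ) + 1) * P = (x + n * P) + P := by ring
    rw [harg, hper, ih]
  | pred n ih =>
    have hstep := hper (x + (-(n : ℤ) - 1) * P)
    have harg : (x + (-(n : ℤ) - 1) * P) + P = x + (-(n : ℤ)) * P := by ring
    rw [harg] at hstep
    rw [hstep] at ih
    exact ih

lemma f_eq_val {f : ℤ → Bool} {P : ℕ} [NeZero P] (hper : ∀ x : ℤ, f (x + P) = f x) (m : ℤ) :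
    f m = f (((m : ZMod P).val : ℤ)) := by
  have h1 : ((((m : ZMod P).val : ℤ)) : ZMod P) = (m : ZMod P) := by
    rw [Int.cast_natCast]
    exact ZMod.natCast_rightInverse (m : ZMod P)
  have h3 : ((m - ((m : ZMod P).val : ℤ) : ℤ) : ZMod P) = 0 := by
    rw [Int.cast_sub, h1, sub_self]
  rw [ZMod.intCast_zmod_eq_zero_iff_dvd] at h3
  obtain ⟨z, hz⟩ := h3
  have hm : m = ((m : ZMod P).val : ℤ) + z * (P : ℤ) := by linear_combination hz
  conv_lhs => rw [hm]
  rw [periodic_all hper]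

/-! ### Transfer to `ZMod P` and the group-algebra identity -/

noncomputable def chiZ (f : ℤ → Bool) (P : ℕ) (g : ZMod P) : ℤ :=
  if f ((g.val : ℤ)) then 1 else 0

lemma satE_zmod {k b c : ℕ} {l : Fin k → ℕ} {f : ℤ → Bool} {P : ℕ} [NeZero P]
    (hf : SatE k l b c f) (hper : ∀ x : ℤ, f (x + P) = f x) (g : ZMod P) :
    (∑ i : Fin k, (chiZ f P (g + (l i : ZMod P)) + chiZ f P (g - (l i : ZMod P))))
      + ((b : ℤ) + c - 2 * k) * chiZ f P g = c := by
  have h := hf ((g.val : ℤ))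
  have key : ∀ m : ℤ, chi f m = chiZ f P ((m : ZMod P)) := by
    intro m
    rw [chi, chiZ, f_eq_val hper m]
  have hval : ((g.val : ℕ) : ZMod P) = g := ZMod.natCast_rightInverse g
  have e1 : ∀ i : Fin k, chi f ((g.val : ℤ) + (l i : ℤ)) = chiZ f P (g + (l i : ZMod P)) := by
    intro i
    rw [key]
    congr 1
    rw [Int.cast_add, Int.cast_natCast, Int.cast_natCast, hval]
  have e2 : ∀ i : Fin k, chi f ((g.val : ℤ) - (l i : ℤ)) = chiZ f P (g - (l i : ZMod P)) := by
    intro i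
    rw [key]
    congr 1
    rw [Int.cast_sub, Int.cast_natCast, Int.cast_natCast, hval]
  have e3 : chi f ((g.val : ℤ)) = chiZ f P g := by
    rw [key]
    congr 1
    rw [Int.cast_natCast, hval]
  rw [Finset.sum_congr rfl (fun i _ => by rw [e1 i, e2 i]), e3] at h
  exact h

lemma sum_identity {k b c : ℕ} {l : Fin k → ℕ} {f : ℤ → Bool} {P : ℕ} [NeZero P]
    (hf : SatE k l b c f) (hper : ∀ x : ℤ, f (x + P) = f x) :
    ((b : ℤ) + c) * (∑ g : ZMod P, chiZ f P g) = c * P := by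
  classical
  set s := ∑ g : ZMod P, chiZ f P g with hs
  have hshift : ∀ x : ZMod P, (∑ g : ZMod P, chiZ f P (g + x)) = s :=
    fun x => Fintype.sum_equiv (Equiv.addRight x) _ _ (fun g => rfl)
  have hshift2 : ∀ x : ZMod P, (∑ g : ZMod P, chiZ f P (g - x)) = s :=
    fun x => Fintype.sum_equiv (Equiv.subRight x) _ _ (fun g => rfl)
  have htot := Finset.sum_congr rfl
    (fun g (_ : g ∈ (Finset.univ : Finset (ZMod P))) => satE_zmod hf hper g)
  rw [Finset.sum_add_distrib, ← Finset.mul_sum, Finset.sum_comm] at htot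
  have hin : ∀ i : Fin k, (∑ g : ZMod P, (chiZ f P (g + (l i : ZMod P))
      + chiZ f P (g - (l i : ZMod P)))) = s + s := by
    intro i
    rw [Finset.sum_add_distrib, hshift, hshift2]
  rw [Finset.sum_congr rfl (fun i _ => hin i), Finset.sum_const, Finset.card_univ,
    Fintype.card_fin, Finset.sum_const, Finset.card_univ, ZMod.card, nsmul_eq_mul,
    nsmul_eq_mul] at htot
  linear_combination htot

lemma sum_range_zmod {P : ℕ} [NeZero P] {β : Type*} [AddCommMonoid β] (T : ZMod P → β) :
    (∑ a ∈ Finset.range P, T ((a : ZMod P))) = ∑ g : ZMod P, T g := by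
  classical
  refine Finset.sum_bij' (fun a _ => ((a : ZMod P))) (fun g _ => g.val) ?_ ?_ ?_ ?_ ?_
  · intro a _; exact Finset.mem_univ _
  · intro g _; exact Finset.mem_range.mpr (ZMod.val_lt g)
  · intro a ha; exact ZMod.val_cast_of_lt (Finset.mem_range.mp ha)
  · intro g _; exact ZMod.natCast_rightInverse g
  · intro a _; rfl

noncomputable def Qpoly (f : ℤ → Bool) (P : ℕ) : Polynomial ℤ :=
  ∑ a ∈ Finset.range P, Polynomial.C (chiZ f P ((a : ZMod P))) * Polynomial.X ^ a

lemma piH_Qpoly {f : ℤ → Bool} {P : ℕ} [NeZero P] :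
    piH P (Qpoly f P) = ∑ g : ZMod P, AddMonoidAlgebra.single g (chiZ f P g) := by
  rw [Qpoly, map_sum]
  have h1 : ∀ a ∈ Finset.range P,
      piH P (Polynomial.C (chiZ f P ((a : ZMod P))) * Polynomial.X ^ a)
        = AddMonoidAlgebra.single ((a : ZMod P)) (chiZ f P ((a : ZMod P))) := by
    intro a _
    rw [map_mul, piH_C, piH_X_pow, AddMonoidAlgebra.single_mul_single, zero_add, mul_one]
  rw [Finset.sum_congr rfl h1]
  exact sum_range_zmod (fun g => AddMonoidAlgebra.single g (chiZ f P g))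

lemma Qpoly_eval_one {f : ℤ → Bool} {P : ℕ} [NeZero P] :
    (Qpoly f P).eval 1 = ∑ g : ZMod P, chiZ f P g := by
  rw [Qpoly, Polynomial.eval_finset_sum]
  simp only [Polynomial.eval_mul, Polynomial.eval_C, Polynomial.eval_pow, Polynomial.eval_X,
    one_pow, mul_one]
  exact sum_range_zmod (fun g => chiZ f P g)

lemma piH_theta {P : ℕ} [NeZero P] :
    piH P (∑ a ∈ Finset.range P, (Polynomial.X : Polynomial ℤ) ^ a)
      = ∑ g : ZMod P, AddMonoidAlgebra.single g (1 : ℤ) := by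
  rw [map_sum]
  rw [Finset.sum_congr rfl (fun a _ => piH_X_pow P a)]
  exact sum_range_zmod (fun g => AddMonoidAlgebra.single g (1 : ℤ))

lemma sum_single_ite {P : ℕ} [NeZero P] (x : ZMod P) (C : ℤ) :
    (∑ g : ZMod P, AddMonoidAlgebra.single g (if x = g then C else 0))
      = AddMonoidAlgebra.single x C := by
  classical
  have h1 : ∀ g : ZMod P, AddMonoidAlgebra.single g (if x = g then C else 0)
      = if x = g then AddMonoidAlgebra.single g C else 0 := by
    intro g
    split_ifs <;> simp
  rw [Finset.sum_congr rfl (fun g _ => h1 g), Finset.sum_ite_eq, if_pos (Finset.mem_univ x)]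

lemma single_add' {P : ℕ} (g : ZMod P) (x y : ℤ) :
    AddMonoidAlgebra.single g (x + y)
      = AddMonoidAlgebra.single g x + AddMonoidAlgebra.single g y := AddMonoidAlgebra.single_add _ _ _

lemma single_sum' {ι : Type*} {P : ℕ} (s : Finset ι) (F : ι → ℤ) (g : ZMod P) :
    AddMonoidAlgebra.single g (∑ i ∈ s, F i)
      = ∑ i ∈ s, AddMonoidAlgebra.single g (F i) := by
  simp only [← AddMonoidAlgebra.ofCoeff_single, Finsupp.single_finset_sum, AddMonoidAlgebra.ofCoeff_sum]

noncomputable def uFun (k : ℕ) (l : Fin k → ℕ) (b c : ℕ) (P : ℕ) (g : ZMod P) : ℤ :=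
  (if ((Finset.univ.sup l : ℕ) : ZMod P) = g then ((b : ℤ) + c - 2 * k) else 0)
    + ∑ i : Fin k,
        ((if ((Finset.univ.sup l : ℕ) : ZMod P) + (l i : ZMod P) = g then 1 else 0)
          + (if ((Finset.univ.sup l : ℕ) : ZMod P) - (l i : ZMod P) = g then 1 else 0))

lemma piH_polyA {k b c : ℕ} {l : Fin k → ℕ} {P : ℕ} [NeZero P] :
    piH P (polyA k l b c) = ∑ g : ZMod P, AddMonoidAlgebra.single g (uFun k l b c P g) := by
  classical
  set M := Finset.univ.sup l with hM
  have hli : ∀ i : Fin k, l i ≤ M := fun i => Finset.le_sup (Finset.mem_univ i)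
  -- right-hand side reorganization
  have hRHS : (∑ g : ZMod P, AddMonoidAlgebra.single g (uFun k l b c P g))
      = AddMonoidAlgebra.single ((M : ZMod P)) ((b : ℤ) + c - 2 * k)
        + ∑ i : Fin k, (AddMonoidAlgebra.single ((M : ZMod P) + (l i : ZMod P)) (1 : ℤ)
            + AddMonoidAlgebra.single ((M : ZMod P) - (l i : ZMod P)) (1 : ℤ)) := by
    have hsplit : ∀ g : ZMod P, AddMonoidAlgebra.single g (uFun k l b c P g)
        = AddMonoidAlgebra.single g
            (if ((M : ℕ) : ZMod P) = g then ((b : ℤ) + c - 2 * k) else 0)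
          + ∑ i : Fin k,
              (AddMonoidAlgebra.single g
                  (if ((M : ℕ) : ZMod P) + (l i : ZMod P) = g then (1 : ℤ) else 0)
                + AddMonoidAlgebra.single g
                  (if ((M : ℕ) : ZMod P) - (l i : ZMod P) = g then (1 : ℤ) else 0)) := by
      intro g
      rw [uFun, single_add', single_sum']
      congr 1
      refine Finset.sum_congr rfl (fun i _ => ?_)
      rw [single_add']
    rw [Finset.sum_congr rfl (fun g _ => hsplit g), Finset.sum_add_distrib, sum_single_ite,
      Finset.sum_comm]
    congr 1
    refine Finset.sum_congr rfl (fun i _ => ?_)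
    rw [Finset.sum_add_distrib, sum_single_ite, sum_single_ite]
  rw [hRHS, polyA, map_add, map_mul, piH_C, piH_X_pow, map_sum,
    AddMonoidAlgebra.single_mul_single, zero_add, mul_one]
  congr 1
  refine Finset.sum_congr rfl (fun i _ => ?_)
  rw [map_add, piH_X_pow, piH_X_pow, Nat.cast_add, Nat.cast_sub (hli i)]

lemma GA_identity {k b c : ℕ} {l : Fin k → ℕ} {f : ℤ → Bool} {P : ℕ} [NeZero P]
    (hf : SatE k l b c f) (hper : ∀ x : ℤ, f (x + P) = f x) :
    piH P (polyA k l b c * Qpoly f P)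
      = piH P (Polynomial.C (c : ℤ) * Polynomial.X ^ (Finset.univ.sup l)
          * (∑ a ∈ Finset.range P, (Polynomial.X : Polynomial ℤ) ^ a)) := by
  classical
  set M := Finset.univ.sup l with hM
  rw [map_mul, piH_polyA, piH_Qpoly, conv_eq, map_mul, map_mul, piH_C, piH_X_pow, piH_theta,
    AddMonoidAlgebra.single_mul_single, zero_add, mul_one]
  have hRHS : (AddMonoidAlgebra.single ((M : ZMod P)) (c : ℤ))
      * (∑ g : ZMod P, AddMonoidAlgebra.single g (1 : ℤ))
      = ∑ g : ZMod P, AddMonoidAlgebra.single g (c : ℤ) := by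
    rw [Finset.mul_sum]
    have h1 : ∀ g : ZMod P,
        (AddMonoidAlgebra.single ((M : ZMod P)) (c : ℤ)) * AddMonoidAlgebra.single g (1 : ℤ)
          = AddMonoidAlgebra.single ((M : ZMod P) + g) (c : ℤ) := by
      intro g
      rw [AddMonoidAlgebra.single_mul_single, mul_one]
    rw [Finset.sum_congr rfl (fun g _ => h1 g)]
    exact Fintype.sum_equiv (Equiv.addLeft ((M : ZMod P))) _ _ (fun g => rfl)
  rw [hRHS]
  refine Finset.sum_congr rfl (fun g _ => ?_)
  congr 1
  -- pointwise identity : ∑ h, uFun h * chiZ (g - h) = c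
  have hexpand : (∑ h : ZMod P, uFun k l b c P h * chiZ f P (g - h))
      = ((b : ℤ) + c - 2 * k) * chiZ f P (g - (M : ZMod P))
        + ∑ i : Fin k, (chiZ f P (g - ((M : ZMod P) + (l i : ZMod P)))
            + chiZ f P (g - ((M : ZMod P) - (l i : ZMod P)))) := by
    have hsplit : ∀ h : ZMod P, uFun k l b c P h * chiZ f P (g - h)
        = (if ((M : ℕ) : ZMod P) = h then ((b : ℤ) + c - 2 * k) * chiZ f P (g - h) else 0)
          + ∑ i : Fin k,
              ((if ((M : ℕ) : ZMod P) + (l i : ZMod P) = h then chiZ f P (g - h) else 0)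
                + (if ((M : ℕ) : ZMod P) - (l i : ZMod P) = h then chiZ f P (g - h) else 0)) := by
      intro h
      rw [uFun, add_mul, Finset.sum_mul]
      congr 1
      · split_ifs <;> simp
      · refine Finset.sum_congr rfl (fun i _ => ?_)
        rw [add_mul]
        congr 1 <;> (split_ifs <;> simp)
    rw [Finset.sum_congr rfl (fun h _ => hsplit h), Finset.sum_add_distrib,
      Finset.sum_ite_eq, if_pos (Finset.mem_univ _), Finset.sum_comm]
    congr 1
    refine Finset.sum_congr rfl (fun i _ => ?_)
    rw [Finset.sum_add_distrib, Finset.sum_ite_eq, Finset.sum_ite_eq,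
      if_pos (Finset.mem_univ _), if_pos (Finset.mem_univ _)]
  rw [hexpand]
  have hEZ := satE_zmod hf hper (g - (M : ZMod P))
  have harg : ∀ i : Fin k,
      (chiZ f P (g - ((M : ZMod P) + (l i : ZMod P)))
          + chiZ f P (g - ((M : ZMod P) - (l i : ZMod P))))
        = (chiZ f P ((g - (M : ZMod P)) + (l i : ZMod P))
            + chiZ f P ((g - (M : ZMod P)) - (l i : ZMod P))) := by
    intro i
    rw [add_comm]
    congr 2 <;> ring
  rw [Finset.sum_congr rfl (fun i _ => harg i)]
  linarith [hEZ]

/-! ### Coefficients of `polyA` -/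

lemma polyA_eval_one (k : ℕ) (l : Fin k → ℕ) (b c : ℕ) :
    (polyA k l b c).eval 1 = (b : ℤ) + c := by
  rw [polyA]
  simp only [Polynomial.eval_add, Polynomial.eval_mul, Polynomial.eval_pow, Polynomial.eval_C,
    Polynomial.eval_X, Polynomial.eval_finset_sum, one_pow, mul_one]
  rw [Finset.sum_congr rfl (fun (i : Fin k) _ => (by norm_num : (1 : ℤ) + 1 = 2)),
    Finset.sum_const, Finset.card_univ, Fintype.card_fin, nsmul_eq_mul]
  ring

lemma polyA_coeff_nonneg {k b c : ℕ} {l : Fin k → ℕ} (h2k : 2 * (k : ℤ) ≤ (b : ℤ) + c)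
    (e : ℕ) : 0 ≤ (polyA k l b c).coeff e := by
  classical
  rw [polyA, Polynomial.coeff_add, Polynomial.coeff_C_mul, Polynomial.coeff_X_pow,
    Polynomial.finset_sum_coeff]
  apply add_nonneg
  · split_ifs <;> simp <;> linarith
  · apply Finset.sum_nonneg
    intro i _
    rw [Polynomial.coeff_add, Polynomial.coeff_X_pow, Polynomial.coeff_X_pow]
    split_ifs <;> norm_num

lemma polyA_coeff_sup (k : ℕ) (l : Fin k → ℕ) (b c : ℕ) :
    ((b : ℤ) + c - 2 * k) ≤ (polyA k l b c).coeff (Finset.univ.sup l) := by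
  classical
  rw [polyA, Polynomial.coeff_add, Polynomial.coeff_C_mul, Polynomial.coeff_X_pow,
    if_pos rfl, mul_one, Polynomial.finset_sum_coeff]
  have h0 : (0 : ℤ) ≤ ∑ i : Fin k, (Polynomial.X ^ (Finset.univ.sup l + l i)
      + Polynomial.X ^ (Finset.univ.sup l - l i) : Polynomial ℤ).coeff (Finset.univ.sup l) := by
    apply Finset.sum_nonneg
    intro i _
    rw [Polynomial.coeff_add, Polynomial.coeff_X_pow, Polynomial.coeff_X_pow]
    split_ifs <;> norm_num
  linarith

end PCAux

/-- If some infinite circulant graph with `k` distances has a perfect 2-colouring with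
parameters `(b,c)`, then `b + c ≤ 2k + (b+c)/q^t` for every prime `q` and positive
integer `t` with `q^t ∣ (b+c)/gcd(b,c)`. -/
theorem stmt2 (k : ℕ) (hk : 1 ≤ k) (b c : ℕ) (hb : 0 < b) (hc : 0 < c)
    (l : Fin k → ℕ) (f : ℤ → Bool) (hf : IsPerfectColouringInt k l b c f)
    (q t : ℕ) (hq : q.Prime) (ht : 0 < t) (hdvd : q ^ t ∣ (b + c) / Nat.gcd b c) :
    b + c ≤ 2 * k + (b + c) / q ^ t := by
  classical
  by_cases hbc : b + c ≤ 2 * k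
  · exact hbc.trans (Nat.le_add_right _ _)
  push_neg at hbc
  have hsat := PCAux.satE_of_colouring hf
  set M := Finset.univ.sup l with hM
  -- a black vertex exists
  have hblack : ∃ n : ℤ, f n = true := by
    by_contra hno
    push_neg at hno
    have hallz : ∀ m : ℤ, PCAux.chi f m = 0 := by
      intro m
      have : f m = false := by
        cases hfm : f m
        · rfl
        · exact absurd hfm (hno m)
      simp [PCAux.chi, this]
    have h := hsat 0
    rw [Finset.sum_congr rfl
      (fun (i : Fin k) _ => by rw [hallz, hallz, add_zero]), Finset.sum_const_zero, hallz,
      mul_zero, add_zero] at h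
    have : c = 0 := by exact_mod_cast h.symm
    omega
  -- M ≥ 1
  have hM1 : 1 ≤ M := by
    by_contra hM0
    push_neg at hM0
    have hl0 : ∀ i : Fin k, l i = 0 := by
      intro i
      have := Finset.le_sup (f := l) (Finset.mem_univ i)
      omega
    obtain ⟨n0, hn0⟩ := hblack
    have h := hsat n0
    have hchi1 : PCAux.chi f n0 = 1 := by simp [PCAux.chi, hn0]
    have hterm : ∀ i : Fin k, PCAux.chi f (n0 + (l i : ℤ)) + PCAux.chi f (n0 - (l i : ℤ)) = 2 := by
      intro i
      rw [hl0 i]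
      norm_num [hchi1]
    rw [Finset.sum_congr rfl (fun i _ => hterm i), Finset.sum_const, Finset.card_univ,
      Fintype.card_fin, nsmul_eq_mul, hchi1, mul_one] at h
    have hbz : (b : ℤ) = 0 := by linarith
    have : b = 0 := by exact_mod_cast hbz
    omega
  -- periodicity
  obtain ⟨P, hPpos, hper⟩ := PCAux.exists_period hsat hM1 hM.symm
  haveI : NeZero P := ⟨hPpos.ne'⟩
  -- counting
  set s : ℤ := ∑ g : ZMod P, PCAux.chiZ f P g with hs
  set sN : ℕ := (Finset.univ.filter (fun g : ZMod P => f ((g.val : ℤ)) = true)).card with hsN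
  have hssN : s = (sN : ℤ) := by
    rw [hs, hsN]
    rw [← Finset.sum_boole]
    rfl
  have hsum := PCAux.sum_identity hsat hper
  have hsumN : (b + c) * sN = c * P := by
    have h1 : (((b + c) * sN : ℕ) : ℤ) = ((c * P : ℕ) : ℤ) := by
      push_cast
      rw [← hssN]
      exact hsum
    exact_mod_cast h1
  -- gcd arithmetic
  set d := Nat.gcd b c with hd
  have hd0 : 0 < d := Nat.gcd_pos_of_pos_left _ hb
  set b' := b / d with hb'
  set c' := c / d with hc'
  have hbd : d * b' = b := Nat.mul_div_cancel' (Nat.gcd_dvd_left b c)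
  have hcd : d * c' = c := Nat.mul_div_cancel' (Nat.gcd_dvd_right b c)
  have hcop : Nat.Coprime b' c' := Nat.coprime_div_gcd_div_gcd hd0
  have hdivq : q ^ t ∣ b' + c' := by
    have h1 : (b + c) / d = b' + c' := by
      rw [← hbd, ← hcd, ← Nat.mul_add, Nat.mul_div_cancel_left _ hd0]
    rwa [h1] at hdvd
  have hqc' : ¬ q ∣ c' := by
    intro hqc
    have hq1 : q ∣ b' + c' := dvd_trans (dvd_pow_self q ht.ne') hdivq
    have hqb : q ∣ b' := by
      have h2 := Nat.dvd_sub hq1 hqc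
      simpa using h2
    have h3 : q ∣ Nat.gcd b' c' := Nat.dvd_gcd hqb hqc
    rw [hcop] at h3
    have := Nat.le_of_dvd one_pos h3
    have := hq.two_le
    omega
  have hsplit : (b' + c') * sN = c' * P := by
    have h1 : d * ((b' + c') * sN) = d * (c' * P) := by
      calc d * ((b' + c') * sN) = (d * b' + d * c') * sN := by ring
        _ = (b + c) * sN := by rw [hbd, hcd]
        _ = c * P := hsumN
        _ = d * (c' * P) := by rw [← hcd]; ring
    exact Nat.eq_of_mul_eq_mul_left hd0 h1
  have hcopq : Nat.Coprime q c' := (Nat.Prime.coprime_iff_not_dvd hq).mpr hqc'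
  have hqtP : q ^ t ∣ P := by
    have h1 : q ^ t ∣ c' * P := by
      have h2 := dvd_mul_right (b' + c') sN
      rw [hsplit] at h2
      exact hdivq.trans h2
    exact (hcopq.pow_left t).dvd_of_dvd_mul_left h1
  set v := P.factorization q with hv
  have hfact : ∀ m : ℕ, q ^ m ∣ P ↔ m ≤ v := fun m =>
    Nat.Prime.pow_dvd_iff_le_factorization hq hPpos.ne'
  have htv : t ≤ v := (hfact t).mp hqtP
  -- the group algebra identity and divisibility dichotomy
  set A := polyA k l b c with hA
  set Q := PCAux.Qpoly f P with hQ
  set Θ := ∑ a ∈ Finset.range P, (Polynomial.X : Polynomial ℤ) ^ a with hΘ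
  have hGA := PCAux.GA_identity hsat hper
  have hker : PCAux.piH P (A * Q - Polynomial.C (c : ℤ) * Polynomial.X ^ M * Θ) = 0 := by
    rw [map_sub, hGA, sub_self]
  obtain ⟨W, hW⟩ := PCAux.piH_zero_dvd hPpos hker
  have hdich : ∀ j, 1 ≤ j → j ≤ v →
      Polynomial.cyclotomic (q ^ j) ℤ ∣ A ∨ Polynomial.cyclotomic (q ^ j) ℤ ∣ Q := by
    intro j hj1 hjv
    have hqjP : q ^ j ∣ P := (hfact j).mpr hjv
    have hprime : Prime (Polynomial.cyclotomic (q ^ j) ℤ) :=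
      UniqueFactorizationMonoid.irreducible_iff_prime.mp
        (Polynomial.cyclotomic.irreducible (pow_pos hq.pos j))
    have hXP : Polynomial.cyclotomic (q ^ j) ℤ ∣ (Polynomial.X ^ P - 1 : Polynomial ℤ) := by
      obtain ⟨m, rfl⟩ := hqjP
      have h1 : Polynomial.cyclotomic (q ^ j) ℤ ∣ (Polynomial.X ^ (q ^ j) - 1 : Polynomial ℤ) := by
        rw [← Polynomial.prod_cyclotomic_eq_X_pow_sub_one (pow_pos hq.pos j) ℤ]
        exact Finset.dvd_prod_of_mem _ (Nat.mem_divisors_self _ (pow_pos hq.pos j).ne')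
      refine h1.trans ?_
      have h2 := sub_dvd_pow_sub_pow ((Polynomial.X : Polynomial ℤ) ^ (q ^ j)) 1 m
      rwa [one_pow, ← pow_mul] at h2
    have hTh : Polynomial.cyclotomic (q ^ j) ℤ ∣ Θ := by
      rw [hΘ, ← Polynomial.prod_cyclotomic_eq_geom_sum hPpos ℤ]
      refine Finset.dvd_prod_of_mem _ ?_
      refine Finset.mem_erase.mpr ⟨?_, Nat.mem_divisors.mpr ⟨hqjP, hPpos.ne'⟩⟩
      have h3 : 2 ≤ q ^ j := by
        calc 2 ≤ q := hq.two_le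
          _ = q ^ 1 := (pow_one q).symm
          _ ≤ q ^ j := Nat.pow_le_pow_right hq.one_lt.le hj1
      intro hcontra
      rw [hcontra] at h3
      omega
    have hAQ : Polynomial.cyclotomic (q ^ j) ℤ ∣ A * Q := by
      have h1 : A * Q = Polynomial.C (c : ℤ) * Polynomial.X ^ M * Θ
          + (Polynomial.X ^ P - 1) * W := by
        rw [← hW]; ring
      rw [h1]
      exact dvd_add (hTh.mul_left _) (hXP.mul_right _)
    exact (Prime.dvd_mul hprime).mp hAQ
  set Sχ := (Finset.Icc 1 v).filter (fun j => Polynomial.cyclotomic (q ^ j) ℤ ∣ Q) with hSχ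
  set SA := (Finset.Icc 1 v).filter (fun j => Polynomial.cyclotomic (q ^ j) ℤ ∣ A) with hSA
  have hcover : Finset.Icc 1 v ⊆ Sχ ∪ SA := by
    intro j hj
    obtain ⟨hj1, hjv⟩ := Finset.mem_Icc.mp hj
    rcases hdich j hj1 hjv with h | h
    · exact Finset.mem_union_right _ (Finset.mem_filter.mpr ⟨hj, h⟩)
    · exact Finset.mem_union_left _ (Finset.mem_filter.mpr ⟨hj, h⟩)
  have hcards : v ≤ Sχ.card + SA.card := by
    calc v = (Finset.Icc 1 v).card := by rw [Nat.card_Icc]; omega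
      _ ≤ (Sχ ∪ SA).card := Finset.card_le_card hcover
      _ ≤ Sχ.card + SA.card := Finset.card_union_le _ _
  have hqs : q ^ Sχ.card ∣ sN := by
    have h1 : (∏ j ∈ Sχ, Polynomial.cyclotomic (q ^ j) ℤ) ∣ Q :=
      PCAux.prod_cyclotomic_dvd hq Q Sχ (fun j hj => (Finset.mem_filter.mp hj).2)
    obtain ⟨w, hw⟩ := h1
    have h2 := congrArg (Polynomial.eval 1) hw
    rw [Polynomial.eval_mul, PCAux.prod_cyclotomic_eval_one hq Sχ
      (fun j hj => (Finset.mem_Icc.mp (Finset.mem_filter.mp hj).1).1)] at h2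
    have h3 : (sN : ℤ) = (q : ℤ) ^ Sχ.card * w.eval 1 := by
      rw [← hssN, hs, ← PCAux.Qpoly_eval_one (f := f) (P := P)]
      exact h2
    have h4 : ((q ^ Sχ.card : ℕ) : ℤ) ∣ (sN : ℤ) := ⟨w.eval 1, by push_cast; exact h3⟩
    exact_mod_cast h4
  have hat : Sχ.card + t ≤ v := by
    have h1 : q ^ (Sχ.card + t) ∣ c' * P := by
      rw [pow_add]
      have h2 := mul_dvd_mul hqs hdivq
      rwa [mul_comm sN (b' + c'), hsplit] at h2
    have h2 : q ^ (Sχ.card + t) ∣ P := (hcopq.pow_left _).dvd_of_dvd_mul_left h1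
    exact (hfact _).mp h2
  have hSAcard : t ≤ SA.card := by omega
  obtain ⟨T, hTsub, hTcard⟩ := Finset.exists_subset_card_eq hSAcard
  have hAnn : ∀ j, 0 ≤ A.coeff j := by
    intro j
    exact PCAux.polyA_coeff_nonneg (by push_cast; omega) j
  have hkey := PCAux.key_ineq hq hAnn T
    (fun j hj => ⟨(Finset.mem_Icc.mp (Finset.mem_filter.mp (hTsub hj)).1).1,
      (Finset.mem_filter.mp (hTsub hj)).2⟩) M
  rw [hTcard] at hkey
  have hcoeff := PCAux.polyA_coeff_sup k l b c
  have heval : A.eval 1 = (b : ℤ) + c := PCAux.polyA_eval_one k l b c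
  have h5 : (q : ℤ) ^ t * ((b : ℤ) + c - 2 * k) ≤ (b : ℤ) + c := by
    calc (q : ℤ) ^ t * ((b : ℤ) + c - 2 * k)
        ≤ (q : ℤ) ^ t * A.coeff M := by
          apply mul_le_mul_of_nonneg_left _ (by positivity)
          rw [hA, hM]
          exact hcoeff
      _ ≤ A.eval 1 := hkey
      _ = (b : ℤ) + c := heval
  have h6 : q ^ t * (b + c - 2 * k) ≤ b + c := by
    have h7 : ((q ^ t * (b + c - 2 * k) : ℕ) : ℤ) ≤ ((b + c : ℕ) : ℤ) := by
      push_cast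
      have hcast : ((b + c - 2 * k : ℕ) : ℤ) = (b : ℤ) + c - 2 * k := by push_cast; omega
      rw [hcast]
      exact h5
    exact_mod_cast h7
  have h8 : b + c - 2 * k ≤ (b + c) / q ^ t := by
    rw [Nat.le_div_iff_mul_le (pow_pos hq.pos t), mul_comm]
    exact h6
  calc b + c = 2 * k + (b + c - 2 * k) := by omega
    _ ≤ 2 * k + (b + c) / q ^ t := Nat.add_le_add_left h8 _
end

section
/- For all nonnegative integers l_1, l_2, the infinite circulant graph C_∞(l_1,l_2) with 2 distances has no perfect 2-colouring with parameters (4,3). -/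
open Polynomial

open scoped Classical

/-- Local rules extracted from a perfect `(4,3)`-colouring of `C_∞(a,b)`:
every black vertex has all four neighbours white, and every white vertex has
exactly three black neighbours (counted with multiplicity). -/
def Rules43 (a b : ℤ) (f : ℤ → Bool) : Prop :=
  (∀ n : ℤ, f n = true → f (n+a) = false ∧ f (n-a) = false ∧ f (n+b) = false ∧ f (n-b) = false) ∧
  (∀ n : ℤ, f n = false →
    ((if f (n+a) = true then 1 else 0) + (if f (n-a) = true then 1 else 0)
      + (if f (n+b) = true then 1 else 0) + (if f (n-b) = true then 1 else 0) : ℕ) = 3)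

theorem rules43_swap {a b : ℤ} {f : ℤ → Bool} (R : Rules43 a b f) : Rules43 b a f := by
  obtain ⟨hB, hW⟩ := R
  refine ⟨fun n hn => ?_, fun n hn => ?_⟩
  · obtain ⟨p, q, r, s⟩ := hB n hn; exact ⟨r, s, p, q⟩
  · have h := hW n hn; omega

theorem rules43_neg_right {a b : ℤ} {f : ℤ → Bool} (R : Rules43 a b f) : Rules43 a (-b) f := by
  obtain ⟨hB, hW⟩ := R
  refine ⟨fun n hn => ?_, fun n hn => ?_⟩
  · obtain ⟨p, q, r, s⟩ := hB n hn
    refine ⟨p, q, ?_, ?_⟩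
    · rw [← sub_eq_add_neg]; exact s
    · rw [sub_neg_eq_add]; exact r
  · have h := hW n hn
    rw [show n + -b = n - b from (sub_eq_add_neg n b).symm, sub_neg_eq_add]
    omega

theorem rules43_neg_both {a b : ℤ} {f : ℤ → Bool} (R : Rules43 a b f) : Rules43 (-a) (-b) f :=
  rules43_swap (rules43_neg_right (rules43_swap (rules43_neg_right R)))

/-- Two corners over the same side of a black vertex cannot both be black. -/
theorem rules43_L1 {a b : ℤ} {f : ℤ → Bool} (R : Rules43 a b f) (n : ℤ) (hn : f n = true)
    (hq : f (n + a + b) = true) (hr : f (n - a + b) = true) : False := by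
  have hnb : f (n + b) = false := (R.1 n hn).2.2.1
  have h1 := R.2 (n + b) hnb
  rw [show n + b + a = n + a + b from by ring, show n + b - a = n - a + b from by ring,
    show n + b - b = n from by ring, hq, hr, hn] at h1
  have hbb : f (n + b + b) = false := by
    cases hx : f (n + b + b)
    · rfl
    · rw [hx] at h1; norm_num at h1
  have habb : f (n + a + b + b) = false := (R.1 (n + a + b) hq).2.2.1
  have h2 := R.2 (n + b + b) hbb
  rw [show n + b + b + a = n + a + b + b from by ring,
    show n + b + b - b = n + b from by ring, habb, hnb] at h2
  cases hx : f (n + b + b - a) <;> cases hy : f (n + b + b + b) <;>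
    rw [hx, hy] at h2 <;> norm_num at h2

/-- No side of a black vertex can have both corners white. -/
theorem rules43_L0 {a b : ℤ} {f : ℤ → Bool} (R : Rules43 a b f) (n : ℤ) (hn : f n = true)
    (hq : f (n + a + b) = false) (hr : f (n + a - b) = false) : False := by
  have hna : f (n + a) = false := (R.1 n hn).1
  have h1 := R.2 (n + a) hna
  rw [show n + a - a = n from by ring, hn, hq, hr] at h1
  cases hx : f (n + a + a) <;> rw [hx] at h1 <;> norm_num at h1

/-- The remaining diagonal configuration is impossible as well. -/
theorem rules43_L2 {a b : ℤ} {f : ℤ → Bool} (R : Rules43 a b f) (n : ℤ) (hn : f n = true)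
    (hq : f (n + a + b) = true) (hr : f (n + a - b) = false) : False := by
  have hna : f (n + a) = false := (R.1 n hn).1
  have h1 := R.2 (n + a) hna
  rw [show n + a - a = n from by ring, hn, hq, hr] at h1
  have h2a : f (n + a + a) = true := by
    cases hx : f (n + a + a)
    · rw [hx] at h1; norm_num at h1
    · rfl
  refine rules43_L1 (rules43_neg_both R) (n + a + b) hq ?_ ?_
  · rw [show n + a + b + -a + -b = n from by ring]; exact hn
  · rw [show n + a + b - -a + -b = n + a + a from by ring]; exact h2a

/-- The local rules are inconsistent with the existence of a black vertex. -/
theorem rules43_false (a b : ℤ) (f : ℤ → Bool) (R : Rules43 a b f) (n : ℤ)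
    (hn : f n = true) : False := by
  cases hc1 : f (n + a + b) <;> cases hc2 : f (n + a - b)
  · exact rules43_L0 R n hn hc1 hc2
  · refine rules43_L2 (rules43_neg_right R) n hn ?_ ?_
    · rw [show n + a + -b = n + a - b from by ring]; exact hc2
    · rw [show n + a - -b = n + a + b from by ring]; exact hc1
  · exact rules43_L2 R n hn hc1 hc2
  · refine rules43_L1 (rules43_swap R) n hn ?_ ?_
    · rw [show n + b + a = n + a + b from by ring]; exact hc1
    · rw [show n - b + a = n + a - b from by ring]; exact hc2

/-- No infinite circulant graph with 2 distances has a perfect 2-colouring with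
parameters `(4,3)`. -/
theorem stmt3 (l : Fin 2 → ℕ) :
    ¬ ∃ f : ℤ → Bool, IsPerfectColouringInt 2 l 4 3 f := by
  rintro ⟨f, hb, hw⟩
  have R : Rules43 (l 0 : ℤ) (l 1 : ℤ) f := by
    constructor
    · intro n hn
      have h := hb n hn
      rw [Fin.sum_univ_two] at h
      cases h0 : f (n + (l 0 : ℤ)) <;> cases h1 : f (n - (l 0 : ℤ)) <;>
        cases h2 : f (n + (l 1 : ℤ)) <;> cases h3 : f (n - (l 1 : ℤ)) <;>
        rw [h0, h1, h2, h3] at h <;> norm_num at h <;> exact ⟨rfl, rfl, rfl, rfl⟩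
    · intro n hn
      have h := hw n hn
      rw [Fin.sum_univ_two] at h
      omega
  have hex : ∃ n : ℤ, f n = true := by
    by_contra h
    push_neg at h
    simp only [Bool.not_eq_true] at h
    have h3 := hw 0 (h 0)
    rw [Fin.sum_univ_two] at h3
    simp [h] at h3
  obtain ⟨n0, hn0⟩ := hex
  exact rules43_false _ _ f R n0 hn0
end

section
/- For all nonnegative integers l_1, l_2, l_3, l_4 and for every pair (b,c) ∈ {(6,5), (7,4), (8,3), (7,5), (7,6), (8,5), (8,6), (8,7)}, the infinite circulant graph C_∞(l_1,l_2,l_3,l_4) with 4 distances has no perfect 2-colouring with parameters (b,c). -/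
open Polynomial

open scoped Classical

lemma pc_master (l : Fin 4 → ℕ) (b c : ℕ) (f : ℤ → Bool)
    (hf : IsPerfectColouringInt 4 l b c f) (n : ℤ) :
    (∑ i : Fin 4, ((if f (n + (l i : ℤ)) then (1:ℤ) else 0)
        + (if f (n - (l i : ℤ)) then (1:ℤ) else 0)))
      = (c : ℤ) - ((b:ℤ) + (c:ℤ) - 8) * (if f n then (1:ℤ) else 0) := by
  have keyF : ∀ x : ℤ, (if f x = false then (1:ℤ) else 0) = 1 - (if f x then 1 else 0) := by
    intro x; cases f x <;> simp
  have keyT : ∀ x : ℤ, (if f x = true then (1:ℤ) else 0) = (if f x then 1 else 0) := by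
    intro x; cases f x <;> simp
  cases h : f n with
  | true =>
    have h1 := hf.1 n h
    have h2 : (∑ i : Fin 4, ((if f (n + (l i : ℤ)) = false then (1:ℤ) else 0)
        + (if f (n - (l i : ℤ)) = false then (1:ℤ) else 0))) = (b : ℤ) := by
      exact_mod_cast congrArg (Nat.cast : ℕ → ℤ) h1
    simp only [keyF] at h2
    rw [Finset.sum_add_distrib] at h2 ⊢
    rw [Finset.sum_sub_distrib, Finset.sum_sub_distrib] at h2
    simp only [Finset.sum_const, Finset.card_univ, Fintype.card_fin, nsmul_eq_mul] at h2
    simp only [h, if_true]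
    push_cast at h2 ⊢
    linarith
  | false =>
    have h1 := hf.2 n h
    have h2 : (∑ i : Fin 4, ((if f (n + (l i : ℤ)) = true then (1:ℤ) else 0)
        + (if f (n - (l i : ℤ)) = true then (1:ℤ) else 0))) = (c : ℤ) := by
      exact_mod_cast congrArg (Nat.cast : ℕ → ℤ) h1
    rw [h2, if_neg (by simp)]
    ring


lemma pc_periodic (l : Fin 4 → ℕ) (s c : ℤ) (f : ℤ → Bool)
    (G : ℤ → ℤ) (hGdef : ∀ n, G n = if f n then 1 else 0)
    (hmaster : ∀ n : ℤ, (∑ i : Fin 4, (G (n + (l i : ℤ)) + G (n - (l i : ℤ)))) = c - s * G n)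
    (hM : 1 ≤ Finset.univ.sup l) :
    ∃ P : ℕ, 1 ≤ P ∧ ∀ n : ℤ, G (n + P) = G n := by
  classical
  set M := Finset.univ.sup l with hMdef
  obtain ⟨i0, -, hi0⟩ := Finset.exists_mem_eq_sup (Finset.univ : Finset (Fin 4))
    Finset.univ_nonempty l
  set Fl : Finset (Fin 4) := Finset.univ.filter (fun i => l i = M) with hFl
  set m : ℤ := (Fl.card : ℤ) with hmdef
  have hm1 : 1 ≤ m := by
    have : i0 ∈ Fl := by simp [hFl, hi0.symm, hMdef]
    have h2 : 1 ≤ Fl.card := Finset.card_pos.2 ⟨i0, this⟩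
    simp only [hmdef]
    exact_mod_cast h2
  have hm0 : m ≠ 0 := by linarith
  have hsplit : ∀ n : ℤ, m * (G (n + M) + G (n - M))
      + (∑ i ∈ Finset.univ.filter (fun i => ¬ l i = M), (G (n + (l i:ℤ)) + G (n - (l i:ℤ))))
      = c - s * G n := by
    intro n
    have h0 := hmaster n
    rw [← Finset.sum_filter_add_sum_filter_not Finset.univ (fun i => l i = M)] at h0
    have h1 : ∑ i ∈ Fl, (G (n + (l i:ℤ)) + G (n - (l i:ℤ)))
        = m * (G (n + M) + G (n - M)) := by
      rw [Finset.sum_congr rfl (fun i hi => by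
        rw [(Finset.mem_filter.1 hi).2] : ∀ i ∈ Fl, (G (n + (l i:ℤ)) + G (n - (l i:ℤ)))
          = (G (n + (M:ℤ)) + G (n - (M:ℤ))))]
      simp only [Finset.sum_const, nsmul_eq_mul, hmdef]
    rw [h1] at h0
    exact h0
  have hlim : ∀ i : Fin 4, ¬ l i = M → (l i : ℤ) < M := by
    intro i hi
    have := Finset.le_sup (f := l) (Finset.mem_univ i)
    rw [← hMdef] at this
    exact_mod_cast lt_of_le_of_ne this hi
  have FD : ∀ n n' : ℤ, (∀ d : ℤ, -(M:ℤ) ≤ d → d < M → G (n + d) = G (n' + d)) →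
      G (n + M) = G (n' + M) := by
    intro n n' hagree
    have e1 := hsplit n
    have e2 := hsplit n'
    have hGm : G (n - M) = G (n' - M) := by
      have := hagree (-(M:ℤ)) le_rfl (by omega)
      simpa [sub_eq_add_neg] using this
    have hG0 : G n = G n' := by
      have := hagree 0 (by omega) (by omega)
      simpa using this
    have hsum : (∑ i ∈ Finset.univ.filter (fun i => ¬ l i = M), (G (n + (l i:ℤ)) + G (n - (l i:ℤ))))
        = (∑ i ∈ Finset.univ.filter (fun i => ¬ l i = M), (G (n' + (l i:ℤ)) + G (n' - (l i:ℤ)))) := by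
      refine Finset.sum_congr rfl (fun i hi => ?_)
      have hlt := hlim i (Finset.mem_filter.1 hi).2
      have ha := hagree (l i) (by omega) hlt
      have hb := hagree (-(l i:ℤ)) (by omega) (by omega)
      rw [sub_eq_add_neg, sub_eq_add_neg, ha, hb]
    rw [mul_add] at e1 e2
    have hGm' : m * G (n - M) = m * G (n' - M) := by rw [hGm]
    have hG0' : s * G n = s * G n' := by rw [hG0]
    have : m * G (n + M) = m * G (n' + M) := by linarith
    exact mul_left_cancel₀ hm0 this
  have BD : ∀ n n' : ℤ, (∀ d : ℤ, -(M:ℤ) < d → d ≤ M → G (n + d) = G (n' + d)) →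
      G (n - M) = G (n' - M) := by
    intro n n' hagree
    have e1 := hsplit n
    have e2 := hsplit n'
    have hGm : G (n + M) = G (n' + M) := hagree M (by omega) le_rfl
    have hG0 : G n = G n' := by
      have := hagree 0 (by omega) (by omega)
      simpa using this
    have hsum : (∑ i ∈ Finset.univ.filter (fun i => ¬ l i = M), (G (n + (l i:ℤ)) + G (n - (l i:ℤ))))
        = (∑ i ∈ Finset.univ.filter (fun i => ¬ l i = M), (G (n' + (l i:ℤ)) + G (n' - (l i:ℤ)))) := by
      refine Finset.sum_congr rfl (fun i hi => ?_)
      have hlt := hlim i (Finset.mem_filter.1 hi).2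
      have ha := hagree (l i) (by omega) hlt.le
      have hb := hagree (-(l i:ℤ)) (by omega) (by omega)
      rw [sub_eq_add_neg, sub_eq_add_neg, ha, hb]
    rw [mul_add] at e1 e2
    have hGm' : m * G (n + M) = m * G (n' + M) := by rw [hGm]
    have hG0' : s * G n = s * G n' := by rw [hG0]
    have : m * G (n - M) = m * G (n' - M) := by linarith
    exact mul_left_cancel₀ hm0 this
  -- pigeonhole on windows
  obtain ⟨x, y, hxy, hw⟩ := Finite.exists_ne_map_eq_of_infinite
      (fun (n : ℕ) => fun (j : Fin (2*M+1)) => f ((n : ℤ) + (j : ℕ)))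
  wlog hlt : x < y generalizing x y
  · exact this y x hxy.symm hw.symm (by omega)
  refine ⟨y - x, by omega, ?_⟩
  set P : ℕ := y - x with hPdef
  have hPz : (P : ℤ) = (y : ℤ) - x := by omega
  have hbase : ∀ d : ℤ, 0 ≤ d → d < 2*M+1 → G ((x:ℤ) + d + P) = G ((x:ℤ) + d) := by
    intro d hd0 hd1
    have hj : d.toNat < 2*M+1 := by omega
    have hfd0 := congrFun hw ⟨d.toNat, hj⟩
    simp only [] at hfd0
    have h2 : ((x:ℤ) + d) = ((x : ℤ) + (d.toNat : ℕ)) := by omega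
    have h3 : ((y:ℤ) + d) = ((y : ℤ) + (d.toNat : ℕ)) := by omega
    have hfd : f ((x:ℤ) + d) = f ((y:ℤ) + d) := by rw [h2, h3]; exact hfd0
    have h4 : (x:ℤ) + d + P = (y:ℤ) + d := by omega
    rw [hGdef, hGdef, h4, hfd]
  have hall : ∀ k : ℤ, ∀ d : ℤ, 0 ≤ d → d < 2*M+1 →
      G ((x:ℤ) + k + d + P) = G ((x:ℤ) + k + d) := by
    intro k
    induction k using Int.induction_on with
    | zero => simpa using hbase
    | succ i ih =>
      intro d hd0 hd1
      by_cases hd : d < 2*M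
      · have := ih (d+1) (by omega) (by omega)
        rw [show (x:ℤ) + (i+1) + d + P = (x:ℤ) + i + (d+1) + P by ring,
          show (x:ℤ) + (i+1) + d = (x:ℤ) + i + (d+1) by ring]
        exact this
      · have hd2 : d = 2*M := by omega
        have key := FD ((x:ℤ) + (i+1) + M) ((x:ℤ) + (i+1) + M + P) ?_
        · rw [show (x:ℤ) + (i+1) + d + P = ((x:ℤ) + (i+1) + M + P) + M by rw [hd2]; push_cast; ring,
            show (x:ℤ) + (i+1) + d = ((x:ℤ) + (i+1) + M) + M by rw [hd2]; push_cast; ring]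
          exact key.symm
        · intro dd h1 h2
          have := ih ((M:ℤ) + 1 + dd) (by omega) (by omega)
          rw [show (x:ℤ) + (i+1) + M + dd = (x:ℤ) + i + ((M:ℤ)+1+dd) by ring,
            show (x:ℤ) + (i+1) + M + P + dd = (x:ℤ) + i + ((M:ℤ)+1+dd) + P by ring]
          exact this.symm
    | pred i ih =>
      intro d hd0 hd1
      by_cases hd : 1 ≤ d
      · have := ih (d-1) (by omega) (by omega)
        rw [show (x:ℤ) + (-(i:ℤ)-1) + d + P = (x:ℤ) + (-(i:ℤ)) + (d-1) + P by ring,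
          show (x:ℤ) + (-(i:ℤ)-1) + d = (x:ℤ) + (-(i:ℤ)) + (d-1) by ring]
        exact this
      · have hd2 : d = 0 := by omega
        have key := BD ((x:ℤ) + (-(i:ℤ)-1) + M) ((x:ℤ) + (-(i:ℤ)-1) + M + P) ?_
        · rw [show (x:ℤ) + (-(i:ℤ)-1) + d + P = ((x:ℤ) + (-(i:ℤ)-1) + M + P) - M by rw [hd2]; ring,
            show (x:ℤ) + (-(i:ℤ)-1) + d = ((x:ℤ) + (-(i:ℤ)-1) + M) - M by rw [hd2]; ring]
          exact key.symm
        · intro dd h1 h2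
          have := ih ((M:ℤ) - 1 + dd) (by omega) (by omega)
          rw [show (x:ℤ) + (-(i:ℤ)-1) + M + dd = (x:ℤ) + (-(i:ℤ)) + ((M:ℤ)-1+dd) by ring,
            show (x:ℤ) + (-(i:ℤ)-1) + M + P + dd = (x:ℤ) + (-(i:ℤ)) + ((M:ℤ)-1+dd) + P by ring]
          exact this.symm
  intro n
  have := hall (n - x) 0 le_rfl (by omega)
  rw [show (x:ℤ) + (n - x) + 0 + P = n + P by ring, show (x:ℤ) + (n - x) + 0 = n by ring] at this
  exact this


lemma pc_dvd (l : Fin 4 → ℕ) (b c : ℕ) (G : ℤ → ℤ) (P : ℕ) (hP : 1 ≤ P)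
    (hmaster : ∀ n : ℤ, (∑ i : Fin 4, (G (n + (l i : ℤ)) + G (n - (l i : ℤ))))
      = (c:ℤ) - ((b:ℤ)+(c:ℤ)-8) * G n)
    (hper : ∀ n : ℤ, G (n + P) = G n) :
    (X ^ P - 1 : ℤ[X]) ∣ polyA 4 l b c * (∑ a ∈ Finset.range P, C (G a) * X ^ a)
        - X ^ (Finset.univ.sup l) * (C (c:ℤ) * ∑ a ∈ Finset.range P, (X:ℤ[X]) ^ a) := by
  classical
  set M := Finset.univ.sup l with hMdef
  set sZ : ℤ := (b:ℤ) + (c:ℤ) - 8 with hsZ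
  set J : Ideal ℤ[X] := Ideal.span {(X:ℤ[X]) ^ P - 1} with hJ
  set π : ℤ[X] →+* (ℤ[X] ⧸ J) := Ideal.Quotient.mk J with hπ
  rw [← Ideal.mem_span_singleton (α := ℤ[X]), ← hJ, ← Ideal.Quotient.eq_zero_iff_mem]
  show π _ = 0
  rw [map_sub, sub_eq_zero]
  have hgen : π ((X:ℤ[X])^P - 1) = 0 := by
    rw [hπ, Ideal.Quotient.eq_zero_iff_mem, hJ]; exact Ideal.subset_span (Set.mem_singleton _)
  have hXP : (π X)^P = 1 := by
    rw [map_sub, map_pow, map_one, sub_eq_zero] at hgen; exact hgen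
  have hPP : P - 1 + 1 = P := Nat.succ_pred_eq_of_pos hP
  set xu : (ℤ[X] ⧸ J)ˣ := ⟨π X, (π X)^(P-1),
    by rw [← pow_succ', hPP]; exact hXP, by rw [← pow_succ, hPP]; exact hXP⟩ with hxu
  set ψ : ℤ → (ℤ[X] ⧸ J) := fun z => ((xu ^ z : (ℤ[X] ⧸ J)ˣ) : (ℤ[X] ⧸ J)) with hψ
  have hψadd : ∀ z w : ℤ, ψ (z + w) = ψ z * ψ w := by
    intro z w; rw [hψ]; simp only [zpow_add]; rfl
  have hψnat : ∀ n : ℕ, ψ (n:ℤ) = (π X) ^ n := by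
    intro n; rw [hψ]; simp only [zpow_natCast]; rw [Units.val_pow_eq_pow_val]
  have hψper : ∀ z : ℤ, ψ (z + P) = ψ z := by
    intro z
    have h1 : ψ ((P:ℕ):ℤ) = 1 := by rw [hψnat]; exact hXP
    rw [hψadd, h1, mul_one]
  have step : ∀ (h : ℤ → (ℤ[X] ⧸ J)), (∀ z, h (z + P) = h z) →
      (∑ a ∈ Finset.range P, h ((a:ℤ) + 1)) = ∑ a ∈ Finset.range P, h (a:ℤ) := by
    intro h hh
    have e1 := Finset.sum_range_succ' (fun n : ℕ => h (n:ℤ)) P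
    have e2 := Finset.sum_range_succ (fun n : ℕ => h (n:ℤ)) P
    have e4 : h ((P:ℕ):ℤ) = h 0 := by have := hh 0; simpa using this
    have e3 : (∑ a ∈ Finset.range P, h ((a:ℤ)+1)) = ∑ a ∈ Finset.range P, h (((a+1:ℕ)):ℤ) :=
      Finset.sum_congr rfl (fun a _ => by norm_num)
    rw [e3]
    have e5 : (∑ a ∈ Finset.range P, h (((a+1:ℕ)):ℤ)) + h ((0:ℕ):ℤ)
        = (∑ a ∈ Finset.range P, h (a:ℤ)) + h ((P:ℕ):ℤ) := by rw [← e1, e2]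
    rw [e4] at e5
    have : h ((0:ℕ):ℤ) = h 0 := by norm_num
    rw [this] at e5
    exact add_right_cancel e5
  have shift : ∀ (h : ℤ → (ℤ[X] ⧸ J)), (∀ z, h (z + P) = h z) → ∀ t : ℕ,
      (∑ a ∈ Finset.range P, h ((a:ℤ) + t)) = ∑ a ∈ Finset.range P, h (a:ℤ) := by
    intro h hh t
    induction t with
    | zero => simp
    | succ t ih =>
      have hh' : ∀ z, h ((z + P) + t) = h (z + t) := by
        intro z; rw [show z + (P:ℤ) + t = (z + t) + P by ring, hh]
      calc (∑ a ∈ Finset.range P, h ((a:ℤ) + (t+1:ℕ)))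
          = ∑ a ∈ Finset.range P, h (((a:ℤ) + 1) + t) := by
            refine Finset.sum_congr rfl (fun a _ => ?_)
            congr 1; push_cast; ring
        _ = ∑ a ∈ Finset.range P, h ((a:ℤ) + t) := step (fun z => h (z + t)) hh'
        _ = _ := ih
  set γ : ℤ →+* (ℤ[X] ⧸ J) := π.comp Polynomial.C with hγ
  set SB : (ℤ[X] ⧸ J) := ∑ a ∈ Finset.range P, γ (G a) * ψ (a:ℤ) with hSB
  set SD : (ℤ[X] ⧸ J) := ∑ a ∈ Finset.range P, ψ (a:ℤ) with hSD
  have hπB : π (∑ a ∈ Finset.range P, C (G a) * X ^ a) = SB := by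
    rw [map_sum]; exact Finset.sum_congr rfl (fun a _ => by rw [map_mul, map_pow, ← hψnat]; rfl)
  have hπD : π (∑ a ∈ Finset.range P, (X:ℤ[X]) ^ a) = SD := by
    rw [map_sum]; exact Finset.sum_congr rfl (fun a _ => by rw [map_pow, ← hψnat])
  have hle : ∀ i : Fin 4, l i ≤ M := fun i => Finset.le_sup (Finset.mem_univ i)
  have hπA : π (polyA 4 l b c) = ψ (M:ℤ) * (γ sZ + ∑ i : Fin 4, (ψ ((l i:ℕ):ℤ) + ψ (-((l i:ℕ):ℤ)))) := by
    rw [polyA, map_add, map_mul, map_pow, map_sum, mul_add, Finset.mul_sum]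
    congr 1
    · rw [hψnat]
      have harg : ((b:ℤ) + (c:ℤ) - 2 * ((4:ℕ):ℤ)) = sZ := by rw [hsZ]; push_cast; ring
      have : π (C ((b:ℤ) + (c:ℤ) - 2 * ((4:ℕ):ℤ))) = γ sZ := by rw [harg, hγ]; rfl
      rw [this, mul_comm]
    · refine Finset.sum_congr rfl (fun i _ => ?_)
      rw [map_add, map_pow, map_pow, mul_add]
      congr 1
      · rw [← hψnat, ← hψadd]; congr 1; try (push_cast; ring)
      · rw [← hψnat, ← hψadd]; congr 1
        try (have := hle i; omega)
  rw [map_mul, hπB, hπA, map_mul, map_mul, map_pow, hπD, ← hψnat, mul_assoc]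
  congr 1
  have key1 : ∀ li : ℕ, ψ (li:ℤ) * SB = ∑ a ∈ Finset.range P, γ (G ((a:ℤ) - li)) * ψ (a:ℤ) := by
    intro li
    have hh : ∀ z:ℤ, γ (G ((z + P) - li)) * ψ (z + P) = γ (G (z - li)) * ψ z := by
      intro z; rw [show z + (P:ℤ) - li = (z - li) + P by ring, hper, hψper]
    calc ψ (li:ℤ) * SB = ∑ a ∈ Finset.range P, γ (G (((a:ℤ) + li) - li)) * ψ ((a:ℤ) + li) := by
          rw [hSB, Finset.mul_sum]
          refine Finset.sum_congr rfl (fun a _ => ?_)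
          rw [show ((a:ℤ) + li - li) = (a:ℤ) by ring, hψadd]
          ring
      _ = _ := shift (fun z => γ (G (z - li)) * ψ z) hh li
  have key2 : ∀ li : ℕ, ψ (-(li:ℤ)) * SB = ∑ a ∈ Finset.range P, γ (G ((a:ℤ) + li)) * ψ (a:ℤ) := by
    intro li
    have hh : ∀ z:ℤ, γ (G (z + P)) * ψ ((z + P) - li) = γ (G z) * ψ (z - li) := by
      intro z; rw [hper, show z + (P:ℤ) - li = (z - li) + P by ring, hψper]
    have hs := shift (fun z => γ (G z) * ψ (z - li)) hh li
    calc ψ (-(li:ℤ)) * SB = ∑ a ∈ Finset.range P, γ (G (a:ℤ)) * ψ ((a:ℤ) - li) := by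
          rw [hSB, Finset.mul_sum]
          refine Finset.sum_congr rfl (fun a _ => ?_)
          rw [show ((a:ℤ) - li) = (a:ℤ) + (-(li:ℤ)) by ring, hψadd]
          ring
      _ = ∑ a ∈ Finset.range P, γ (G ((a:ℤ) + li)) * ψ ((a:ℤ) + li - li) := hs.symm
      _ = _ := by
          refine Finset.sum_congr rfl (fun a _ => ?_)
          rw [show ((a:ℤ) + li - li) = (a:ℤ) by ring]
  have key0 : γ sZ * SB = ∑ a ∈ Finset.range P, γ (sZ * G (a:ℤ)) * ψ (a:ℤ) := by
    rw [hSB, Finset.mul_sum]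
    exact Finset.sum_congr rfl (fun a _ => by rw [← mul_assoc, ← map_mul])
  calc (γ sZ + ∑ i : Fin 4, (ψ ((l i:ℕ):ℤ) + ψ (-((l i:ℕ):ℤ)))) * SB
      = γ sZ * SB + ∑ i : Fin 4, (ψ ((l i:ℕ):ℤ) * SB + ψ (-((l i:ℕ):ℤ)) * SB) := by
        rw [add_mul, Finset.sum_mul]
        congr 1
        exact Finset.sum_congr rfl (fun i _ => by rw [add_mul])
    _ = (∑ a ∈ Finset.range P, γ (sZ * G (a:ℤ)) * ψ (a:ℤ))
        + ∑ i : Fin 4, ((∑ a ∈ Finset.range P, γ (G ((a:ℤ) - l i)) * ψ (a:ℤ))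
          + (∑ a ∈ Finset.range P, γ (G ((a:ℤ) + l i)) * ψ (a:ℤ))) := by
        rw [key0]
        congr 1
        exact Finset.sum_congr rfl (fun i _ => by rw [key1, key2])
    _ = (∑ a ∈ Finset.range P, γ (sZ * G (a:ℤ)) * ψ (a:ℤ))
        + ∑ a ∈ Finset.range P, (∑ i : Fin 4, (γ (G ((a:ℤ) - l i)) + γ (G ((a:ℤ) + l i)))) * ψ (a:ℤ) := by
        congr 1
        calc ∑ i : Fin 4, ((∑ a ∈ Finset.range P, γ (G ((a:ℤ) - l i)) * ψ (a:ℤ))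
              + (∑ a ∈ Finset.range P, γ (G ((a:ℤ) + l i)) * ψ (a:ℤ)))
            = ∑ i : Fin 4, ∑ a ∈ Finset.range P,
                (γ (G ((a:ℤ) - l i)) + γ (G ((a:ℤ) + l i))) * ψ (a:ℤ) := by
              refine Finset.sum_congr rfl (fun i _ => ?_)
              rw [← Finset.sum_add_distrib]
              exact Finset.sum_congr rfl (fun a _ => by rw [add_mul])
          _ = ∑ a ∈ Finset.range P, ∑ i : Fin 4,
                (γ (G ((a:ℤ) - l i)) + γ (G ((a:ℤ) + l i))) * ψ (a:ℤ) := Finset.sum_comm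
          _ = ∑ a ∈ Finset.range P,
                (∑ i : Fin 4, (γ (G ((a:ℤ) - l i)) + γ (G ((a:ℤ) + l i)))) * ψ (a:ℤ) := by
              exact Finset.sum_congr rfl (fun a _ => by rw [Finset.sum_mul])
    _ = ∑ a ∈ Finset.range P, γ ((c:ℤ)) * ψ (a:ℤ) := by
        rw [← Finset.sum_add_distrib]
        refine Finset.sum_congr rfl (fun a _ => ?_)
        rw [← add_mul]
        congr 1
        have hsum2 : (∑ i : Fin 4, (γ (G ((a:ℤ) - l i)) + γ (G ((a:ℤ) + l i))))
            = γ (∑ i : Fin 4, (G ((a:ℤ) - l i) + G ((a:ℤ) + l i))) := by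
          rw [map_sum]
          exact Finset.sum_congr rfl (fun i _ => (map_add γ _ _).symm)
        rw [hsum2, ← map_add]
        congr 1
        have hm := hmaster (a:ℤ)
        have hm2 : (∑ i : Fin 4, (G ((a:ℤ) - l i) + G ((a:ℤ) + l i)))
            = ∑ i : Fin 4, (G ((a:ℤ) + l i) + G ((a:ℤ) - l i)) :=
          Finset.sum_congr rfl (fun i _ => add_comm _ _)
        rw [hm2, hm]
        ring
    _ = γ ((c:ℤ)) * SD := by rw [hSD, Finset.mul_sum]
    _ = π (C ((c:ℤ))) * SD := rfl


lemma pc_evalA (l : Fin 4 → ℕ) (b c : ℕ) : (polyA 4 l b c).eval 1 = (b:ℤ) + c := by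
  rw [polyA]
  simp [eval_finset_sum]

lemma pc_eval1 (l : Fin 4 → ℕ) (b c : ℕ) (P : ℕ) (Bp : ℤ[X])
    (hd : (X ^ P - 1 : ℤ[X]) ∣ polyA 4 l b c * Bp
      - X ^ (Finset.univ.sup l) * (C (c:ℤ) * ∑ a ∈ Finset.range P, (X:ℤ[X]) ^ a)) :
    ((b:ℤ) + c) * Bp.eval 1 = (c:ℤ) * P := by
  obtain ⟨H, hH⟩ := hd
  have := congrArg (eval 1) hH
  simp only [eval_sub, eval_mul, eval_pow, eval_X, eval_C, eval_one, one_pow, sub_self,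
    zero_mul, eval_finset_sum] at this
  rw [pc_evalA] at this
  simp only [one_pow, Finset.sum_const, Finset.card_range, nsmul_eq_mul, mul_one] at this
  linarith

lemma pc_prod_dvd (p : ℕ) (hp : p.Prime) (T : Finset ℕ) (hT : ∀ a ∈ T, 1 ≤ a)
    (B : ℤ[X]) (hdvd : ∀ a ∈ T, cyclotomic (p^a) ℤ ∣ B) :
    (∏ a ∈ T, cyclotomic (p^a) ℤ) ∣ B := by
  classical
  induction T using Finset.induction generalizing B with
  | empty => simp
  | @insert a T' ha ih =>
    obtain ⟨B', hB'⟩ := hdvd a (Finset.mem_insert_self a T')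
    have hdvd' : ∀ a' ∈ T', cyclotomic (p^a') ℤ ∣ B' := by
      intro a' ha'
      have hq : cyclotomic (p^a') ℤ ∣ cyclotomic (p^a) ℤ * B' := by
        rw [← hB']; exact hdvd a' (Finset.mem_insert_of_mem ha')
      have hirr : Irreducible (cyclotomic (p^a') ℤ) :=
        cyclotomic.irreducible (pow_pos hp.pos _)
      have hprime : Prime (cyclotomic (p^a') ℤ) :=
        UniqueFactorizationMonoid.irreducible_iff_prime.mp hirr
      rcases hprime.2.2 _ _ hq with h | h
      · exfalso
        have hirr2 : Irreducible (cyclotomic (p^a) ℤ) :=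
          cyclotomic.irreducible (pow_pos hp.pos _)
        have hassoc := hirr.associated_of_dvd hirr2 h
        have haT := hT a (Finset.mem_insert_self a T')
        have ha'T := hT a' (Finset.mem_insert_of_mem ha')
        have hdeg : (cyclotomic (p^a') ℤ).natDegree = (cyclotomic (p^a) ℤ).natDegree := by
          apply le_antisymm
          · exact natDegree_le_of_dvd hassoc.dvd (cyclotomic_ne_zero _ ℤ)
          · exact natDegree_le_of_dvd hassoc.symm.dvd (cyclotomic_ne_zero _ ℤ)
        rw [natDegree_cyclotomic, natDegree_cyclotomic,
          Nat.totient_prime_pow hp (by omega : 0 < a'),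
          Nat.totient_prime_pow hp (by omega : 0 < a)] at hdeg
        have hpow : p ^ (a'-1) = p ^ (a-1) :=
          Nat.eq_of_mul_eq_mul_right (Nat.sub_pos_of_lt hp.one_lt) hdeg
        have h9 : a' - 1 = a - 1 := Nat.pow_right_injective hp.two_le hpow
        have : a = a' := by omega
        exact ha (this ▸ ha')
      · exact h
    rw [Finset.prod_insert ha, hB']
    exact mul_dvd_mul_left _ (ih (fun a' ha' => hT a' (Finset.mem_insert_of_mem ha')) B' hdvd')


noncomputable def pcAbar (l : Fin 4 → ℕ) (b c q : ℕ) : Polynomial ℤ :=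
  Polynomial.C ((b:ℤ) + c - 8) * X ^ (Finset.univ.sup l % q)
    + ∑ i : Fin 4, (X ^ ((Finset.univ.sup l + l i) % q) + X ^ ((Finset.univ.sup l - l i) % q))

lemma pc_mono_mod (q e : ℕ) : (X ^ q - 1 : ℤ[X]) ∣ X ^ e - X ^ (e % q) := by
  have he : q * (e / q) + e % q = e := Nat.div_add_mod e q
  have h1 : (X ^ e - X ^ (e % q) : ℤ[X]) = X ^ (e % q) * ((X ^ q) ^ (e / q) - 1) := by
    rw [mul_sub, mul_one, ← pow_mul, ← pow_add]
    rw [show e % q + q * (e / q) = e by omega]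
  rw [h1]
  apply Dvd.dvd.mul_left
  have := sub_dvd_pow_sub_pow ((X : ℤ[X]) ^ q) 1 (e / q)
  simpa using this

lemma pc_red (l : Fin 4 → ℕ) (b c q : ℕ) :
    (X ^ q - 1 : ℤ[X]) ∣ polyA 4 l b c - pcAbar l b c q := by
  have h1 : polyA 4 l b c - pcAbar l b c q
      = C ((b:ℤ) + c - 8) * (X ^ (Finset.univ.sup l) - X ^ (Finset.univ.sup l % q))
        + ∑ i : Fin 4, ((X ^ (Finset.univ.sup l + l i) - X ^ ((Finset.univ.sup l + l i) % q))
          + (X ^ (Finset.univ.sup l - l i) - X ^ ((Finset.univ.sup l - l i) % q))) := by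
    rw [polyA, pcAbar]
    push_cast
    simp only [Finset.sum_add_distrib, Finset.sum_sub_distrib]
    ring
  rw [h1]
  exact dvd_add (Dvd.dvd.mul_left (pc_mono_mod _ _) _)
    (Finset.dvd_sum fun i _ => dvd_add (pc_mono_mod _ _) (pc_mono_mod _ _))

lemma pc_coeff_Abar (l : Fin 4 → ℕ) (b c q : ℕ) (x : ℕ) :
    (pcAbar l b c q).coeff x
      = (if x = Finset.univ.sup l % q then (b:ℤ) + c - 8 else 0)
        + ∑ i : Fin 4, ((if x = (Finset.univ.sup l + l i) % q then (1:ℤ) else 0)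
          + (if x = (Finset.univ.sup l - l i) % q then (1:ℤ) else 0)) := by
  rw [pcAbar, coeff_add, coeff_C_mul, finset_sum_coeff]
  simp [coeff_add, coeff_X_pow, mul_ite, mul_one, mul_zero, eq_comm]

lemma pc_CST (p a : ℕ) (hp : p.Prime) (ha : 1 ≤ a) (l : Fin 4 → ℕ) (b c : ℕ)
    (hs : 1 ≤ (b:ℤ) + c - 8)
    (hdvd : cyclotomic (p^a) ℤ ∣ polyA 4 l b c) :
    ∀ x1 x2 : ℕ, x1 < p^a → x2 < p^a → x1 % p^(a-1) = x2 % p^(a-1) →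
      (pcAbar l b c (p^a)).coeff x1 = (pcAbar l b c (p^a)).coeff x2 := by
  set M := Finset.univ.sup l with hMdef
  obtain ⟨q, hqdef⟩ : ∃ q, p ^ a = q := ⟨_, rfl⟩
  obtain ⟨r, hrdef⟩ : ∃ r, p ^ (a-1) = r := ⟨_, rfl⟩
  rw [hqdef] at hdvd ⊢
  rw [hrdef]
  have hq0 : 0 < q := by rw [← hqdef]; exact pow_pos hp.pos a
  have hr0 : 0 < r := by rw [← hrdef]; exact pow_pos hp.pos _
  have hqr : q = r * p := by rw [← hqdef, ← hrdef, ← pow_succ]; congr 1; omega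
  have hΦX : cyclotomic q ℤ ∣ (X ^ q - 1 : ℤ[X]) := by
    rw [← prod_cyclotomic_eq_X_pow_sub_one hq0 ℤ]
    exact Finset.dvd_prod_of_mem _ (Nat.mem_divisors_self q (by omega))
  have hΦA : cyclotomic q ℤ ∣ pcAbar l b c q := by
    have h2 : cyclotomic q ℤ ∣ polyA 4 l b c - pcAbar l b c q := hΦX.trans (pc_red l b c q)
    have := dvd_sub hdvd h2
    simpa using this
  obtain ⟨R1, hR1⟩ := hΦA
  have hAcoeff : (pcAbar l b c q).coeff (M % q) ≥ 1 := by
    rw [pc_coeff_Abar, if_pos rfl]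
    have h3 : (0:ℤ) ≤ ∑ i : Fin 4, ((if M % q = (M + l i) % q then (1:ℤ) else 0)
        + (if M % q = (M - l i) % q then (1:ℤ) else 0)) := by
      apply Finset.sum_nonneg
      intro i _
      have : (0:ℤ) ≤ (if M % q = (M + l i) % q then (1:ℤ) else 0) := by positivity
      have : (0:ℤ) ≤ (if M % q = (M - l i) % q then (1:ℤ) else 0) := by positivity
      positivity
    linarith
  have hAne : pcAbar l b c q ≠ 0 := by
    intro h0
    rw [h0] at hAcoeff
    simp at hAcoeff
  have hR1ne : R1 ≠ 0 := by
    intro h0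
    rw [h0, mul_zero] at hR1
    exact hAne hR1
  have hdegA : (pcAbar l b c q).natDegree ≤ q - 1 := by
    rw [pcAbar]
    apply le_trans (natDegree_add_le _ _)
    apply max_le
    · apply le_trans (natDegree_C_mul_le _ _)
      rw [natDegree_X_pow]
      have := Nat.mod_lt (Finset.univ.sup l) hq0
      omega
    · apply Polynomial.natDegree_sum_le_of_forall_le
      intro i _
      apply le_trans (natDegree_add_le _ _)
      apply max_le
      · rw [natDegree_X_pow]
        have := Nat.mod_lt (Finset.univ.sup l + l i) hq0
        omega
      · rw [natDegree_X_pow]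
        have := Nat.mod_lt (Finset.univ.sup l - l i) hq0
        omega
  have hdegΦ : (cyclotomic q ℤ).natDegree = r * (p - 1) := by
    rw [natDegree_cyclotomic, ← hqdef, Nat.totient_prime_pow hp (by omega : 0 < a), hrdef]
  have hdegR1 : R1.natDegree < r := by
    have h4 : (pcAbar l b c q).natDegree = (cyclotomic q ℤ).natDegree + R1.natDegree := by
      rw [hR1]; exact natDegree_mul (cyclotomic_ne_zero _ ℤ) hR1ne
    rw [hdegΦ] at h4
    have hp2 := hp.two_le
    have h6 : r * (p-1) + R1.natDegree ≤ q - 1 := by omega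
    have e : r * (p - 1) + r = r * p := by
      rw [← Nat.mul_succ]
      congr 1
      omega
    omega
  have hgeom : cyclotomic q ℤ = ∑ j ∈ Finset.range p, X ^ (r * j) := by
    rw [← hqdef, show a = (a-1)+1 by omega, cyclotomic_prime_pow_eq_geom_sum hp]
    exact Finset.sum_congr rfl (fun j _ => by rw [← pow_mul, hrdef])
  have block : ∀ j t : ℕ, j < p → t < r →
      (pcAbar l b c q).coeff (j * r + t) = R1.coeff t := by
    intro j t hj ht
    have h5 : pcAbar l b c q = ∑ j' ∈ Finset.range p, R1 * X ^ (r * j') := by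
      rw [hR1, hgeom, Finset.sum_mul]
      exact Finset.sum_congr rfl (fun j' _ => mul_comm _ _)
    rw [h5, finset_sum_coeff]
    rw [Finset.sum_eq_single j]
    · rw [coeff_mul_X_pow']
      have hcm : r * j = j * r := mul_comm r j
      rw [if_pos (by omega : r * j ≤ j * r + t)]
      congr 1
      omega
    · intro j' hj'mem hne
      rw [coeff_mul_X_pow']
      have hcm : r * j = j * r := mul_comm r j
      by_cases hle : r * j' ≤ j * r + t
      · rw [if_pos hle]
        apply coeff_eq_zero_of_natDegree_lt
        have hj'j : j' < j := by
          by_contra hcon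
          have hgt : j < j' := by omega
          have h7 : r * (j + 1) ≤ r * j' := Nat.mul_le_mul_left r hgt
          have hms : r * (j + 1) = r * j + r := Nat.mul_succ r j
          omega
        have h8 : r * (j' + 1) ≤ r * j := Nat.mul_le_mul_left r hj'j
        have hms : r * (j' + 1) = r * j' + r := Nat.mul_succ r j'
        omega
      · rw [if_neg hle]
    · intro hj2
      exact absurd (Finset.mem_range.2 hj) hj2
  intro x1 x2 hx1 hx2 hmod
  have hrep : ∀ x : ℕ, x < q → (pcAbar l b c q).coeff x = R1.coeff (x % r) := by
    intro x hx
    have hdiv : x / r < p := by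
      rw [Nat.div_lt_iff_lt_mul hr0]
      have hpr : p * r = q := by rw [hqr, mul_comm]
      rw [hpr]
      exact hx
    have hx_eq : (x / r) * r + x % r = x := Nat.div_add_mod' x r
    have hb := block (x / r) (x % r) hdiv (Nat.mod_lt _ hr0)
    rwa [hx_eq] at hb
  rw [hrep x1 hx1, hrep x2 hx2, hmod]

lemma pc_cancel (q Mv x y : ℕ) : ((Mv + x) % q = (Mv + y) % q) ↔ x % q = y % q := by
  constructor
  · exact fun h => Nat.ModEq.add_left_cancel' Mv h
  · exact fun h => Nat.ModEq.add_left Mv h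

lemma pc_iff0 (q Mv li : ℕ) : ((Mv + li) % q = Mv % q) ↔ li % q = 0 := by
  rw [show Mv % q = (Mv + 0) % q by rw [add_zero]]
  rw [pc_cancel, Nat.zero_mod]

lemma pc_iffsub (q Mv li : ℕ) (hle : li ≤ Mv) :
    ((Mv - li) % q = Mv % q) ↔ li % q = 0 := by
  have hsub : Mv - li + li = Mv := Nat.sub_add_cancel hle
  constructor
  · intro h
    have h1 : (Mv - li + li) % q = (Mv + li) % q := Nat.ModEq.add_right li h
    rw [hsub] at h1
    exact ((pc_iff0 q Mv li).1 h1.symm)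
  · intro h
    have h0 : li % q = 0 % q := by simpa using h
    have h1 : (Mv - li + li) % q = (Mv - li + 0) % q := Nat.ModEq.add_left (Mv - li) h0
    rw [hsub, add_zero] at h1
    exact h1.symm

lemma pc_C1 (p a : ℕ) (hp : p.Prime) (ha : 1 ≤ a) (l : Fin 4 → ℕ) (b c : ℕ)
    (hs : 1 ≤ (b:ℤ) + c - 8)
    (hdvd : cyclotomic (p^a) ℤ ∣ polyA 4 l b c) :
    (p:ℤ) * ((b:ℤ) + c - 8) ≤ ((b:ℤ) + c - 8) + 8 := by
  have hCST := pc_CST p a hp ha l b c hs hdvd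
  obtain ⟨q, hqdef⟩ : ∃ q, p ^ a = q := ⟨_, rfl⟩
  obtain ⟨r, hrdef⟩ : ∃ r, p ^ (a-1) = r := ⟨_, rfl⟩
  rw [hqdef, hrdef] at hCST
  have hq0 : 0 < q := by rw [← hqdef]; exact pow_pos hp.pos a
  have hr0 : 0 < r := by rw [← hrdef]; exact pow_pos hp.pos _
  have hqr : q = r * p := by rw [← hqdef, ← hrdef, ← pow_succ]; congr 1; omega
  set M := Finset.univ.sup l with hMdef
  set t0 := (M % q) % r with ht0
  have ht0r : t0 < r := Nat.mod_lt _ hr0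
  have hposlt : ∀ j, j < p → j * r + t0 < q := by
    intro j hj
    have h1 : (j+1) * r ≤ p * r := Nat.mul_le_mul_right r (by omega)
    have h2 : (j+1) * r = j*r + r := Nat.succ_mul j r
    have h3 : p * r = q := by rw [hqr, mul_comm]
    omega
  have hcc : ∀ j, j < p →
      (pcAbar l b c q).coeff (j * r + t0) = (pcAbar l b c q).coeff (M % q) := by
    intro j hj
    apply hCST _ _ (hposlt j hj) (Nat.mod_lt _ hq0)
    rw [ht0]
    rw [Nat.add_comm, Nat.add_mul_mod_self_right]
    exact Nat.mod_mod_of_dvd _ dvd_rfl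
  have hv : ((b:ℤ) + c - 8) ≤ (pcAbar l b c q).coeff (M % q) := by
    rw [pc_coeff_Abar, ← hMdef, if_pos rfl]
    have h3 : (0:ℤ) ≤ ∑ i : Fin 4, ((if M % q = (M + l i) % q then (1:ℤ) else 0)
        + (if M % q = (M - l i) % q then (1:ℤ) else 0)) := by
      apply Finset.sum_nonneg
      intro i _
      have e1 : (0:ℤ) ≤ (if M % q = (M + l i) % q then (1:ℤ) else 0) := by positivity
      have e2 : (0:ℤ) ≤ (if M % q = (M - l i) % q then (1:ℤ) else 0) := by positivity
      linarith
    linarith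
  have hsum_eq : (∑ j ∈ Finset.range p, (pcAbar l b c q).coeff (j * r + t0))
      = (p:ℤ) * (pcAbar l b c q).coeff (M % q) := by
    rw [Finset.sum_congr rfl (fun j hj => hcc j (Finset.mem_range.1 hj))]
    rw [Finset.sum_const, Finset.card_range, nsmul_eq_mul]
  have hIND : ∀ (E : ℕ) (v : ℤ), 0 ≤ v →
      (∑ j ∈ Finset.range p, if j * r + t0 = E then v else 0) ≤ v := by
    intro E v hv0
    have hcard : (Finset.filter (fun j => j * r + t0 = E) (Finset.range p)).card ≤ 1 := by
      rw [Finset.card_le_one]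
      intro j1 h1 j2 h2
      have e1 := (Finset.mem_filter.1 h1).2
      have e2 := (Finset.mem_filter.1 h2).2
      have e3 : j1 * r = j2 * r := by omega
      exact Nat.eq_of_mul_eq_mul_right hr0 e3
    calc (∑ j ∈ Finset.range p, if j * r + t0 = E then v else 0)
        = v * ∑ j ∈ Finset.range p, (if j * r + t0 = E then (1:ℤ) else 0) := by
          rw [Finset.mul_sum]
          exact Finset.sum_congr rfl (fun j _ => by split <;> simp)
      _ = v * ((Finset.filter (fun j => j * r + t0 = E) (Finset.range p)).card : ℤ) := by
          rw [Finset.sum_boole]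
      _ ≤ v * 1 := by
          apply mul_le_mul_of_nonneg_left _ hv0
          exact_mod_cast hcard
      _ = v := mul_one v
  have hsum_le : (∑ j ∈ Finset.range p, (pcAbar l b c q).coeff (j * r + t0))
      ≤ ((b:ℤ)+c-8) + 8 := by
    have expand : (∑ j ∈ Finset.range p, (pcAbar l b c q).coeff (j * r + t0))
        = (∑ j ∈ Finset.range p, if j*r+t0 = M % q then (b:ℤ)+c-8 else 0)
          + ∑ i : Fin 4, ((∑ j ∈ Finset.range p, if j*r+t0 = (M + l i) % q then (1:ℤ) else 0)
            + (∑ j ∈ Finset.range p, if j*r+t0 = (M - l i) % q then (1:ℤ) else 0)) := by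
      rw [Finset.sum_congr rfl (fun j _ => by rw [pc_coeff_Abar, ← hMdef])]
      rw [Finset.sum_add_distrib]
      congr 1
      rw [Finset.sum_comm]
      exact Finset.sum_congr rfl (fun i _ => Finset.sum_add_distrib)
    rw [expand]
    have b1 := hIND (M % q) ((b:ℤ)+c-8) (by linarith)
    have b2 : (∑ i : Fin 4, ((∑ j ∈ Finset.range p, if j*r+t0 = (M + l i) % q then (1:ℤ) else 0)
        + (∑ j ∈ Finset.range p, if j*r+t0 = (M - l i) % q then (1:ℤ) else 0)))
        ≤ ∑ i : Fin 4, ((1:ℤ) + 1) := by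
      apply Finset.sum_le_sum
      intro i _
      exact add_le_add (hIND _ 1 one_pos.le) (hIND _ 1 one_pos.le)
    have b3 : (∑ i : Fin 4, ((1:ℤ) + 1)) = 8 := by simp
    linarith
  have hfin : (p:ℤ) * ((b:ℤ)+c-8) ≤ (p:ℤ) * (pcAbar l b c q).coeff (M % q) :=
    mul_le_mul_of_nonneg_left hv (by positivity)
  linarith

lemma pc_two (q r li : ℕ) (hr : 0 < r) (hq : q = r + r) : (q ∣ r + li) ↔ li % q = r := by
  constructor
  · rintro ⟨k, hk⟩
    rcases k with _ | k
    · omega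
    · have hms : q * (k+1) = q * k + q := Nat.mul_succ q k
      have hli : li = q * k + r := by omega
      rw [hli, Nat.mul_add_mod]
      exact Nat.mod_eq_of_lt (by omega)
  · intro h
    have hda : q * (li / q) + li % q = li := Nat.div_add_mod li q
    refine ⟨li / q + 1, ?_⟩
    rw [Nat.mul_succ]
    omega

lemma pc_iffsub2 (q r Mv li : ℕ) (hle : li ≤ Mv) (hr : 0 < r) (hq : q = r + r) :
    ((Mv - li) % q = (Mv + r) % q) ↔ li % q = r := by
  have hsub : Mv - li + li = Mv := Nat.sub_add_cancel hle
  constructor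
  · intro h
    have h1 : (Mv - li + li) % q = (Mv + r + li) % q := Nat.ModEq.add_right li h
    rw [hsub] at h1
    have h2 : (Mv + 0) % q = (Mv + (r + li)) % q := by
      rw [add_zero, h1]
      congr 1
      ring
    have h3 : 0 % q = (r + li) % q := (pc_cancel q Mv 0 (r+li)).1 h2
    have h4 : q ∣ r + li := by
      have h5 := h3.symm
      rw [Nat.zero_mod] at h5
      exact Nat.dvd_of_mod_eq_zero h5
    exact (pc_two q r li hr hq).1 h4
  · intro h
    have h4 : q ∣ r + li := (pc_two q r li hr hq).2 h
    have h5 : (Mv - li + (li + r)) % q = (Mv - li + 0) % q := by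
      apply (pc_cancel q (Mv - li) (li+r) 0).2
      rw [Nat.zero_mod]
      obtain ⟨k, hk⟩ := h4
      rw [show li + r = r + li by ring, hk, Nat.mul_mod_right]
    rw [add_zero] at h5
    rw [show Mv - li + (li + r) = Mv + r by omega] at h5
    exact h5.symm

lemma pc_L2 (a : ℕ) (ha : 1 ≤ a) (l : Fin 4 → ℕ) (b c : ℕ) (hbc : (b:ℤ) + c - 8 = 4)
    (hdvd : cyclotomic (2^a) ℤ ∣ polyA 4 l b c) :
    (∑ i : Fin 4, if l i % 2^a = 0 then (1:ℤ) else 0) + 2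
      = ∑ i : Fin 4, if l i % 2^a = 2^(a-1) then (1:ℤ) else 0 := by
  have hp : Nat.Prime 2 := Nat.prime_two
  have hs : 1 ≤ (b:ℤ) + c - 8 := by rw [hbc]; norm_num
  have hCST := pc_CST 2 a hp ha l b c hs hdvd
  obtain ⟨q, hqdef⟩ : ∃ q, 2 ^ a = q := ⟨_, rfl⟩
  obtain ⟨r, hrdef⟩ : ∃ r, 2 ^ (a-1) = r := ⟨_, rfl⟩
  rw [hqdef, hrdef] at hCST ⊢
  have hq0 : 0 < q := by rw [← hqdef]; exact pow_pos (by norm_num) a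
  have hr0 : 0 < r := by rw [← hrdef]; exact pow_pos (by norm_num) _
  have hqr : q = r * 2 := by rw [← hqdef, ← hrdef, ← pow_succ]; congr 1; omega
  have hq2 : q = r + r := by omega
  set M := Finset.univ.sup l with hMdef
  have hle : ∀ i : Fin 4, l i ≤ M := fun i => Finset.le_sup (Finset.mem_univ i)
  have hrq : r < q := by omega
  have hx0 : M % q < q := Nat.mod_lt _ hq0
  have hx1 : (M + r) % q < q := Nat.mod_lt _ hq0
  have hrdvdq : r ∣ q := ⟨2, hqr⟩
  have hmods : (M % q) % r = ((M + r) % q) % r := by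
    rw [Nat.mod_mod_of_dvd _ hrdvdq, Nat.mod_mod_of_dvd _ hrdvdq, Nat.add_mod_right]
  have hcoeq := hCST (M % q) ((M + r) % q) hx0 hx1 hmods
  have hne0 : ¬ ((M + r) % q = M % q) := by
    intro h
    have h1 : r % q = 0 := (pc_iff0 q M r).1 h
    have h2 : q ∣ r := Nat.dvd_of_mod_eq_zero h1
    have h3 : q ≤ r := Nat.le_of_dvd hr0 h2
    omega
  have hL : (pcAbar l b c q).coeff (M % q)
      = ((b:ℤ)+c-8) + ∑ i : Fin 4, (2 * if l i % q = 0 then (1:ℤ) else 0) := by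
    rw [pc_coeff_Abar, ← hMdef, if_pos rfl]
    congr 1
    refine Finset.sum_congr rfl (fun i _ => ?_)
    have e1 : (M % q = (M + l i) % q) ↔ (l i % q = 0) :=
      ⟨fun h => (pc_iff0 q M (l i)).1 h.symm, fun h => ((pc_iff0 q M (l i)).2 h).symm⟩
    have e2 : (M % q = (M - l i) % q) ↔ (l i % q = 0) :=
      ⟨fun h => (pc_iffsub q M (l i) (hle i)).1 h.symm,
        fun h => ((pc_iffsub q M (l i) (hle i)).2 h).symm⟩
    rw [if_congr e1 rfl rfl, if_congr e2 rfl rfl]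
    split <;> norm_num
  have hR : (pcAbar l b c q).coeff ((M + r) % q)
      = ∑ i : Fin 4, (2 * if l i % q = r then (1:ℤ) else 0) := by
    rw [pc_coeff_Abar, ← hMdef, if_neg hne0, zero_add]
    refine Finset.sum_congr rfl (fun i _ => ?_)
    have f1 : ((M + r) % q = (M + l i) % q) ↔ (l i % q = r) := by
      constructor
      · intro h
        have := (pc_cancel q M (l i) r).1 h.symm
        rwa [Nat.mod_eq_of_lt hrq] at this
      · intro h
        exact ((pc_cancel q M (l i) r).2 (by rw [h, Nat.mod_eq_of_lt hrq])).symm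
    have f2 : ((M + r) % q = (M - l i) % q) ↔ (l i % q = r) :=
      ⟨fun h => (pc_iffsub2 q r M (l i) (hle i) hr0 hq2).1 h.symm,
        fun h => ((pc_iffsub2 q r M (l i) (hle i) hr0 hq2).2 h).symm⟩
    rw [if_congr f1 rfl rfl, if_congr f2 rfl rfl]
    split <;> norm_num
  rw [hL, hR, hbc] at hcoeq
  have hL2 : (∑ i : Fin 4, (2 * if l i % q = 0 then (1:ℤ) else 0))
      = 2 * ∑ i : Fin 4, (if l i % q = 0 then (1:ℤ) else 0) := by rw [Finset.mul_sum]
  have hR2 : (∑ i : Fin 4, (2 * if l i % q = r then (1:ℤ) else 0))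
      = 2 * ∑ i : Fin 4, (if l i % q = r then (1:ℤ) else 0) := by rw [Finset.mul_sum]
  rw [hL2, hR2] at hcoeq
  linarith



lemma pc_core (l : Fin 4 → ℕ) (b c : ℕ) (hb : 1 ≤ b) (hc : 1 ≤ c)
    (f : ℤ → Bool) (hf : IsPerfectColouringInt 4 l b c f)
    (p t : ℕ) (hp : p.Prime) (hpt : p ^ t ∣ b + c) (hpc : ¬ p ∣ c) :
    ∃ T : Finset ℕ, t ≤ T.card ∧
      ∀ a ∈ T, 1 ≤ a ∧ Polynomial.cyclotomic (p^a) ℤ ∣ polyA 4 l b c := by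
  classical
  set G : ℤ → ℤ := fun n => if f n then 1 else 0 with hGdef
  have hmaster : ∀ n : ℤ, (∑ i : Fin 4, (G (n + (l i:ℤ)) + G (n - (l i:ℤ))))
      = (c:ℤ) - ((b:ℤ)+(c:ℤ)-8) * G n := fun n => pc_master l b c f hf n
  have hGval : ∀ n, G n = 0 ∨ G n = 1 := by
    intro n; by_cases h : f n <;> simp [hGdef, h]
  by_cases hM0 : Finset.univ.sup l = 0
  · exfalso
    have hall0 : ∀ i : Fin 4, l i = 0 := by
      intro i
      have := Finset.le_sup (f := l) (Finset.mem_univ i)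
      omega
    have h0 := hmaster 0
    rw [Finset.sum_congr rfl (fun i _ => show G (0 + (l i:ℤ)) + G (0 - (l i:ℤ)) = G 0 + G 0 by
      rw [hall0 i]; norm_num)] at h0
    simp only [Finset.sum_const, Finset.card_univ, Fintype.card_fin, nsmul_eq_mul] at h0
    rcases hGval 0 with h | h <;> rw [h] at h0 <;>
      [skip; skip] <;> omega
  · have hM : 1 ≤ Finset.univ.sup l := by omega
    obtain ⟨P, hP1, hper⟩ := pc_periodic l ((b:ℤ)+(c:ℤ)-8) (c:ℤ) f G (fun n => rfl) hmaster hM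
    have hdvd := pc_dvd l b c G P hP1 hmaster hper
    set Bp : Polynomial ℤ := ∑ a ∈ Finset.range P, Polynomial.C (G a) * X ^ a with hBp
    have heval := pc_eval1 l b c P Bp hdvd
    have hblack : ∃ n : ℤ, G n = 1 := by
      by_contra hno
      push_neg at hno
      have hzero : ∀ n, G n = 0 := fun n => (hGval n).resolve_right (hno n)
      have h0 := hmaster 0
      rw [Finset.sum_congr rfl (fun i _ =>
        show G (0 + (l i:ℤ)) + G (0 - (l i:ℤ)) = 0 by rw [hzero _, hzero _]; norm_num)] at h0
      rw [hzero 0] at h0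
      simp at h0
      omega
    have hperk : ∀ (k : ℤ) (n : ℤ), G (n + P * k) = G n := by
      intro k
      induction k using Int.induction_on with
      | zero => intro n; simp
      | succ i ih =>
        intro n
        rw [show n + (P:ℤ) * ((i:ℤ)+1) = (n + P * i) + P by ring, hper, ih]
      | pred i ih =>
        intro n
        have h1 := hper (n + P * (-(i:ℤ)-1))
        rw [show n + (P:ℤ) * (-(i:ℤ)-1) + P = n + P * (-(i:ℤ)) by ring] at h1
        rw [show n + (P:ℤ) * (-(i:ℤ)-1) = n + P * (-(i:ℤ)-1) from rfl]
        rw [← h1, ih]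
    have hβpos : ∃ a0 : ℕ, a0 < P ∧ G (a0:ℤ) = 1 := by
      obtain ⟨n, hn⟩ := hblack
      have h1 : 0 ≤ n % P := Int.emod_nonneg n (by exact_mod_cast (by omega : P ≠ 0))
      have h2 : n % P < P := Int.emod_lt_of_pos n (by exact_mod_cast hP1)
      refine ⟨(n % P).toNat, by omega, ?_⟩
      have h3 : ((n % P).toNat : ℤ) = n % P := Int.toNat_of_nonneg h1
      rw [h3]
      have h4 : n % P = n + P * (-(n / P)) := by
        have h5 := Int.mul_ediv_add_emod n P
        have h6 : (P:ℤ) * (-(n/P)) = -(P * (n/P)) := by ring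
        linarith
      rw [h4, hperk]
      exact hn
    have hBeval : Bp.eval 1 = ∑ a ∈ Finset.range P, G a := by
      rw [hBp]; simp [eval_finset_sum]
    have hβ1 : 1 ≤ Bp.eval 1 := by
      rw [hBeval]
      obtain ⟨a0, ha0P, ha0⟩ := hβpos
      have hnn : ∀ a ∈ Finset.range P, (0:ℤ) ≤ G a := fun a _ => by
        rcases hGval a with h|h <;> omega
      have h6 := Finset.single_le_sum hnn (Finset.mem_range.2 ha0P)
      omega
    obtain ⟨β, hβ⟩ : ∃ β : ℕ, Bp.eval 1 = (β:ℤ) :=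
      ⟨(Bp.eval 1).toNat, (Int.toNat_of_nonneg (by omega)).symm⟩
    have hβ1' : 1 ≤ β := by omega
    have heqN : (b + c) * β = c * P := by
      have h7 := heval
      rw [hβ] at h7
      exact_mod_cast h7
    set e := P.factorization p with he
    set T : Finset ℕ :=
      (Finset.Icc 1 e).filter (fun a => Polynomial.cyclotomic (p^a) ℤ ∣ polyA 4 l b c) with hT
    have hmem : ∀ a ∈ T, 1 ≤ a ∧ Polynomial.cyclotomic (p^a) ℤ ∣ polyA 4 l b c := by
      intro a haT
      rw [hT, Finset.mem_filter, Finset.mem_Icc] at haT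
      exact ⟨haT.1.1, haT.2⟩
    refine ⟨T, ?_, hmem⟩
    set Tc : Finset ℕ :=
      (Finset.Icc 1 e).filter (fun a => ¬ Polynomial.cyclotomic (p^a) ℤ ∣ polyA 4 l b c) with hTc
    have hsplitcard : T.card + Tc.card = e := by
      rw [hT, hTc, Finset.card_filter_add_card_filter_not]
      simp [Nat.card_Icc]
    have hTcB : ∀ a ∈ Tc, Polynomial.cyclotomic (p^a) ℤ ∣ Bp := by
      intro a haTc
      rw [hTc, Finset.mem_filter, Finset.mem_Icc] at haTc
      have ha1 : 1 ≤ a := haTc.1.1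
      have hae : a ≤ e := haTc.1.2
      have hqP : p ^ a ∣ P := dvd_trans (pow_dvd_pow p hae) (Nat.ordProj_dvd P p)
      have hp2 := hp.two_le
      have hq1 : p ^ a ≠ 1 := by
        have h8 : 2 ≤ p ^ a := le_trans hp2 (Nat.le_self_pow (by omega) p)
        omega
      have hP0 : P ≠ 0 := by omega
      have hΦD : Polynomial.cyclotomic (p^a) ℤ ∣ (∑ j ∈ Finset.range P, (X:Polynomial ℤ) ^ j) := by
        rw [← prod_cyclotomic_eq_geom_sum (by omega : 0 < P) ℤ]
        apply Finset.dvd_prod_of_mem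
        rw [Finset.mem_erase]
        exact ⟨hq1, Nat.mem_divisors.2 ⟨hqP, hP0⟩⟩
      have hΦX : Polynomial.cyclotomic (p^a) ℤ ∣ (X ^ P - 1 : Polynomial ℤ) := by
        rw [← prod_cyclotomic_eq_X_pow_sub_one (by omega : 0 < P) ℤ]
        exact Finset.dvd_prod_of_mem _ (Nat.mem_divisors.2 ⟨hqP, hP0⟩)
      have hAB : Polynomial.cyclotomic (p^a) ℤ ∣ polyA 4 l b c * Bp := by
        obtain ⟨H, hH⟩ := hdvd
        have h9 : polyA 4 l b c * Bp
            = X ^ (Finset.univ.sup l) * (Polynomial.C (c:ℤ) * ∑ j ∈ Finset.range P, (X:Polynomial ℤ)^j)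
              + (X ^ P - 1) * H := by rw [← hH]; ring
        rw [h9]
        exact dvd_add (Dvd.dvd.mul_left (Dvd.dvd.mul_left hΦD _) _) (Dvd.dvd.mul_right hΦX _)
      have hprime : Prime (Polynomial.cyclotomic (p^a) ℤ) :=
        UniqueFactorizationMonoid.irreducible_iff_prime.mp
          (cyclotomic.irreducible (pow_pos hp.pos a))
      rcases hprime.2.2 _ _ hAB with h | h
      · exact absurd h haTc.2
      · exact h
    have hTc1 : ∀ a ∈ Tc, 1 ≤ a := by
      intro a ha
      rw [hTc, Finset.mem_filter, Finset.mem_Icc] at ha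
      exact ha.1.1
    have hproddvd : (∏ a ∈ Tc, Polynomial.cyclotomic (p^a) ℤ) ∣ Bp :=
      pc_prod_dvd p hp Tc hTc1 Bp hTcB
    have hpcard : (p:ℤ) ^ Tc.card ∣ Bp.eval 1 := by
      have h1 : eval 1 (∏ a ∈ Tc, Polynomial.cyclotomic (p^a) ℤ) ∣ eval 1 Bp :=
        Polynomial.eval_dvd hproddvd
      rw [Polynomial.eval_prod] at h1
      have h2 : (∏ a ∈ Tc, eval 1 (Polynomial.cyclotomic (p^a) ℤ)) = (p:ℤ)^Tc.card := by
        rw [Finset.prod_congr rfl (fun a ha => show eval 1 (Polynomial.cyclotomic (p^a) ℤ) = (p:ℤ) from ?_),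
          Finset.prod_const]
        have ha1 := hTc1 a ha
        rw [show a = (a-1)+1 by omega]
        haveI : Fact (Nat.Prime p) := ⟨hp⟩
        exact eval_one_cyclotomic_prime_pow (a-1)
      rw [h2] at h1
      exact h1
    have hpβ : p ^ Tc.card ∣ β := by
      have h10 := hpcard
      rw [hβ] at h10
      exact_mod_cast h10
    have hTcle : Tc.card ≤ β.factorization p :=
      (hp.pow_dvd_iff_le_factorization (by omega)).1 hpβ
    have hbc0 : b + c ≠ 0 := by omega
    have hβ0 : β ≠ 0 := by omega
    have hc0 : c ≠ 0 := by omega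
    have h5 : (b+c).factorization p + β.factorization p
        = c.factorization p + P.factorization p := by
      have h6 : ((b+c) * β).factorization = (b+c).factorization + β.factorization :=
        Nat.factorization_mul hbc0 hβ0
      have h7 : (c * P).factorization = c.factorization + P.factorization :=
        Nat.factorization_mul hc0 (by omega)
      have h8 : ((b+c)*β).factorization p = ((c*P)).factorization p := by rw [heqN]
      rw [h6, h7] at h8
      simpa using h8
    have ht1 : t ≤ (b+c).factorization p := (hp.pow_dvd_iff_le_factorization hbc0).1 hpt
    have hc2 : c.factorization p = 0 := Nat.factorization_eq_zero_of_not_dvd hpc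
    omega

lemma pc_final2 (l : Fin 4 → ℕ) (a1 a2 : ℕ) (hlt : a1 < a2)
    (h1 : 1 ≤ a1 ∧ Polynomial.cyclotomic (2^a1) ℤ ∣ polyA 4 l 7 5)
    (h2 : 1 ≤ a2 ∧ Polynomial.cyclotomic (2^a2) ℤ ∣ polyA 4 l 7 5) : False := by
  obtain ⟨ha1, hd1⟩ := h1
  obtain ⟨ha2, hd2⟩ := h2
  have e1 := pc_L2 a1 ha1 l 7 5 (by norm_num) hd1
  have e2 := pc_L2 a2 ha2 l 7 5 (by norm_num) hd2
  have hmono : (∑ i : Fin 4, if l i % 2^a2 = 2^(a2-1) then (1:ℤ) else 0)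
      ≤ ∑ i : Fin 4, if l i % 2^a1 = 0 then (1:ℤ) else 0 := by
    apply Finset.sum_le_sum
    intro i _
    by_cases h : l i % 2^a2 = 2^(a2-1)
    · rw [if_pos h]
      have hd : (2:ℕ)^(a2-1) ∣ l i := by
        have h6 := Nat.div_add_mod (l i) (2^a2)
        have h7 : (2:ℕ)^(a2-1) ∣ 2^a2 := pow_dvd_pow 2 (by omega)
        have h8 : (2:ℕ)^(a2-1) ∣ 2^a2 * (l i / 2^a2) := Dvd.dvd.mul_right h7 _
        have h9 : l i = 2^a2 * (l i / 2^a2) + 2^(a2-1) := by omega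
        rw [h9]
        exact dvd_add h8 dvd_rfl
      have hd' : (2:ℕ)^a1 ∣ l i := dvd_trans (pow_dvd_pow 2 (by omega : a1 ≤ a2-1)) hd
      have hmod0 : l i % 2^a1 = 0 := Nat.eq_zero_of_dvd_of_lt hd' |> fun _ => Nat.eq_zero_of_dvd_of_lt hd' |> fun _ => (Nat.mod_eq_zero_of_dvd hd')
      rw [if_pos hmod0]
    · rw [if_neg h]
      positivity
  have hdisj : (∑ i : Fin 4, if l i % 2^a1 = 0 then (1:ℤ) else 0)
      + (∑ i : Fin 4, if l i % 2^a1 = 2^(a1-1) then (1:ℤ) else 0) ≤ 4 := by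
    rw [← Finset.sum_add_distrib]
    have h4 : (∑ _i : Fin 4, (1:ℤ)) = 4 := by simp
    rw [← h4]
    apply Finset.sum_le_sum
    intro i _
    have hr0 : 0 < (2:ℕ)^(a1-1) := pow_pos (by norm_num) _
    by_cases h : l i % 2^a1 = 0
    · rw [if_pos h, if_neg (by rw [h]; omega)]
      norm_num
    · rw [if_neg h]
      split <;> norm_num
  have hnn : (0:ℤ) ≤ ∑ i : Fin 4, if l i % 2^a2 = 0 then (1:ℤ) else 0 :=
    Finset.sum_nonneg fun i _ => by positivity
  linarith

lemma pc_single (l : Fin 4 → ℕ) (b c p : ℕ) (f : ℤ → Bool)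
    (hf : IsPerfectColouringInt 4 l b c f) (hp : p.Prime) (hdvd : p ∣ b + c)
    (hndvd : ¬ p ∣ c)
    (hbound : ¬ ((p:ℤ) * ((b:ℤ) + c - 8) ≤ ((b:ℤ) + c - 8) + 8))
    (hb : 1 ≤ b) (hc : 1 ≤ c) (hs' : 1 ≤ (b:ℤ) + c - 8) : False := by
  obtain ⟨T, hTcard, hTmem⟩ := pc_core l b c hb hc f hf p 1 hp (by simpa using hdvd) hndvd
  have hTne : 0 < T.card := by omega
  obtain ⟨a, haT⟩ := Finset.card_pos.1 hTne
  obtain ⟨ha1, hdvdA⟩ := hTmem a haT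
  exact hbound (pc_C1 p a hp ha1 l b c hs' hdvdA)

/-- No infinite circulant graph with 4 distances has a perfect 2-colouring with
parameters `(6,5)`, `(7,4)`, `(8,3)`, `(7,5)`, `(7,6)`, `(8,5)`, `(8,6)` or `(8,7)`. -/
theorem stmt5 (l : Fin 4 → ℕ) (b c : ℕ)
    (hbc : (b, c) ∈
      ({(6, 5), (7, 4), (8, 3), (7, 5), (7, 6), (8, 5), (8, 6), (8, 7)} : Set (ℕ × ℕ))) :
    ¬ ∃ f : ℤ → Bool, IsPerfectColouringInt 4 l b c f := by
  rintro ⟨f, hf⟩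
  simp only [Set.mem_insert_iff, Set.mem_singleton_iff, Prod.mk.injEq] at hbc
  rcases hbc with ⟨rfl, rfl⟩|⟨rfl, rfl⟩|⟨rfl, rfl⟩|⟨rfl, rfl⟩|⟨rfl, rfl⟩|⟨rfl, rfl⟩|⟨rfl, rfl⟩|⟨rfl, rfl⟩
  · exact pc_single l 6 5 11 f hf (by norm_num) (by norm_num) (by norm_num) (by norm_num)
      (by norm_num) (by norm_num) (by norm_num)
  · exact pc_single l 7 4 11 f hf (by norm_num) (by norm_num) (by norm_num) (by norm_num)
      (by norm_num) (by norm_num) (by norm_num)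
  · exact pc_single l 8 3 11 f hf (by norm_num) (by norm_num) (by norm_num) (by norm_num)
      (by norm_num) (by norm_num) (by norm_num)
  · obtain ⟨T, hTcard, hTmem⟩ := pc_core l 7 5 (by norm_num) (by norm_num) f hf 2 2
      (by norm_num) (by norm_num) (by norm_num)
    obtain ⟨a1, ha1T, a2, ha2T, hne⟩ := Finset.one_lt_card.1 (by omega : 1 < T.card)
    rcases Nat.lt_or_ge a1 a2 with hlt | hge
    · exact pc_final2 l a1 a2 hlt (hTmem a1 ha1T) (hTmem a2 ha2T)
    · exact pc_final2 l a2 a1 (by omega) (hTmem a2 ha2T) (hTmem a1 ha1T)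
  · exact pc_single l 7 6 13 f hf (by norm_num) (by norm_num) (by norm_num) (by norm_num)
      (by norm_num) (by norm_num) (by norm_num)
  · exact pc_single l 8 5 13 f hf (by norm_num) (by norm_num) (by norm_num) (by norm_num)
      (by norm_num) (by norm_num) (by norm_num)
  · exact pc_single l 8 6 7 f hf (by norm_num) (by norm_num) (by norm_num) (by norm_num)
      (by norm_num) (by norm_num) (by norm_num)
  · exact pc_single l 8 7 3 f hf (by norm_num) (by norm_num) (by norm_num) (by norm_num)
      (by norm_num) (by norm_num) (by norm_num)
end

section
/- Let q be a prime, t a positive integer, and P = q^t. Let u : ℤ/Pℤ → ℤ be a tile with mask polynomial Q_u(x) = Σ_{a=0}^{P-1} u(a)·x^a ∈ ℤ[x], and let m be an integer with 0 < m ≤ Q_u(1). Define d̃_u(x) = Π Φ_n(x), where the product is over all n dividing P such that n is a prime power and the cyclotomic polynomial Φ_n(x) divides Q_u(x). If Q_u(1) divides m·d̃_u(1), then there exists an m-tiling v of ℤ/Pℤ with tile u, that is, an m-multitiling v with v(h) ∈ {0,1} for every h ∈ ℤ/Pℤ. -/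
open Polynomial

open scoped Classical

/-! ### Auxiliary machinery for the proof of `stmt9`. -/

/-- Recursive construction of the complementary tile polynomial `Q_v`. -/
noncomputable def mkQ (q : ℕ) (T : ℕ → Prop) : ℕ → ℕ → Polynomial ℤ
  | 0, d => Polynomial.C (d : ℤ)
  | (t+1), d =>
    if T t then
      (∑ c ∈ Finset.range (d / q ^ ((Finset.range t).filter T).card),
          Polynomial.X ^ (c * q ^ t)) * mkQ q T t (q ^ ((Finset.range t).filter T).card)
        + Polynomial.X ^ ((d / q ^ ((Finset.range t).filter T).card) * q ^ t)
          * mkQ q T t (d % q ^ ((Finset.range t).filter T).card)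
    else
      mkQ q T t d * ∑ c ∈ Finset.range q, Polynomial.X ^ (c * q ^ t)

lemma rc_succ (T : ℕ → Prop) (t : ℕ) :
    ((Finset.range (t+1)).filter T).card
      = ((Finset.range t).filter T).card + if T t then 1 else 0 := by
  rw [Finset.range_add_one, Finset.filter_insert]
  split_ifs with h
  · rw [Finset.card_insert_of_notMem (by simp)]
  · rfl

lemma rc_le (T : ℕ → Prop) (t : ℕ) : ((Finset.range t).filter T).card ≤ t := by
  simpa using Finset.card_filter_le (Finset.range t) T

lemma mkQ_zero (q : ℕ) (T : ℕ → Prop) : ∀ t, mkQ q T t 0 = 0 := by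
  intro t
  induction t with
  | zero => simp [mkQ]
  | succ t ih => simp [mkQ, Nat.zero_div, Nat.zero_mod, ih]

lemma mkQ_eval_one (q : ℕ) (T : ℕ → Prop) :
    ∀ t d, (mkQ q T t d).eval 1
      = ((d * q ^ (t - ((Finset.range t).filter T).card) : ℕ) : ℤ) := by
  intro t
  induction t with
  | zero => intro d; simp [mkQ]
  | succ t ih =>
    intro d
    set r := ((Finset.range t).filter T).card with hr
    have hrle : r ≤ t := rc_le T t
    by_cases hT : T t
    · have hrs : ((Finset.range (t+1)).filter T).card = r + 1 := by
        rw [rc_succ, if_pos hT]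
      rw [hrs]
      have ht' : t + 1 - (r + 1) = t - r := by omega
      rw [ht']
      have hnat : (d / q^r) * (q^r * q^(t-r)) + (d % q^r) * q^(t-r) = d * q^(t-r) := by
        calc (d / q^r) * (q^r * q^(t-r)) + (d % q^r) * q^(t-r)
            = (q^r * (d / q^r) + d % q^r) * q^(t-r) := by ring
          _ = d * q^(t-r) := by rw [Nat.div_add_mod]
      simp only [mkQ, if_pos hT, ← hr, eval_add, eval_mul, eval_pow, eval_X, one_pow,
        eval_finset_sum, ih, Finset.sum_const, Finset.card_range, nsmul_eq_mul, mul_one,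
        one_mul]
      exact_mod_cast hnat
    · have hrs : ((Finset.range (t+1)).filter T).card = r := by
        rw [rc_succ, if_neg hT]; omega
      rw [hrs]
      have hnat : (d * q^(t-r)) * q = d * q^(t+1-r) := by
        have h2 : t + 1 - r = (t - r) + 1 := by omega
        rw [h2, pow_succ]; ring
      simp only [mkQ, if_neg hT, eval_mul, eval_finset_sum, eval_pow, eval_X, one_pow, ih,
        Finset.sum_const, Finset.card_range, nsmul_eq_mul, mul_one]
      exact_mod_cast hnat

lemma coeffs01_aux (q t : ℕ) (hq : 0 < q) (a : ℕ) (ha : a ≤ q) (A : ℕ → Polynomial ℤ)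
    (hA : ∀ c k, (A c).coeff k = 0 ∨ ((A c).coeff k = 1 ∧ k < q ^ t)) (k : ℕ) :
    (∑ c ∈ Finset.range a, A c * Polynomial.X ^ (c * q ^ t)).coeff k = 0 ∨
      ((∑ c ∈ Finset.range a, A c * Polynomial.X ^ (c * q ^ t)).coeff k = 1
        ∧ k < q ^ (t + 1)) := by
  have hQt0 : 0 < q ^ t := pow_pos hq t
  rw [Polynomial.finset_sum_coeff]
  have hterm : ∀ c, (A c * Polynomial.X ^ (c * q ^ t)).coeff k
      = if c * q ^ t ≤ k then (A c).coeff (k - c * q ^ t) else 0 := fun c =>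
    Polynomial.coeff_mul_X_pow' _ _ _
  have hdm := Nat.div_add_mod k (q ^ t)
  have hmlt : k % q ^ t < q ^ t := Nat.mod_lt _ hQt0
  have hvanish : ∀ c ∈ Finset.range a, c ≠ k / q ^ t →
      (A c * Polynomial.X ^ (c * q ^ t)).coeff k = 0 := by
    intro c _ hne
    rw [hterm]
    split_ifs with hle
    · have hcle : c ≤ k / q ^ t := (Nat.le_div_iff_mul_le hQt0).2 hle
      have hclt : c < k / q ^ t := lt_of_le_of_ne hcle hne
      have h1 : (c + 1) * q ^ t ≤ (k / q ^ t) * q ^ t :=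
        Nat.mul_le_mul_right _ hclt
      have h2 : (k / q ^ t) * q ^ t ≤ k := Nat.div_mul_le_self k _
      rw [add_mul, one_mul] at h1
      have hge : q ^ t ≤ k - c * q ^ t := Nat.le_sub_of_add_le (by linarith)
      rcases hA c (k - c * q ^ t) with h | ⟨_, h2⟩
      · exact h
      · omega
    · rfl
  by_cases hc : k / q ^ t < a
  · rw [Finset.sum_eq_single_of_mem (k / q ^ t) (Finset.mem_range.2 hc) hvanish]
    rw [hterm, if_pos (Nat.div_mul_le_self k _)]
    have hsub : k - (k / q ^ t) * q ^ t = k % q ^ t :=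
      Nat.sub_eq_of_eq_add (by rw [Nat.mul_comm]; linarith)
    rw [hsub]
    rcases hA (k / q ^ t) (k % q ^ t) with h | ⟨h1, _⟩
    · exact Or.inl h
    · refine Or.inr ⟨h1, ?_⟩
      have h4 : k / q ^ t + 1 ≤ q := by omega
      have h6 : (k / q ^ t + 1) * q ^ t ≤ q * q ^ t := Nat.mul_le_mul_right _ h4
      rw [add_mul, one_mul, Nat.mul_comm (k / q ^ t)] at h6
      have h7 : q * q ^ t = q ^ (t + 1) := by rw [pow_succ]; ring
      linarith
  · exact Or.inl (Finset.sum_eq_zero fun c hcm =>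
      hvanish c hcm (by rintro rfl; exact hc (Finset.mem_range.1 hcm)))

lemma sum_mul_reindex (a Qt : ℕ) (F P' : Polynomial ℤ) :
    (∑ c ∈ Finset.range a, Polynomial.X ^ (c * Qt)) * F + Polynomial.X ^ (a * Qt) * P'
      = ∑ c ∈ Finset.range (a + 1),
          (if c < a then F else P') * Polynomial.X ^ (c * Qt) := by
  rw [Finset.sum_range_succ, if_neg (lt_irrefl a), Finset.sum_mul]
  congr 1
  · refine Finset.sum_congr rfl fun c hc => ?_
    rw [if_pos (Finset.mem_range.1 hc), mul_comm]
  · rw [mul_comm]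

lemma mkQ_coeff (q : ℕ) (T : ℕ → Prop) (hq : 0 < q) :
    ∀ t d, d ≤ q ^ ((Finset.range t).filter T).card → ∀ k,
      (mkQ q T t d).coeff k = 0 ∨ ((mkQ q T t d).coeff k = 1 ∧ k < q ^ t) := by
  intro t
  induction t with
  | zero =>
    intro d hd k
    simp only [Finset.range_zero, Finset.filter_empty, Finset.card_empty, pow_zero] at hd
    interval_cases d
    · simp [mkQ]
    · by_cases hk : k = 0
      · subst hk; right; constructor
        · simp [mkQ]
        · simp
      · left; simp [mkQ, Polynomial.coeff_C, hk, Polynomial.coeff_one]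
  | succ t ih =>
    intro d hd k
    set r := ((Finset.range t).filter T).card with hr
    have hQt0 : 0 < q ^ t := pow_pos hq t
    have hQr0 : 0 < q ^ r := pow_pos hq r
    by_cases hT : T t
    · have hrs : ((Finset.range (t+1)).filter T).card = r + 1 := by
        rw [rc_succ, if_pos hT]
      rw [hrs] at hd
      set a := d / q ^ r with hadef
      have hqq : q * q ^ r = q ^ (r+1) := by rw [pow_succ]; ring
      have hale : a ≤ q := by
        have h1 : a * q ^ r ≤ d := Nat.div_mul_le_self d _
        have h2 : d ≤ q * q ^ r := by rw [hqq]; exact hd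
        exact Nat.le_of_mul_le_mul_right (le_trans h1 h2) hQr0
      have hmkq : mkQ q T (t+1) d
          = (∑ c ∈ Finset.range a, Polynomial.X ^ (c * q ^ t)) * mkQ q T t (q ^ r)
            + Polynomial.X ^ (a * q ^ t) * mkQ q T t (d % q ^ r) := by
        simp only [mkQ, if_pos hT, ← hr, ← hadef]
      rcases lt_or_eq_of_le hale with halt | haeq
      · rw [hmkq, sum_mul_reindex]
        refine coeffs01_aux q t hq (a+1) halt
          (fun c => if c < a then mkQ q T t (q ^ r) else mkQ q T t (d % q ^ r)) ?_ k
        intro c k'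
        by_cases hca : c < a
        · simp only [if_pos hca]; exact ih (q ^ r) le_rfl k'
        · simp only [if_neg hca]; exact ih (d % q ^ r) (le_of_lt (Nat.mod_lt _ hQr0)) k'
      · have hge : q * q ^ r ≤ d := by
          have h1 : a * q ^ r ≤ d := Nat.div_mul_le_self d _
          rw [haeq] at h1; exact h1
        have hdeq : d = q ^ (r + 1) := by linarith
        have hmod : d % q ^ r = 0 := by
          rw [hdeq, pow_succ]
          exact Nat.mul_mod_right _ _
        rw [hmkq, hmod, mkQ_zero, mul_zero, add_zero, haeq, Finset.sum_mul]
        have hre : ∀ c ∈ Finset.range q,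
            Polynomial.X ^ (c * q ^ t) * mkQ q T t (q ^ r)
              = mkQ q T t (q ^ r) * Polynomial.X ^ (c * q ^ t) := fun c _ => mul_comm _ _
        rw [Finset.sum_congr rfl hre]
        exact coeffs01_aux q t hq q le_rfl _ (fun c k' => ih (q ^ r) le_rfl k') k
    · have hrs : ((Finset.range (t+1)).filter T).card = r := by
        rw [rc_succ, if_neg hT, add_zero]
      rw [hrs] at hd
      have hmkq : mkQ q T (t+1) d
          = ∑ c ∈ Finset.range q, mkQ q T t d * Polynomial.X ^ (c * q ^ t) := by
        simp only [mkQ, if_neg hT, Finset.mul_sum]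
      rw [hmkq]
      exact coeffs01_aux q t hq q le_rfl _ (fun c k' => ih d hd k') k

lemma mkQ_dvd (q : ℕ) (T : ℕ → Prop) (hq : q.Prime) :
    ∀ t d s, s < t → ¬ T s → Polynomial.cyclotomic (q^(s+1)) ℤ ∣ mkQ q T t d := by
  intro t
  induction t with
  | zero => intro d s hs _; exact absurd hs (Nat.not_lt_zero s)
  | succ t ih =>
    intro d s hs hTs
    by_cases hT : T t
    · have hst : s < t := by
        rcases Nat.lt_succ_iff_lt_or_eq.1 hs with h | h
        · exact h
        · exact absurd (h ▸ hT) hTs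
      simp only [mkQ, if_pos hT]
      exact dvd_add (Dvd.dvd.mul_left (ih _ s hst hTs) _)
        (Dvd.dvd.mul_left (ih _ s hst hTs) _)
    · rcases Nat.lt_succ_iff_lt_or_eq.1 hs with h | h
      · simp only [mkQ, if_neg hT]
        exact Dvd.dvd.mul_right (ih d s h hTs) _
      · subst h
        simp only [mkQ, if_neg hT]
        have hcyc : Polynomial.cyclotomic (q^(s+1)) ℤ
            = ∑ c ∈ Finset.range q, Polynomial.X ^ (c * q ^ s) := by
          rw [Polynomial.cyclotomic_prime_pow_eq_geom_sum hq]
          refine Finset.sum_congr rfl fun c _ => ?_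
          rw [← pow_mul, mul_comm]
        exact Dvd.dvd.mul_left (dvd_of_eq hcyc) _

lemma filter_divisors_eq (q t : ℕ) (hq : q.Prime) (Qu : Polynomial ℤ) :
    (Nat.divisors (q^t)).filter
        (fun n => IsPrimePow n ∧ Polynomial.cyclotomic n ℤ ∣ Qu)
      = ((Finset.range t).filter
          (fun s => Polynomial.cyclotomic (q^(s+1)) ℤ ∣ Qu)).image (fun s => q ^ (s+1)) := by
  ext n
  simp only [Finset.mem_filter, Nat.mem_divisors, Finset.mem_image, Finset.mem_range]
  constructor
  · rintro ⟨⟨hdvd', hne⟩, hpp, hdq⟩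
    obtain ⟨i, hi, rfl⟩ := (Nat.dvd_prime_pow hq).1 hdvd'
    have hi0 : i ≠ 0 := by
      rintro rfl
      rw [pow_zero] at hpp
      exact not_isPrimePow_one hpp
    refine ⟨i - 1, ⟨⟨by omega, ?_⟩, ?_⟩⟩
    · rw [Nat.sub_add_cancel (by omega)]; exact hdq
    · rw [Nat.sub_add_cancel (by omega)]
  · rintro ⟨s, ⟨hs, hTs⟩, rfl⟩
    exact ⟨⟨pow_dvd_pow q (by omega), pow_ne_zero t hq.pos.ne'⟩,
      ⟨q, s+1, hq.prime, by omega, rfl⟩, hTs⟩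

lemma erase_divisors_eq (q t : ℕ) (hq : q.Prime) :
    ((q^t).divisors).erase 1 = (Finset.range t).image (fun s => q ^ (s+1)) := by
  ext n
  simp only [Finset.mem_erase, Nat.mem_divisors, Finset.mem_image, Finset.mem_range]
  constructor
  · rintro ⟨hne1, hdvd', hne⟩
    obtain ⟨i, hi, rfl⟩ := (Nat.dvd_prime_pow hq).1 hdvd'
    have hi0 : i ≠ 0 := by
      rintro rfl
      exact hne1 (pow_zero q)
    refine ⟨i - 1, by omega, ?_⟩
    rw [Nat.sub_add_cancel (by omega)]
  · rintro ⟨s, hs, rfl⟩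
    refine ⟨?_, pow_dvd_pow q (by omega), pow_ne_zero t hq.pos.ne'⟩
    intro h
    have := hq.one_lt
    have h2 : q ^ (s+1) > 1 := one_lt_pow₀ (by omega) (by omega)
    omega

lemma pow_succ_injOn (q : ℕ) (hq : q.Prime) :
    Function.Injective (fun s : ℕ => q ^ (s+1)) := by
  intro a b hab
  have := Nat.pow_right_injective hq.two_le hab
  omega

lemma Fp_eq_prod (q t : ℕ) (hq : q.Prime) :
    (∑ i ∈ Finset.range (q^t), (Polynomial.X : Polynomial ℤ) ^ i)
      = ∏ s ∈ Finset.range t, Polynomial.cyclotomic (q^(s+1)) ℤ := by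
  rw [← Polynomial.prod_cyclotomic_eq_geom_sum (pow_pos hq.pos t) ℤ]
  rw [erase_divisors_eq q t hq]
  rw [Finset.prod_image (fun a _ b _ h => pow_succ_injOn q hq h)]

lemma maskPoly_eq_of_coeff (P : ℕ) [NeZero P] (A : Polynomial ℤ)
    (hA : ∀ k, A.coeff k ≠ 0 → k < P) :
    maskPoly P (fun h => A.coeff h.val) = A := by
  ext k
  rw [maskPoly, Polynomial.finset_sum_coeff]
  have hterm : ∀ a : ℕ, (Polynomial.C (A.coeff ((a : ZMod P)).val) * Polynomial.X ^ a).coeff k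
      = if a = k then A.coeff ((a : ZMod P)).val else 0 := by
    intro a
    rw [Polynomial.coeff_C_mul, Polynomial.coeff_X_pow]
    rcases eq_or_ne a k with h | h
    · simp [h]
    · simp [h, Ne.symm h]
  by_cases hk : k < P
  · rw [Finset.sum_eq_single_of_mem k (Finset.mem_range.2 hk)
      (fun a _ hne => by rw [hterm, if_neg hne])]
    rw [hterm, if_pos rfl, ZMod.val_cast_of_lt hk]
  · rw [Finset.sum_eq_zero
      (fun a ha => by rw [hterm, if_neg (by rintro rfl; exact hk (Finset.mem_range.1 ha))])]
    by_contra h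
    exact hk (hA k fun hc => h hc.symm)

/-- The canonical ring homomorphism from `ℤ[X]` to the group algebra of `ℤ/Pℤ`. -/
noncomputable def toMA (P : ℕ) : Polynomial ℤ →+* AddMonoidAlgebra ℤ (ZMod P) :=
  Polynomial.eval₂RingHom AddMonoidAlgebra.singleZeroRingHom (AddMonoidAlgebra.single 1 1)

lemma toMA_C (P : ℕ) (r : ℤ) : toMA P (Polynomial.C r) = AddMonoidAlgebra.single 0 r := by
  simp only [toMA, Polynomial.coe_eval₂RingHom, Polynomial.eval₂_C]
  rfl

lemma toMA_X_pow (P a : ℕ) :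
    toMA P (Polynomial.X ^ a) = AddMonoidAlgebra.single ((a : ZMod P)) 1 := by
  rw [map_pow]
  have hX : toMA P Polynomial.X = AddMonoidAlgebra.single 1 1 := by
    simp only [toMA, Polynomial.coe_eval₂RingHom, Polynomial.eval₂_X]
  rw [hX, AddMonoidAlgebra.single_pow, one_pow, nsmul_eq_mul, mul_one]

lemma toMA_mask (P : ℕ) (w : ZMod P → ℤ) :
    toMA P (maskPoly P w)
      = ∑ a ∈ Finset.range P, AddMonoidAlgebra.single ((a : ZMod P)) (w (a : ZMod P)) := by
  rw [maskPoly, map_sum]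
  refine Finset.sum_congr rfl fun a _ => ?_
  rw [map_mul, toMA_C, toMA_X_pow, AddMonoidAlgebra.single_mul_single, zero_add, mul_one]

lemma toMA_apply (P : ℕ) [NeZero P] (w : ZMod P → ℤ) (h : ZMod P) :
    (toMA P (maskPoly P w)).coeff h = w h := by
  rw [toMA_mask, AddMonoidAlgebra.coeff_sum, Finsupp.finset_sum_apply]
  simp only [AddMonoidAlgebra.coeff_single]
  rw [Finset.sum_eq_single_of_mem h.val (Finset.mem_range.2 (ZMod.val_lt h))
    (fun a ha hne => Finsupp.single_eq_of_ne
      (fun heq => hne (by rw [heq, ZMod.val_cast_of_lt (Finset.mem_range.1 ha)])))]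
  rw [ZMod.natCast_rightInverse h]
  exact Finsupp.single_eq_same

/-- For `P = q^t` a prime power and `0 < m ≤ Q_u(1)`, if `Q_u(1)` divides `m·d̃_u(1)`
then there exists an `m`-tiling of `ℤ/Pℤ` with tile `u`. -/
theorem stmt9 (q t : ℕ) (hq : q.Prime) (ht : 0 < t) (u : ZMod (q ^ t) → ℤ) (m : ℤ)
    (hm : 0 < m) (hm' : m ≤ (maskPoly (q ^ t) u).eval 1)
    (hdvd : (maskPoly (q ^ t) u).eval 1 ∣
      m * (cycloProdPP (q ^ t) (maskPoly (q ^ t) u)).eval 1) :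
    ∃ v : ZMod (q ^ t) → ℤ,
      IsMultitiling (q ^ t) u v m ∧ ∀ h : ZMod (q ^ t), v h = 0 ∨ v h = 1 := by
  haveI : Fact q.Prime := ⟨hq⟩
  haveI : NeZero (q ^ t) := ⟨pow_ne_zero t hq.pos.ne'⟩
  set Qu := maskPoly (q ^ t) u with hQudef
  set S := Qu.eval 1 with hSdef
  set T : ℕ → Prop := fun s => Polynomial.cyclotomic (q^(s+1)) ℤ ∣ Qu with hTdef
  set r := ((Finset.range t).filter T).card with hrdef
  have hrle : r ≤ t := rc_le T t
  have hqz : (0:ℤ) < (q:ℤ) := by exact_mod_cast hq.pos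
  -- the evaluation of the cyclotomic product
  have hD : (cycloProdPP (q ^ t) Qu).eval 1 = (q : ℤ) ^ r := by
    rw [cycloProdPP, filter_divisors_eq q t hq Qu,
      Finset.prod_image (fun a _ b _ h => pow_succ_injOn q hq h), Polynomial.eval_prod]
    rw [Finset.prod_congr rfl
      (fun s _ => Polynomial.eval_one_cyclotomic_prime_pow (R := ℤ) s)]
    rw [Finset.prod_const, ← hrdef]
  rw [hD] at hdvd
  have hS : 0 < S := lt_of_lt_of_le hm hm'
  obtain ⟨k, hk⟩ := hdvd
  have hqr : (0:ℤ) < (q:ℤ) ^ r := pow_pos hqz r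
  have hk0 : 0 < k := by
    by_contra h
    push_neg at h
    nlinarith [mul_pos hm hqr]
  have hkq : k ≤ (q:ℤ)^r := by
    have h2 : m * (q:ℤ)^r ≤ S * (q:ℤ)^r := mul_le_mul_of_nonneg_right hm' (le_of_lt hqr)
    have h3 : S * k ≤ S * (q:ℤ)^r := by linarith
    exact le_of_mul_le_mul_left h3 hS
  set dn := k.toNat with hdndef
  have hdnk : (dn : ℤ) = k := Int.toNat_of_nonneg (le_of_lt hk0)
  have hdnle : dn ≤ q ^ r := by
    have h1 : (dn:ℤ) ≤ ((q^r : ℕ) : ℤ) := by push_cast; rw [hdnk]; exact hkq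
    exact_mod_cast h1
  set Qv := mkQ q T t dn with hQvdef
  have hQvc : ∀ k', Qv.coeff k' = 0 ∨ (Qv.coeff k' = 1 ∧ k' < q ^ t) :=
    mkQ_coeff q T hq.pos t dn (by rw [← hrdef]; exact hdnle)
  set v : ZMod (q ^ t) → ℤ := fun h => Qv.coeff h.val with hvdef
  have h01 : ∀ h : ZMod (q ^ t), v h = 0 ∨ v h = 1 := by
    intro h
    rcases hQvc h.val with h' | ⟨h', _⟩
    · exact Or.inl h'
    · exact Or.inr h'
  have hsupp : ∀ k', Qv.coeff k' ≠ 0 → k' < q ^ t := by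
    intro k' hk'
    rcases hQvc k' with h' | ⟨_, h'⟩
    · exact absurd h' hk'
    · exact h'
  have hQveq : maskPoly (q ^ t) v = Qv := maskPoly_eq_of_coeff (q ^ t) Qv hsupp
  -- the geometric sum polynomial
  set F₁ := maskPoly (q ^ t) (fun _ => (1:ℤ)) with hF₁def
  have hF1 : F₁ = ∑ i ∈ Finset.range (q^t), (Polynomial.X : Polynomial ℤ) ^ i := by
    rw [hF₁def, maskPoly]
    refine Finset.sum_congr rfl fun a _ => ?_
    rw [Polynomial.C_1, one_mul]
  have hFprod : F₁ = ∏ s ∈ Finset.range t, Polynomial.cyclotomic (q^(s+1)) ℤ :=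
    hF1.trans (Fp_eq_prod q t hq)
  have hFmonic : F₁.Monic := by
    rw [hFprod]
    exact Polynomial.monic_prod_of_monic _ _ (fun s _ => Polynomial.cyclotomic.monic _ ℤ)
  have hdvdF : F₁ ∣ Qu * Qv := by
    rw [← Polynomial.map_dvd_map (Int.castRingHom ℚ) (RingHom.injective_int (Int.castRingHom ℚ))
      hFmonic]
    rw [hFprod, Polynomial.map_prod]
    rw [Finset.prod_congr rfl
      (fun s _ => Polynomial.map_cyclotomic_int (q^(s+1)) ℚ)]
    refine Finset.prod_dvd_of_coprime ?_ ?_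
    · intro a ha b hb hab
      exact Polynomial.cyclotomic.isCoprime_rat (fun h => hab (pow_succ_injOn q hq h))
    · intro s hs
      by_cases hTs : T s
      · have h1 : Polynomial.cyclotomic (q^(s+1)) ℤ ∣ Qu * Qv := hTs.mul_right Qv
        have h2 := Polynomial.map_dvd (Int.castRingHom ℚ) h1
        rwa [Polynomial.map_cyclotomic_int] at h2
      · have hd := mkQ_dvd q T hq t dn s (Finset.mem_range.1 hs) hTs
        have h1 : Polynomial.cyclotomic (q^(s+1)) ℤ ∣ Qu * Qv := hd.mul_left Qu
        have h2 := Polynomial.map_dvd (Int.castRingHom ℚ) h1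
        rwa [Polynomial.map_cyclotomic_int] at h2
  obtain ⟨G, hG⟩ := hdvdF
  have hF11 : F₁.eval 1 = ((q:ℤ))^t := by
    rw [hF1]
    simp [Polynomial.eval_finset_sum]
  have hQv1 : Qv.eval 1 = ((dn * q ^ (t - r) : ℕ) : ℤ) := by
    rw [hQvdef, mkQ_eval_one, ← hrdef]
  have hSN : S * Qv.eval 1 = m * (q:ℤ)^t := by
    rw [hQv1]
    push_cast
    have h1 : S * (dn:ℤ) = m * (q:ℤ)^r := by rw [hdnk]; linarith [hk]
    have h2 : (q:ℤ)^r * (q:ℤ)^(t-r) = (q:ℤ)^t := by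
      rw [← pow_add]; congr 1; omega
    linear_combination (↑q : ℤ) ^ (t-r) * h1 + m * h2
  have hG1 : G.eval 1 = m := by
    have heq := congrArg (Polynomial.eval 1) hG
    rw [Polynomial.eval_mul, Polynomial.eval_mul, hF11, ← hSdef, hSN] at heq
    have hne : ((q:ℤ))^t ≠ 0 := (pow_pos hqz t).ne'
    have := mul_left_cancel₀ hne (by linarith : (q:ℤ)^t * G.eval 1 = (q:ℤ)^t * m)
    linarith
  have hGm : (Polynomial.X - 1 : Polynomial ℤ) ∣ (G - Polynomial.C m) := by
    have hroot : (G - Polynomial.C m).IsRoot 1 := by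
      simp [Polynomial.IsRoot, hG1]
    have h1 := (Polynomial.dvd_iff_isRoot).2 hroot
    simpa using h1
  obtain ⟨W, hW⟩ := hGm
  have hGeq : G = Polynomial.C m + (Polynomial.X - 1) * W := by
    rw [← hW]; ring
  have hCmF : maskPoly (q ^ t) (fun _ => m) = Polynomial.C m * F₁ := by
    rw [hF₁def, maskPoly, maskPoly, Finset.mul_sum]
    refine Finset.sum_congr rfl fun a _ => ?_
    rw [← mul_assoc, ← Polynomial.C_mul, mul_one]
  have hXF : (Polynomial.X : Polynomial ℤ)^(q^t) - 1 = F₁ * (Polynomial.X - 1) := by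
    rw [hF1]; exact (geom_sum_mul _ _).symm
  have hkey : Qu * Qv
      = maskPoly (q ^ t) (fun _ => m) + ((Polynomial.X : Polynomial ℤ)^(q^t) - 1) * W := by
    rw [hG, hGeq, hCmF, hXF]; ring
  refine ⟨v, ?_, h01⟩
  intro g
  have hπ := congrArg (toMA (q ^ t)) hkey
  rw [map_mul, map_add, map_mul, map_sub, toMA_X_pow, map_one] at hπ
  rw [ZMod.natCast_self] at hπ
  rw [← AddMonoidAlgebra.one_def, sub_self, zero_mul, add_zero] at hπ
  have hLHS : (toMA (q ^ t) Qu * toMA (q ^ t) Qv).coeff g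
      = ∑ a ∈ Finset.range (q ^ t), u (g - (a : ZMod (q ^ t))) * v ((a : ZMod (q ^ t))) := by
    rw [← hQveq, toMA_mask (q ^ t) v, Finset.mul_sum, AddMonoidAlgebra.coeff_sum,
      Finsupp.finset_sum_apply]
    refine Finset.sum_congr rfl fun a _ => ?_
    rw [AddMonoidAlgebra.coeff_mul_single_apply]
    rw [hQudef, toMA_apply, sub_eq_add_neg]
  have hRHS : (toMA (q ^ t) (maskPoly (q ^ t) (fun _ => m))).coeff g = m :=
    toMA_apply (q ^ t) (fun _ => m) g
  rw [← hLHS, hπ]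
  exact hRHS
end
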